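/- arXiv:math/9911110 — 9 statements merged into one kernel-verified Lean document; each statement's English description precedes it below -/
import Mathlib

section
/- If X admits an M-approximate identity in Y, then X is an M-ideal in Y. Precisely: suppose (T_α) is a uniformly bounded net of bounded linear operators on Y such that T_α(Y) ⊆ X for all α, T_α x → x in norm for every x ∈ X, and limsup_α ‖T_α u + (I − T_α) v‖ ≤ max{‖u‖, ‖v‖} for all u, v ∈ Y. Then the annihilator X^⊥ is an L-summand in Y*, i.e., there is a closed subspace W of Y* with Y* = X^⊥ ⊕ W and ‖f + w‖ = ‖f‖ + ‖w‖ for all f ∈ X^⊥ and w ∈ W. -/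
open Filter NormedSpace Topology

set_option maxHeartbeats 1000000

/-- The annihilator of a set `S ⊆ Y` in the continuous dual of `Y`. -/
noncomputable def setAnnihilator {Y : Type*} [NormedAddCommGroup Y] [NormedSpace ℝ Y] (S : Set Y) :
    Submodule ℝ (StrongDual ℝ Y) where
  carrier := {f | ∀ y ∈ S, f y = 0}
  add_mem' := by intro f g hf hg y hy; simp [hf y hy, hg y hy]
  zero_mem' := by intro y hy; simp
  smul_mem' := by intro c f hf y hy; simp [hf y hy]

/-- If `X` admits an M-approximate identity in `Y`, then `X` is an M-ideal in `Y`: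
the annihilator `X^⊥` is an L-summand in `Y*`. -/
theorem M_ai_implies_M_ideal {Y : Type*} [NormedAddCommGroup Y] [NormedSpace ℝ Y]
    [CompleteSpace Y] (X : Submodule ℝ Y) (hX : IsClosed (X : Set Y))
    {ι : Type*} [Nonempty ι] [SemilatticeSup ι]
    (T : ι → Y →L[ℝ] Y) (C : ℝ) (hbdd : ∀ i, ‖T i‖ ≤ C)
    (hrange : ∀ i, ∀ y : Y, T i y ∈ X)
    (happrox : ∀ x ∈ X, Tendsto (fun i => T i x) atTop (nhds x))
    (hM : ∀ u v : Y, limsup (fun i => ‖T i u + (v - T i v)‖) atTop ≤ max ‖u‖ ‖v‖) :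
    ∃ W : Submodule ℝ (StrongDual ℝ Y), IsClosed (W : Set (StrongDual ℝ Y)) ∧
      IsCompl (setAnnihilator (X : Set Y)) W ∧
      ∀ f ∈ setAnnihilator (X : Set Y), ∀ w ∈ W, ‖f + w‖ = ‖f‖ + ‖w‖ := by
  classical
  have hC : 0 ≤ C := le_trans (norm_nonneg _) (hbdd (Classical.arbitrary ι))
  set 𝒰 : Ultrafilter ι := Ultrafilter.of atTop with h𝒰
  have hUle : (𝒰 : Filter ι) ≤ atTop := Ultrafilter.of_le atTop
  have hTnorm : ∀ i (y : Y), ‖T i y‖ ≤ C * ‖y‖ := fun i y =>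
    ((T i).le_opNorm y).trans (mul_le_mul_of_nonneg_right (hbdd i) (norm_nonneg y))
  -- existence of limits along the ultrafilter
  have key : ∀ (f : StrongDual ℝ Y) (y : Y),
      ∃ L, Tendsto (fun i => f (T i y)) (𝒰 : Filter ι) (𝓝 L) := by
    intro f y
    have hb : ∀ i, f (T i y) ∈ Set.Icc (-(‖f‖ * (C * ‖y‖))) (‖f‖ * (C * ‖y‖)) := by
      intro i
      have h1 : ‖f (T i y)‖ ≤ ‖f‖ * (C * ‖y‖) :=
        (f.le_opNorm _).trans (mul_le_mul_of_nonneg_left (hTnorm i y) (norm_nonneg f))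
      rw [Real.norm_eq_abs, abs_le] at h1
      exact ⟨h1.1, h1.2⟩
    have hle : (𝒰.map fun i => f (T i y) : Filter ℝ) ≤
        𝓟 (Set.Icc (-(‖f‖ * (C * ‖y‖))) (‖f‖ * (C * ‖y‖))) := by
      rw [le_principal_iff]
      exact Filter.mem_map.2 (Filter.univ_mem' hb)
    obtain ⟨L, -, hL⟩ := isCompact_Icc.ultrafilter_le_nhds
      (𝒰.map fun i => f (T i y)) hle
    exact ⟨L, hL⟩
  choose φ hφ using key
  -- basic properties of φ
  have hadd : ∀ (f : StrongDual ℝ Y) (y z : Y), φ f (y + z) = φ f y + φ f z := by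
    intro f y z
    refine tendsto_nhds_unique (hφ f (y + z)) ?_
    simpa [map_add] using (hφ f y).add (hφ f z)
  have hsmulv : ∀ (f : StrongDual ℝ Y) (c : ℝ) (y : Y), φ f (c • y) = c * φ f y := by
    intro f c y
    refine tendsto_nhds_unique (hφ f (c • y)) ?_
    simpa [map_smul, smul_eq_mul] using (hφ f y).const_mul c
  have haddf : ∀ (f g : StrongDual ℝ Y) (y : Y), φ (f + g) y = φ f y + φ g y := by
    intro f g y
    refine tendsto_nhds_unique (hφ (f + g) y) ?_
    simpa [ContinuousLinearMap.add_apply] using (hφ f y).add (hφ g y)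
  have hsmulf : ∀ (c : ℝ) (f : StrongDual ℝ Y) (y : Y), φ (c • f) y = c * φ f y := by
    intro c f y
    refine tendsto_nhds_unique (hφ (c • f) y) ?_
    simpa [ContinuousLinearMap.smul_apply, smul_eq_mul] using (hφ f y).const_mul c
  have hbound : ∀ (f : StrongDual ℝ Y) (y : Y), ‖φ f y‖ ≤ (C * ‖f‖) * ‖y‖ := by
    intro f y
    refine le_of_tendsto (hφ f y).norm (Eventually.of_forall fun i => ?_)
    calc ‖f (T i y)‖ ≤ ‖f‖ * ‖T i y‖ := f.le_opNorm _
      _ ≤ ‖f‖ * (C * ‖y‖) := mul_le_mul_of_nonneg_left (hTnorm i y) (norm_nonneg f)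
      _ = (C * ‖f‖) * ‖y‖ := by ring
  -- the projection as a continuous linear map on the dual
  let Pf : StrongDual ℝ Y → StrongDual ℝ Y := fun f =>
    LinearMap.mkContinuous
      { toFun := φ f
        map_add' := hadd f
        map_smul' := fun c y => by simpa using hsmulv f c y }
      (C * ‖f‖) (hbound f)
  have hPf_apply : ∀ (f : StrongDual ℝ Y) (y : Y), Pf f y = φ f y := fun f y => rfl
  have hPf_norm : ∀ f : StrongDual ℝ Y, ‖Pf f‖ ≤ C * ‖f‖ := fun f =>
    LinearMap.mkContinuous_norm_le _ (mul_nonneg hC (norm_nonneg f)) _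
  let P : StrongDual ℝ Y →L[ℝ] StrongDual ℝ Y :=
    LinearMap.mkContinuous
      { toFun := Pf
        map_add' := fun f g => by
          ext y
          simp [hPf_apply, haddf f g y]
        map_smul' := fun c f => by
          ext y
          simp [hPf_apply, hsmulf c f y] }
      C (fun f => by simpa [mul_comm] using hPf_norm f)
  have hP_apply : ∀ (f : StrongDual ℝ Y) (y : Y), P f y = φ f y := fun f y => rfl
  -- key algebraic facts
  have hfix : ∀ (f : StrongDual ℝ Y) (x : Y), x ∈ X → φ f x = f x := by
    intro f x hx
    exact tendsto_nhds_unique (hφ f x)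
      (((f.continuous.tendsto x).comp ((happrox x hx).mono_left hUle)))
  have hP0 : ∀ f : StrongDual ℝ Y, (∀ x ∈ X, f x = 0) → P f = 0 := by
    intro f hf
    ext y
    have heq : (fun i => f (T i y)) = fun _ => (0 : ℝ) :=
      funext fun i => hf _ (hrange i y)
    have h0 : Tendsto (fun i => f (T i y)) (𝒰 : Filter ι) (𝓝 0) := by
      rw [heq]; exact tendsto_const_nhds
    have : φ f y = 0 := tendsto_nhds_unique (hφ f y) h0
    simpa [hP_apply] using this
  have hproj : ∀ f : StrongDual ℝ Y, P (P f) = P f := by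
    intro f
    ext y
    have heq : (fun i => (P f) (T i y)) = fun i => f (T i y) :=
      funext fun i => by rw [hP_apply]; exact hfix f (T i y) (hrange i y)
    have h1 : Tendsto (fun i => (P f) (T i y)) (𝒰 : Filter ι) (𝓝 (φ f y)) := by
      rw [heq]; exact hφ f y
    have : φ (P f) y = φ f y := tendsto_nhds_unique (hφ (P f) y) h1
    simpa [hP_apply] using this
  -- almost-norm-attaining functionals
  have hexists : ∀ (f : StrongDual ℝ Y), ∀ ε > (0:ℝ), ∃ v : Y, ‖v‖ ≤ 1 ∧ ‖f‖ - ε < f v := by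
    intro f ε hε
    obtain ⟨x, hx1, hx2⟩ := f.exists_lt_apply_of_lt_opNorm (sub_lt_self ‖f‖ hε)
    rcases le_or_gt 0 (f x) with h | h
    · refine ⟨x, hx1.le, ?_⟩
      rwa [Real.norm_eq_abs, abs_of_nonneg h] at hx2
    · refine ⟨-x, by simpa using hx1.le, ?_⟩
      rw [map_neg]
      rwa [Real.norm_eq_abs, abs_of_neg h] at hx2
  -- the main norm inequality
  have hnorm : ∀ f ∈ setAnnihilator (X : Set Y), ∀ w : StrongDual ℝ Y, P w = w →
      ‖f‖ + ‖w‖ ≤ ‖f + w‖ := by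
    intro f hf w hw
    by_contra hcon
    push_neg at hcon
    set ε : ℝ := (‖f‖ + ‖w‖ - ‖f + w‖) / 2 with hεdef
    have hε : 0 < ε := by simp only [hεdef]; linarith
    obtain ⟨v, hv1, hv2⟩ := hexists f (ε / 4) (by positivity)
    obtain ⟨u, hu1, hu2⟩ := hexists w (ε / 4) (by positivity)
    set g : StrongDual ℝ Y := f + w with hgdef
    set b : ι → ℝ := fun i => ‖T i u + (v - T i v)‖ with hbdef
    have hb0 : ∀ i, 0 ≤ b i := fun i => norm_nonneg _
    have hbK : ∀ i, b i ≤ C * ‖u‖ + (‖v‖ + C * ‖v‖) := by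
      intro i
      calc b i ≤ ‖T i u‖ + ‖v - T i v‖ := norm_add_le _ _
        _ ≤ C * ‖u‖ + (‖v‖ + ‖T i v‖) := by
            gcongr
            · exact hTnorm i u
            · exact norm_sub_le _ _
        _ ≤ C * ‖u‖ + (‖v‖ + C * ‖v‖) := by
            gcongr
            exact hTnorm i v
    have hlimsup_atTop : limsup b atTop ≤ 1 :=
      (hM u v).trans (max_le hu1 hv1)
    have hBoundedU : (𝒰 : Filter ι).IsBoundedUnder (· ≤ ·) b :=
      Filter.isBoundedUnder_of ⟨C * ‖u‖ + (‖v‖ + C * ‖v‖), hbK⟩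
    have hCobound : (𝒰 : Filter ι).IsCoboundedUnder (· ≤ ·) b :=
      Filter.IsBoundedUnder.isCoboundedUnder_le (Filter.isBoundedUnder_of ⟨0, hb0⟩)
    have hBoundedAtTop : (atTop : Filter ι).IsBoundedUnder (· ≤ ·) b :=
      Filter.isBoundedUnder_of ⟨C * ‖u‖ + (‖v‖ + C * ‖v‖), hbK⟩
    have hlimsupU : limsup b (𝒰 : Filter ι) ≤ 1 :=
      le_trans (limsup_le_limsup_of_le hUle hCobound hBoundedAtTop) hlimsup_atTop
    set δ : ℝ := ε / (4 * (‖g‖ + 1)) with hδdef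
    have hg1 : (0:ℝ) < ‖g‖ + 1 := by positivity
    have hδ0 : 0 < δ := by positivity
    have hδg : ‖g‖ * δ ≤ ε / 4 := by
      have h1 : (‖g‖ + 1) * δ = ε / 4 := by
        rw [hδdef, mul_div_assoc', div_eq_iff (by positivity)]
        ring
      nlinarith [norm_nonneg g]
    have hδev : ∀ᶠ i in (𝒰 : Filter ι), b i < 1 + δ :=
      eventually_lt_of_limsup_lt (lt_of_le_of_lt hlimsupU (by linarith)) hBoundedU
    have ha_le : ∀ᶠ i in (𝒰 : Filter ι),
        g (T i u + (v - T i v)) ≤ ‖g‖ * (1 + δ) := by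
      refine hδev.mono fun i hi => ?_
      calc g (T i u + (v - T i v)) ≤ ‖g (T i u + (v - T i v))‖ := le_abs_self _
        _ ≤ ‖g‖ * b i := g.le_opNorm _
        _ ≤ ‖g‖ * (1 + δ) := mul_le_mul_of_nonneg_left hi.le (norm_nonneg g)
    have h1 : Tendsto (fun i => w (T i u)) (𝒰 : Filter ι) (𝓝 (w u)) := by
      have hwu : φ w u = w u := by
        rw [← hP_apply w u, hw]
      rw [← hwu]; exact hφ w u
    have h2 : Tendsto (fun i => w (T i v)) (𝒰 : Filter ι) (𝓝 (w v)) := by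
      have hwv : φ w v = w v := by
        rw [← hP_apply w v, hw]
      rw [← hwv]; exact hφ w v
    have hA : Tendsto (fun i => g (T i u + (v - T i v))) (𝒰 : Filter ι)
        (𝓝 (f v + (w u + (w v - w v)))) := by
      have := (tendsto_const_nhds (α := ι) (x := f v)).add (h1.add ((tendsto_const_nhds (α := ι) (x := w v)).sub h2))
      refine this.congr fun i => ?_
      have hfu : f (T i u) = 0 := hf _ (hrange i u)
      have hfv : f (T i v) = 0 := hf _ (hrange i v)
      simp only [hgdef, ContinuousLinearMap.add_apply, map_add, map_sub, hfu, hfv]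
      ring
    have hle : f v + (w u + (w v - w v)) ≤ ‖g‖ * (1 + δ) := le_of_tendsto hA ha_le
    have hexp : ‖g‖ * (1 + δ) = ‖g‖ + ‖g‖ * δ := by ring
    rw [hexp] at hle
    have hfinal : ‖f‖ + ‖w‖ ≤ ‖g‖ + ε := by linarith
    rw [hgdef] at hfinal
    simp only [hεdef] at hfinal
    linarith
  -- assemble the result
  refine ⟨((ContinuousLinearMap.id ℝ (StrongDual ℝ Y)) - P).ker, ?_, ?_, ?_⟩
  · exact ContinuousLinearMap.isClosed_ker _
  · rw [isCompl_iff]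
    constructor
    · rw [Submodule.disjoint_def]
      intro g hg1 hg2
      have hP : P g = g := by
        rw [LinearMap.mem_ker] at hg2
        have := hg2
        rw [ContinuousLinearMap.coe_coe, ContinuousLinearMap.sub_apply, ContinuousLinearMap.id_apply, sub_eq_zero] at this
        exact this.symm
      have h0 : P g = 0 := hP0 g hg1
      rw [hP] at h0; exact h0
    · rw [codisjoint_iff, Submodule.eq_top_iff']
      intro g
      refine Submodule.mem_sup.2 ⟨g - P g, ?_, P g, ?_, by abel⟩
      · intro x hx
        have : P g x = g x := by rw [hP_apply]; exact hfix g x hx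
        simp [ContinuousLinearMap.sub_apply, this]
      · rw [LinearMap.mem_ker, ContinuousLinearMap.coe_coe, ContinuousLinearMap.sub_apply, ContinuousLinearMap.id_apply,
          sub_eq_zero]
        exact (hproj g).symm
  · intro f hf w hw
    have hPw : P w = w := by
      rw [LinearMap.mem_ker] at hw
      rw [ContinuousLinearMap.coe_coe, ContinuousLinearMap.sub_apply, ContinuousLinearMap.id_apply, sub_eq_zero] at hw
      exact hw.symm
    exact le_antisymm (norm_add_le f w) (hnorm f hf w hPw)
end

section
/- If X admits a weak contractive M-approximate identity in Y, then X satisfies the restricted 3-ball property in Y: for any y, x₁, x₂, x₃ in the closed unit ball of Y with x₁, x₂, x₃ ∈ X, and any ε > 0, there exists x in the closed unit ball of X such that ‖xᵢ + y − x‖ ≤ 1 + ε for i = 1, 2, 3. -/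
open Filter

/-- A weak contractive M-approximate identity yields the restricted 3-ball property. -/
theorem weak_contractive_Mai_implies_restricted_three_ball
    {Y : Type*} [NormedAddCommGroup Y] [NormedSpace ℝ Y]
    (X : Submodule ℝ Y) (hX : IsClosed (X : Set Y))
    {ι : Type*} [Nonempty ι] [SemilatticeSup ι]
    (T : ι → Y →L[ℝ] Y) (hcontr : ∀ i, ‖T i‖ ≤ 1)
    (hrange : ∀ i, ∀ y : Y, T i y ∈ X)
    (happrox : ∀ x ∈ X, Tendsto (fun i => T i x) atTop (nhds x))
    (hM : ∀ u ∈ X, ∀ v : Y, limsup (fun i => ‖T i u + (v - T i v)‖) atTop ≤ max ‖u‖ ‖v‖) :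
    ∀ (y x₁ x₂ x₃ : Y), ‖y‖ ≤ 1 → ‖x₁‖ ≤ 1 → ‖x₂‖ ≤ 1 → ‖x₃‖ ≤ 1 →
      x₁ ∈ X → x₂ ∈ X → x₃ ∈ X → ∀ ε > (0 : ℝ),
      ∃ x ∈ X, ‖x‖ ≤ 1 ∧ ‖x₁ + y - x‖ ≤ 1 + ε ∧ ‖x₂ + y - x‖ ≤ 1 + ε ∧
        ‖x₃ + y - x‖ ≤ 1 + ε := by
  intro y x₁ x₂ x₃ hy h1 h2 h3 hx1 hx2 hx3 ε hε
  -- key claim: for any x ∈ X with ‖x‖ ≤ 1, eventually ‖x + y - T i y‖ ≤ 1 + ε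
  have key : ∀ x : Y, x ∈ X → ‖x‖ ≤ 1 →
      ∀ᶠ i in atTop, ‖x + y - T i y‖ ≤ 1 + ε := by
    intro x hx hxn
    have hbdd : IsBoundedUnder (· ≤ ·) atTop (fun i => ‖T i x + (y - T i y)‖) := by
      refine isBoundedUnder_of ⟨‖x‖ + 2 * ‖y‖, fun i => ?_⟩
      have h1 : ‖(T i) x‖ ≤ ‖x‖ :=
        le_trans ((T i).le_opNorm x) (by nlinarith [norm_nonneg x, hcontr i])
      have h2 : ‖(T i) y‖ ≤ ‖y‖ :=
        le_trans ((T i).le_opNorm y) (by nlinarith [norm_nonneg y, hcontr i])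
      calc ‖T i x + (y - T i y)‖ ≤ ‖T i x‖ + ‖y - T i y‖ := norm_add_le _ _
        _ ≤ ‖x‖ + (‖y‖ + ‖T i y‖) := by
            gcongr
            exact norm_sub_le _ _
        _ ≤ ‖x‖ + 2 * ‖y‖ := by linarith
    have hls : limsup (fun i => ‖T i x + (y - T i y)‖) atTop < 1 + ε / 2 := by
      have := hM x hx y
      have hmax : max ‖x‖ ‖y‖ ≤ 1 := max_le hxn hy
      linarith
    have hev1 : ∀ᶠ i in atTop, ‖T i x + (y - T i y)‖ < 1 + ε / 2 :=
      eventually_lt_of_limsup_lt hls hbdd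
    have hev2 : ∀ᶠ i in atTop, dist (T i x) x < ε / 2 :=
      Metric.tendsto_nhds.mp (happrox x hx) (ε / 2) (by positivity)
    filter_upwards [hev1, hev2] with i hi1 hi2
    have hdist : ‖x - T i x‖ < ε / 2 := by
      rw [dist_eq_norm] at hi2
      rwa [← norm_neg, neg_sub]
    calc ‖x + y - T i y‖ = ‖(x - T i x) + (T i x + (y - T i y))‖ := by rw [show x + y - T i y = (x - T i x) + (T i x + (y - T i y)) by abel]
      _ ≤ ‖x - T i x‖ + ‖T i x + (y - T i y)‖ := norm_add_le _ _
      _ ≤ 1 + ε := by linarith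
  have hall := ((key x₁ hx1 h1).and ((key x₂ hx2 h2).and (key x₃ hx3 h3))).exists
  obtain ⟨i, hi1, hi2, hi3⟩ := hall
  refine ⟨T i y, hrange i y, ?_, hi1, hi2, hi3⟩
  exact le_trans ((T i).le_opNorm y) (by nlinarith [norm_nonneg y, hcontr i])
end

section
/- Let A be a C*-algebra, x a positive element of A with ‖x‖ ≤ 1, and a ∈ A. Then ‖√x · a − a · √x‖ ≤ 2 √‖a‖ · ‖x a − a x‖^{1/2}, where √x denotes the positive square root of x. -/
lemma key_sylvester {A : Type*} [CStarAlgebra A] [PartialOrder A]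
    [StarOrderedRing A] (s b : A) (ε : ℝ) (hε : 0 < ε)
    (hs : algebraMap ℝ A ε ≤ s) : 2 * ε * ‖b‖ ≤ ‖s * b + b * s‖ := by
  obtain hA | hA := subsingleton_or_nontrivial A
  · simp [Subsingleton.elim b 0]
  have h0 : (0 : A) ≤ algebraMap ℝ A ε := by
    rw [Algebra.algebraMap_eq_smul_one]
    exact smul_nonneg hε.le (by simpa using star_mul_self_nonneg (1 : A))
  have hs0 : (0 : A) ≤ s := h0.trans hs
  have hsa : IsSelfAdjoint s := .of_nonneg hs0
  set M : ℝ := ‖s‖ with hM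
  have hsM : s ≤ algebraMap ℝ A M := hsa.le_algebraMap_norm_self
  have hεM : ε ≤ M := by
    calc ε = ‖algebraMap ℝ A ε‖ := by rw [norm_algebraMap']; exact (abs_of_pos hε).symm
      _ ≤ ‖s‖ := CStarAlgebra.norm_le_norm_of_nonneg_of_le h0 hs
  set k : A := algebraMap ℝ A M - s with hk
  have hk0 : 0 ≤ k := sub_nonneg.2 hsM
  have hkle : k ≤ algebraMap ℝ A (M - ε) := by
    rw [map_sub]; exact sub_le_sub_left hs _
  have hknorm : ‖k‖ ≤ M - ε := by
    calc ‖k‖ ≤ ‖algebraMap ℝ A (M - ε)‖ :=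
          CStarAlgebra.norm_le_norm_of_nonneg_of_le hk0 hkle
      _ = |M - ε| := norm_algebraMap' ..
      _ = M - ε := abs_of_nonneg (by linarith)
  have h1 : ‖k * b‖ ≤ (M - ε) * ‖b‖ :=
    (norm_mul_le _ _).trans (by nlinarith [norm_nonneg b])
  have h2 : ‖b * k‖ ≤ (M - ε) * ‖b‖ :=
    (norm_mul_le _ _).trans (by nlinarith [norm_nonneg b])
  have h3 : ‖(2 * M) • b‖ = 2 * M * ‖b‖ := by
    rw [norm_smul, Real.norm_eq_abs, abs_of_nonneg (by linarith)]
  have h4 : (2 * M) • b = (s * b + b * s) + (k * b + b * k) := by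
    simp only [hk, Algebra.algebraMap_eq_smul_one, sub_mul, mul_sub,
      smul_mul_assoc, mul_smul_comm, one_mul, mul_one, two_mul, add_smul]
    abel
  have h5 : 2 * M * ‖b‖ ≤ ‖s * b + b * s‖ + ((M - ε) * ‖b‖ + (M - ε) * ‖b‖) := by
    rw [← h3, h4]
    calc ‖(s * b + b * s) + (k * b + b * k)‖
        ≤ ‖s * b + b * s‖ + ‖k * b + b * k‖ := norm_add_le _ _
      _ ≤ ‖s * b + b * s‖ + (‖k * b‖ + ‖b * k‖) := by gcongr; exact norm_add_le _ _
      _ ≤ _ := by gcongr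
  linarith

/-- In a C*-algebra, for a positive contraction `x` and any `a`,
`‖√x a − a √x‖ ≤ 2 √‖a‖ ‖xa − ax‖^{1/2}`. -/
theorem norm_sqrt_commutator_le {A : Type*} [CStarAlgebra A] [PartialOrder A]
    [StarOrderedRing A] (x a : A) (hx : 0 ≤ x) (hx1 : ‖x‖ ≤ 1) :
    ‖CFC.sqrt x * a - a * CFC.sqrt x‖ ≤
      2 * Real.sqrt ‖a‖ * Real.sqrt ‖x * a - a * x‖ := by
  have hxsa : IsSelfAdjoint x := .of_nonneg hx
  have hspec : ∀ t ∈ spectrum ℝ x, 0 ≤ t := fun t ht => spectrum_nonneg_of_nonneg hx ht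
  have hs_eq : CFC.sqrt x = cfc Real.sqrt x := by
    have h1 : (cfc Real.sqrt x) * (cfc Real.sqrt x) = x := by
      rw [← cfc_mul _ _ x (by fun_prop) (by fun_prop)]
      calc cfc (fun t => Real.sqrt t * Real.sqrt t) x
          = cfc (fun t : ℝ => t) x := by
            apply cfc_congr; intro t ht; exact Real.mul_self_sqrt (hspec t ht)
        _ = x := cfc_id' ℝ x hxsa
    have h2 : (0 : A) ≤ cfc Real.sqrt x := cfc_nonneg fun t _ => Real.sqrt_nonneg t
    exact CFC.sqrt_unique h1 h2
  set s : A := CFC.sqrt x with hs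
  set b : A := s * a - a * s with hb
  set c : A := x * a - a * x with hc
  have main : ∀ ε : ℝ, 0 < ε → ‖b‖ ≤ ‖c‖ / (2 * ε) + 2 * ε * ‖a‖ := by
    intro ε hε
    set f : ℝ → ℝ := fun t => Real.sqrt (t + ε ^ 2) with hf
    set sε : A := cfc f x with hsε
    have hsq : sε * sε = x + algebraMap ℝ A (ε ^ 2) := by
      rw [hsε, ← cfc_mul _ _ x (by fun_prop) (by fun_prop)]
      calc cfc (fun t => f t * f t) x = cfc (fun t : ℝ => t + ε ^ 2) x := by
            apply cfc_congr; intro t ht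
            exact Real.mul_self_sqrt (by nlinarith [hspec t ht])
        _ = cfc (fun t : ℝ => t) x + cfc (fun _ : ℝ => ε ^ 2) x :=
            cfc_add x _ _ (by fun_prop) (by fun_prop)
        _ = x + algebraMap ℝ A (ε ^ 2) := by
            rw [cfc_id' ℝ x hxsa, cfc_const _ _ hxsa]
    have hεs : algebraMap ℝ A ε ≤ sε := by
      rw [hsε, ← cfc_const ε x hxsa]
      refine cfc_mono (fun t ht => ?_) (by fun_prop) (by fun_prop)
      calc ε = Real.sqrt (ε ^ 2) := (Real.sqrt_sq hε.le).symm
        _ ≤ Real.sqrt (t + ε ^ 2) := Real.sqrt_le_sqrt (by nlinarith [hspec t ht])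
    have hdiff : ‖s - sε‖ ≤ ε := by
      rw [hs_eq, hsε, ← cfc_sub Real.sqrt f x (by fun_prop) (by fun_prop)]
      refine norm_cfc_le hε.le fun t ht => ?_
      have ht0 := hspec t ht
      have hle : Real.sqrt t ≤ Real.sqrt (t + ε ^ 2) :=
        Real.sqrt_le_sqrt (by nlinarith)
      have hle2 : Real.sqrt (t + ε ^ 2) ≤ Real.sqrt t + ε := by
        rw [show Real.sqrt t + ε = Real.sqrt ((Real.sqrt t + ε) ^ 2) from
          (Real.sqrt_sq (by positivity)).symm]
        exact Real.sqrt_le_sqrt (by nlinarith [Real.sq_sqrt ht0, Real.sqrt_nonneg t])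
      rw [Real.norm_eq_abs, abs_sub_comm, abs_of_nonneg (by simpa [hf, sub_nonneg] using hle)]
      simp only [hf]
      linarith
    set bε : A := sε * a - a * sε with hbε
    have hcomm : sε * bε + bε * sε = c := by
      rw [hbε, hc]
      have e1 : sε * (sε * a - a * sε) + (sε * a - a * sε) * sε
          = sε * sε * a - a * (sε * sε) := by noncomm_ring
      rw [e1, hsq, add_mul, mul_add, Algebra.commutes (ε ^ 2) a]
      abel
    have hbεnorm : ‖bε‖ ≤ ‖c‖ / (2 * ε) := by
      rw [le_div_iff₀ (by positivity), mul_comm]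
      calc 2 * ε * ‖bε‖ ≤ ‖sε * bε + bε * sε‖ := key_sylvester sε bε ε hε hεs
        _ = ‖c‖ := by rw [hcomm]
    have hbdiff : ‖b - bε‖ ≤ 2 * ε * ‖a‖ := by
      have e2 : b - bε = (s - sε) * a - a * (s - sε) := by rw [hb, hbε]; noncomm_ring
      rw [e2]
      calc ‖(s - sε) * a - a * (s - sε)‖ ≤ ‖(s - sε) * a‖ + ‖a * (s - sε)‖ :=
            norm_sub_le _ _
        _ ≤ ‖s - sε‖ * ‖a‖ + ‖a‖ * ‖s - sε‖ := by gcongr <;> exact norm_mul_le _ _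
        _ ≤ ε * ‖a‖ + ‖a‖ * ε := by gcongr <;> first | exact hdiff | positivity
        _ = 2 * ε * ‖a‖ := by ring
    calc ‖b‖ = ‖bε + (b - bε)‖ := by rw [add_sub_cancel]
      _ ≤ ‖bε‖ + ‖b - bε‖ := norm_add_le _ _
      _ ≤ ‖c‖ / (2 * ε) + 2 * ε * ‖a‖ := add_le_add hbεnorm hbdiff
  rcases eq_or_lt_of_le (norm_nonneg a) with ha0 | ha0
  · have ha' : a = 0 := norm_eq_zero.mp ha0.symm
    simp [hb, hc, ha']
  rcases eq_or_lt_of_le (norm_nonneg c) with hc0 | hc0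
  · have hble : ∀ ε : ℝ, 0 < ε → ‖b‖ ≤ 2 * ε * ‖a‖ := by
      intro ε hε
      have h := main ε hε
      rw [← hc0, zero_div] at h
      linarith
    have hb0 : ‖b‖ ≤ 0 := by
      by_contra h
      push_neg at h
      have h6 := hble (‖b‖ / (4 * ‖a‖)) (by positivity)
      have he : 2 * (‖b‖ / (4 * ‖a‖)) * ‖a‖ = ‖b‖ / 2 := by
        field_simp
        ring
      linarith
    rw [← hc0]
    simpa [Real.sqrt_zero] using hb0
  · have hεpos : (0:ℝ) < Real.sqrt (‖c‖ / (4 * ‖a‖)) := Real.sqrt_pos.mpr (by positivity)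
    set ε := Real.sqrt (‖c‖ / (4 * ‖a‖)) with hεd
    have hε2 : ε ^ 2 = ‖c‖ / (4 * ‖a‖) := Real.sq_sqrt (by positivity)
    have hmain := main ε hεpos
    have hval : ‖c‖ / (2 * ε) + 2 * ε * ‖a‖ = 2 * Real.sqrt ‖a‖ * Real.sqrt ‖c‖ := by
      have h1 : ε * ε = ‖c‖ / (4 * ‖a‖) := by rw [← hε2]; ring
      have h2 : Real.sqrt ‖a‖ * Real.sqrt ‖c‖ = Real.sqrt (‖a‖ * ‖c‖) :=
        (Real.sqrt_mul ha0.le _).symm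
      have h3 : (Real.sqrt (‖a‖ * ‖c‖)) ^ 2 = ‖a‖ * ‖c‖ := Real.sq_sqrt (by positivity)
      have h1' : ε * ε * (4 * ‖a‖) = ‖c‖ := by
        rw [h1]; field_simp
      have h4 : 2 * ε * ‖a‖ = Real.sqrt (‖a‖ * ‖c‖) := by
        rw [← Real.sqrt_sq (by positivity : (0:ℝ) ≤ 2 * ε * ‖a‖)]
        congr 1
        nlinarith [h1']
      have h5 : ‖c‖ / (2 * ε) = Real.sqrt (‖a‖ * ‖c‖) := by
        rw [div_eq_iff (by positivity), ← h4]
        nlinarith [h1', h3, Real.sqrt_nonneg (‖a‖ * ‖c‖)]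
      rw [h4, h5, mul_assoc, h2]; ring
    linarith [hmain, hval.le]
end

section
/- Let J be a closed two-sided ideal in a C*-algebra A, let (u_α) be a central approximate unit for J (i.e., 0 ≤ u_α ≤ 1, u_α x → x for all x ∈ J, and u_α a − a u_α → 0 for all a ∈ A), and define T_α : A → A by T_α(a) = u_α a. Then (T_α) is an M-approximate identity for J in A: each T_α is a contraction mapping A into J, T_α x → x for x ∈ J, and limsup_α ‖T_α u + (I − T_α) v‖ ≤ max{‖u‖, ‖v‖} for all u, v ∈ A. -/
open Filter Polynomial

section Aux

variable {A : Type*} [CStarAlgebra A] [PartialOrder A] [StarOrderedRing A]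

/-- A purely algebraic identity in a ring. -/
private lemma ring_identity {R : Type*} [Ring R] (s t a b a' b' : R)
    (hst : s * t = t * s) (h1 : s * s + t * t = 1) :
    (s*a'*s + t*b'*t) * (s*a*s + t*b*t) + (s*a'*t - t*b'*s) * (t*a*s - s*b*t)
      = s*(a'*a)*s + t*(b'*b)*t := by
  have e3 : (s*a'*s)*(t*b*t) = (s*a'*t)*(s*b*t) := by
    calc (s*a'*s)*(t*b*t) = s*a'*(s*t)*(b*t) := by noncomm_ring
      _ = s*a'*(t*s)*(b*t) := by rw [hst]
      _ = (s*a'*t)*(s*b*t) := by noncomm_ring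
  have e4 : (t*b'*t)*(s*a*s) = (t*b'*s)*(t*a*s) := by
    calc (t*b'*t)*(s*a*s) = t*b'*(t*s)*(a*s) := by noncomm_ring
      _ = t*b'*(s*t)*(a*s) := by rw [hst]
      _ = (t*b'*s)*(t*a*s) := by noncomm_ring
  have e1 : (s*a'*s)*(s*a*s) + (s*a'*t)*(t*a*s) = s*(a'*a)*s := by
    calc (s*a'*s)*(s*a*s) + (s*a'*t)*(t*a*s) = (s*a')*(s*s + t*t)*(a*s) := by noncomm_ring
      _ = s*(a'*a)*s := by rw [h1]; noncomm_ring
  have e2 : (t*b'*t)*(t*b*t) + (t*b'*s)*(s*b*t) = t*(b'*b)*t := by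
    calc (t*b'*t)*(t*b*t) + (t*b'*s)*(s*b*t) = (t*b')*(s*s + t*t)*(b*t) := by noncomm_ring
      _ = t*(b'*b)*t := by rw [h1]; noncomm_ring
  calc (s*a'*s + t*b'*t) * (s*a*s + t*b*t) + (s*a'*t - t*b'*s) * (t*a*s - s*b*t)
      = ((s*a'*s)*(s*a*s) + (s*a'*t)*(t*a*s)) + ((t*b'*t)*(t*b*t) + (t*b'*s)*(s*b*t))
        + ((s*a'*s)*(t*b*t) - (s*a'*t)*(s*b*t)) + ((t*b'*t)*(s*a*s) - (t*b'*s)*(t*a*s)) := by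
        noncomm_ring
    _ = s*(a'*a)*s + t*(b'*b)*t := by rw [e1, e2, e3, e4]; noncomm_ring

private lemma algMap_nonneg {r : ℝ} (hr : 0 ≤ r) : 0 ≤ algebraMap ℝ A r := by
  have h1 : algebraMap ℝ A r
      = star (algebraMap ℝ A (Real.sqrt r)) * algebraMap ℝ A (Real.sqrt r) := by
    rw [(IsSelfAdjoint.algebraMap A (IsSelfAdjoint.all (Real.sqrt r))).star_eq,
      ← map_mul, Real.mul_self_sqrt hr]
  rw [h1]
  exact star_mul_self_nonneg _

/-- The key norm estimate: if `s, t ≥ 0` commute with `s² + t² = 1`, then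
`‖s a s + t b t‖ ≤ max ‖a‖ ‖b‖`. -/
private lemma key_norm (s t a b : A) (hs : 0 ≤ s) (ht : 0 ≤ t)
    (hst : s * t = t * s) (h1 : s * s + t * t = 1) :
    ‖s*a*s + t*b*t‖ ≤ max ‖a‖ ‖b‖ := by
  set M : ℝ := max ‖a‖ ‖b‖ with hM
  have hM0 : 0 ≤ M := le_trans (norm_nonneg a) (le_max_left _ _)
  set y : A := s*a*s + t*b*t with hy
  set r : A := t*a*s - s*b*t with hr
  have hs' : star s = s := (IsSelfAdjoint.of_nonneg hs).star_eq
  have ht' : star t = t := (IsSelfAdjoint.of_nonneg ht).star_eq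
  have hys : star y = s*(star a)*s + t*(star b)*t := by
    simp [hy, star_mul, hs', ht', mul_assoc]
  have hrs : star r = s*(star a)*t - t*(star b)*s := by
    simp [hr, star_sub, star_mul, hs', ht', mul_assoc]
  have hid : star y * y + star r * r = s*(star a*a)*s + t*(star b*b)*t := by
    rw [hys, hrs]; exact ring_identity s t a b (star a) (star b) hst h1
  have hle1 : star a * a ≤ algebraMap ℝ A (M^2) := by
    refine le_trans CStarAlgebra.star_mul_le_algebraMap_norm_sq ?_
    rw [← sub_nonneg, ← map_sub]
    refine algMap_nonneg ?_
    have : ‖a‖ ≤ M := le_max_left _ _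
    nlinarith [norm_nonneg a]
  have hle2 : star b * b ≤ algebraMap ℝ A (M^2) := by
    refine le_trans CStarAlgebra.star_mul_le_algebraMap_norm_sq ?_
    rw [← sub_nonneg, ← map_sub]
    refine algMap_nonneg ?_
    have : ‖b‖ ≤ M := le_max_right _ _
    nlinarith [norm_nonneg b]
  have hconj1 : s*(star a*a)*s ≤ algebraMap ℝ A (M^2) * (s*s) := by
    have h := star_left_conjugate_le_conjugate hle1 s
    rw [hs'] at h
    calc s*(star a*a)*s ≤ s * algebraMap ℝ A (M^2) * s := h
      _ = algebraMap ℝ A (M^2) * (s*s) := by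
          rw [← Algebra.commutes (M^2) s, mul_assoc]
  have hconj2 : t*(star b*b)*t ≤ algebraMap ℝ A (M^2) * (t*t) := by
    have h := star_left_conjugate_le_conjugate hle2 t
    rw [ht'] at h
    calc t*(star b*b)*t ≤ t * algebraMap ℝ A (M^2) * t := h
      _ = algebraMap ℝ A (M^2) * (t*t) := by
          rw [← Algebra.commutes (M^2) t, mul_assoc]
  have hyy : star y * y ≤ algebraMap ℝ A (M^2) := by
    calc star y * y ≤ star y * y + star r * r :=
          le_add_of_nonneg_right (star_mul_self_nonneg r)
      _ = s*(star a*a)*s + t*(star b*b)*t := hid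
      _ ≤ algebraMap ℝ A (M^2) * (s*s) + algebraMap ℝ A (M^2) * (t*t) :=
          add_le_add hconj1 hconj2
      _ = algebraMap ℝ A (M^2) * (s*s + t*t) := by rw [mul_add]
      _ = algebraMap ℝ A (M^2) := by rw [h1, mul_one]
  have hnorm : ‖star y * y‖ ≤ M^2 := by
    rw [CStarAlgebra.norm_le_iff_le_algebraMap (star y * y) (by positivity)
      (star_mul_self_nonneg y)]
    exact hyy
  have hyn : ‖y‖ * ‖y‖ ≤ M^2 := by rwa [CStarRing.norm_star_mul_self] at hnorm
  nlinarith [norm_nonneg y]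

/-- Spectrum lies in `[0,1]`. -/
private lemma spec_Icc {v : A} (h0 : 0 ≤ v) (h1 : v ≤ 1) :
    ∀ x ∈ spectrum ℝ v, x ∈ Set.Icc (0:ℝ) 1 := by
  intro x hx
  rcases subsingleton_or_nontrivial A with hsub | hnt
  · exact absurd (isUnit_of_subsingleton _) (spectrum.mem_iff.mp hx)
  have hnonneg : (0:ℝ) ≤ x := spectrum_nonneg_of_nonneg h0 hx
  have hnorm : ‖v‖ ≤ 1 := (CStarAlgebra.norm_le_one_iff_of_nonneg v h0).mpr h1
  have h := spectrum.norm_le_norm_of_mem hx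
  exact ⟨hnonneg, by rw [Real.norm_eq_abs, abs_of_nonneg hnonneg] at h; linarith⟩

private lemma mul_pow_le (v : A) (hv : ‖v‖ ≤ 1) : ∀ (n : ℕ) (c : A), ‖c * v^n‖ ≤ ‖c‖ := by
  intro n
  induction n with
  | zero => intro c; simp
  | succ n ih =>
    intro c
    calc ‖c * v^(n+1)‖ = ‖(c * v^n) * v‖ := by rw [pow_succ, mul_assoc]
      _ ≤ ‖c * v^n‖ * ‖v‖ := norm_mul_le _ _
      _ ≤ ‖c‖ * 1 := mul_le_mul (ih c) hv (norm_nonneg _) (norm_nonneg _)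
      _ = ‖c‖ := mul_one _

private lemma pow_mul_le (v : A) (hv : ‖v‖ ≤ 1) : ∀ (n : ℕ) (c : A), ‖v^n * c‖ ≤ ‖c‖ := by
  intro n
  induction n with
  | zero => intro c; simp
  | succ n ih =>
    intro c
    calc ‖v^(n+1) * c‖ = ‖v * (v^n * c)‖ := by rw [pow_succ', mul_assoc]
      _ ≤ ‖v‖ * ‖v^n * c‖ := norm_mul_le _ _
      _ ≤ 1 * ‖c‖ := mul_le_mul hv (ih c) (norm_nonneg _) zero_le_one
      _ = ‖c‖ := one_mul _

private lemma comm_pow_bound (v a : A) (hv : ‖v‖ ≤ 1) (n : ℕ) :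
    ‖v^n * a - a * v^n‖ ≤ n * ‖v*a - a*v‖ := by
  induction n with
  | zero => simp
  | succ n ih =>
    have e : v^(n+1) * a - a * v^(n+1) = v * (v^n * a - a * v^n) + (v*a - a*v) * v^n := by
      rw [pow_succ' v n]; noncomm_ring
    have h1 : ‖v * (v^n * a - a * v^n)‖ ≤ ‖v^n * a - a * v^n‖ := by
      calc ‖v * (v^n * a - a * v^n)‖ ≤ ‖v‖ * ‖v^n * a - a * v^n‖ := norm_mul_le _ _
        _ ≤ 1 * ‖v^n * a - a * v^n‖ :=
          mul_le_mul_of_nonneg_right hv (norm_nonneg _)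
        _ = _ := one_mul _
    have h2 : ‖(v*a - a*v) * v^n‖ ≤ ‖v*a - a*v‖ := mul_pow_le v hv n _
    calc ‖v^(n+1) * a - a * v^(n+1)‖
        ≤ ‖v * (v^n * a - a * v^n)‖ + ‖(v*a - a*v) * v^n‖ := by rw [e]; exact norm_add_le _ _
      _ ≤ n * ‖v*a - a*v‖ + ‖v*a - a*v‖ := add_le_add (h1.trans ih) h2
      _ = (n+1 : ℕ) * ‖v*a - a*v‖ := by push_cast; ring

/-- Commutator bound for a polynomial in `v`. -/
private lemma comm_poly_bound (v a : A) (hv : ‖v‖ ≤ 1) (p : ℝ[X]) :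
    ‖aeval v p * a - a * aeval v p‖
      ≤ (∑ k ∈ Finset.range (p.natDegree + 1), |p.coeff k| * k) * ‖v*a - a*v‖ := by
  rw [aeval_eq_sum_range]
  have e : (∑ k ∈ Finset.range (p.natDegree + 1), p.coeff k • v ^ k) * a
      - a * ∑ k ∈ Finset.range (p.natDegree + 1), p.coeff k • v ^ k
      = ∑ k ∈ Finset.range (p.natDegree + 1), p.coeff k • (v^k * a - a * v^k) := by
    rw [Finset.sum_mul, Finset.mul_sum, ← Finset.sum_sub_distrib]
    refine Finset.sum_congr rfl fun k _ => ?_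
    rw [smul_sub, smul_mul_assoc, mul_smul_comm]
  rw [e]
  calc ‖∑ k ∈ Finset.range (p.natDegree + 1), p.coeff k • (v^k * a - a * v^k)‖
      ≤ ∑ k ∈ Finset.range (p.natDegree + 1), ‖p.coeff k • (v^k * a - a * v^k)‖ :=
        norm_sum_le _ _
    _ ≤ ∑ k ∈ Finset.range (p.natDegree + 1), |p.coeff k| * (k * ‖v*a - a*v‖) := by
        refine Finset.sum_le_sum fun k _ => ?_
        rw [norm_smul, Real.norm_eq_abs]
        exact mul_le_mul_of_nonneg_left (comm_pow_bound v a hv k) (abs_nonneg _)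
    _ = (∑ k ∈ Finset.range (p.natDegree + 1), |p.coeff k| * k) * ‖v*a - a*v‖ := by
        rw [Finset.sum_mul]; refine Finset.sum_congr rfl fun k _ => by ring

/-- Commutators with continuous functions of an asymptotically central net tend to zero. -/
private lemma tendsto_comm_cfc {ι : Type*} [Nonempty ι] [SemilatticeSup ι]
    (u : ι → A) (hu0 : ∀ i, 0 ≤ u i) (hu1 : ∀ i, u i ≤ 1)
    {f : ℝ → ℝ} (hf : Continuous f) (a : A)
    (hcen : Tendsto (fun i => ‖u i * a - a * u i‖) atTop (nhds 0)) :
    Tendsto (fun i => ‖cfc f (u i) * a - a * cfc f (u i)‖) atTop (nhds 0) := by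
  have hsa : ∀ i, IsSelfAdjoint (u i) := fun i => .of_nonneg (hu0 i)
  have hspec : ∀ i, ∀ x ∈ spectrum ℝ (u i), x ∈ Set.Icc (0:ℝ) 1 :=
    fun i => spec_Icc (hu0 i) (hu1 i)
  have hvnorm : ∀ i, ‖u i‖ ≤ 1 :=
    fun i => (CStarAlgebra.norm_le_one_iff_of_nonneg (u i) (hu0 i)).mpr (hu1 i)
  rw [NormedAddCommGroup.tendsto_nhds_zero]
  intro ε hε
  set B : ℝ := ‖a‖ + 1 with hB
  have hB0 : 0 < B := by positivity
  set δ : ℝ := ε / (4 * B) with hδ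
  have hδ0 : 0 < δ := by positivity
  obtain ⟨p, hp⟩ := exists_polynomial_near_of_continuousOn 0 1 f hf.continuousOn δ hδ0
  -- uniform bound on ‖cfc f (u i) - aeval (u i) p‖
  have hclose : ∀ i, ‖cfc f (u i) - aeval (u i) p‖ ≤ δ := by
    intro i
    have h1 : cfc f (u i) - aeval (u i) p = cfc (fun x => f x - p.eval x) (u i) := by
      rw [cfc_sub f (fun x => p.eval x) (u i) hf.continuousOn
        (Polynomial.continuous p).continuousOn,
        cfc_polynomial p (u i) (hsa i)]
    rw [h1]
    refine norm_cfc_le hδ0.le fun x hx => ?_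
    have := hp x (hspec i x hx)
    rw [Real.norm_eq_abs, abs_sub_comm]
    exact le_of_lt this
  set C : ℝ := ∑ k ∈ Finset.range (p.natDegree + 1), |p.coeff k| * k with hC
  have hC0 : 0 ≤ C := Finset.sum_nonneg fun k _ => by positivity
  have htend : Tendsto (fun i => C * ‖u i * a - a * u i‖) atTop (nhds 0) := by
    simpa using hcen.const_mul C
  have hev : ∀ᶠ i in atTop, C * ‖u i * a - a * u i‖ < ε / 2 :=
    htend.eventually_lt_const (by positivity)
  filter_upwards [hev] with i hi
  have hdecomp : cfc f (u i) * a - a * cfc f (u i)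
      = ((cfc f (u i) - aeval (u i) p) * a - a * (cfc f (u i) - aeval (u i) p))
        + (aeval (u i) p * a - a * aeval (u i) p) := by noncomm_ring
  have hb1 : ‖(cfc f (u i) - aeval (u i) p) * a - a * (cfc f (u i) - aeval (u i) p)‖
      ≤ 2 * δ * ‖a‖ := by
    calc ‖(cfc f (u i) - aeval (u i) p) * a - a * (cfc f (u i) - aeval (u i) p)‖
        ≤ ‖(cfc f (u i) - aeval (u i) p) * a‖ + ‖a * (cfc f (u i) - aeval (u i) p)‖ :=
          norm_sub_le _ _
      _ ≤ ‖cfc f (u i) - aeval (u i) p‖ * ‖a‖ + ‖a‖ * ‖cfc f (u i) - aeval (u i) p‖ :=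
          add_le_add (norm_mul_le _ _) (norm_mul_le _ _)
      _ ≤ δ * ‖a‖ + ‖a‖ * δ := by
          have := hclose i
          have h0 := norm_nonneg a
          nlinarith [norm_nonneg (cfc f (u i) - aeval (u i) p)]
      _ = 2 * δ * ‖a‖ := by ring
  have hb2 : ‖aeval (u i) p * a - a * aeval (u i) p‖ ≤ C * ‖u i * a - a * u i‖ :=
    comm_poly_bound (u i) a (hvnorm i) p
  have htotal : ‖cfc f (u i) * a - a * cfc f (u i)‖ < ε := by
    calc ‖cfc f (u i) * a - a * cfc f (u i)‖
        ≤ ‖(cfc f (u i) - aeval (u i) p) * a - a * (cfc f (u i) - aeval (u i) p)‖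
          + ‖aeval (u i) p * a - a * aeval (u i) p‖ := by rw [hdecomp]; exact norm_add_le _ _
      _ ≤ 2 * δ * ‖a‖ + C * ‖u i * a - a * u i‖ := add_le_add hb1 hb2
      _ < ε := by
          have h2d : 2 * δ * ‖a‖ ≤ ε / 2 := by
            have h0 := norm_nonneg a
            rw [hδ, hB]
            calc 2 * (ε / (4 * (‖a‖ + 1))) * ‖a‖
                = ε * (2 * ‖a‖ / (4 * (‖a‖ + 1))) := by ring
              _ ≤ ε * (1/2) := by
                  refine mul_le_mul_of_nonneg_left ?_ hε.le
                  rw [div_le_div_iff₀ (by positivity) (by norm_num)]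
                  linarith
              _ = ε / 2 := by ring
          linarith
  rw [Real.norm_eq_abs, abs_of_nonneg (norm_nonneg _)]
  exact htotal

end Aux

open Filter

/-- Left multiplication by a central approximate unit of a closed two-sided ideal `J`
in a C*-algebra `A` is an M-approximate identity for `J` in `A`. -/
theorem central_approx_unit_gives_Mai {A : Type*} [CStarAlgebra A] [PartialOrder A]
    [StarOrderedRing A] (J : TwoSidedIdeal A) (hJ : IsClosed (J : Set A))
    {ι : Type*} [Nonempty ι] [SemilatticeSup ι] (u : ι → A)
    (humem : ∀ i, u i ∈ J) (hu0 : ∀ i, 0 ≤ u i) (hu1 : ∀ i, u i ≤ 1)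
    (happrox : ∀ x ∈ J, Tendsto (fun i => u i * x) atTop (nhds x))
    (hcentral : ∀ a : A, Tendsto (fun i => ‖u i * a - a * u i‖) atTop (nhds 0)) :
    (∀ i, ∀ a : A, u i * a ∈ J) ∧
    (∀ i, ∀ a : A, ‖u i * a‖ ≤ ‖a‖) ∧
    (∀ x ∈ J, Tendsto (fun i => u i * x) atTop (nhds x)) ∧
    (∀ a b : A, limsup (fun i => ‖u i * a + (b - u i * b)‖) atTop ≤ max ‖a‖ ‖b‖) := by
  have hsa : ∀ i, IsSelfAdjoint (u i) := fun i => .of_nonneg (hu0 i)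
  have hspec : ∀ i, ∀ x ∈ spectrum ℝ (u i), x ∈ Set.Icc (0:ℝ) 1 :=
    fun i => spec_Icc (hu0 i) (hu1 i)
  have hvnorm : ∀ i, ‖u i‖ ≤ 1 :=
    fun i => (CStarAlgebra.norm_le_one_iff_of_nonneg (u i) (hu0 i)).mpr (hu1 i)
  refine ⟨fun i a => J.mul_mem_right _ _ (humem i), fun i a => ?_, happrox, fun a b => ?_⟩
  · calc ‖u i * a‖ ≤ ‖u i‖ * ‖a‖ := norm_mul_le _ _
      _ ≤ 1 * ‖a‖ := mul_le_mul_of_nonneg_right (hvnorm i) (norm_nonneg _)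
      _ = ‖a‖ := one_mul _
  -- the limsup estimate
  set M : ℝ := max ‖a‖ ‖b‖ with hM
  have hM0 : 0 ≤ M := le_trans (norm_nonneg a) (le_max_left _ _)
  set s : ι → A := fun i => cfc Real.sqrt (u i) with hsdef
  set t : ι → A := fun i => cfc (fun x : ℝ => Real.sqrt (1 - x)) (u i) with htdef
  have hs0 : ∀ i, 0 ≤ s i := fun i => cfc_nonneg fun x _ => Real.sqrt_nonneg x
  have ht0 : ∀ i, 0 ≤ t i := fun i => cfc_nonneg fun x _ => Real.sqrt_nonneg _
  have hss : ∀ i, s i * s i = u i := by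
    intro i
    rw [hsdef, ← cfc_mul (R := ℝ) _ _ (u i)]
    calc cfc (fun x : ℝ => Real.sqrt x * Real.sqrt x) (u i)
        = cfc (id : ℝ → ℝ) (u i) := by
          refine cfc_congr fun x hx => ?_
          exact Real.mul_self_sqrt (hspec i x hx).1
      _ = u i := cfc_id ℝ (u i)
  have htt : ∀ i, t i * t i = 1 - u i := by
    intro i
    rw [htdef, ← cfc_mul (R := ℝ) _ _ (u i)]
    calc cfc (fun x : ℝ => Real.sqrt (1-x) * Real.sqrt (1-x)) (u i)
        = cfc (fun x : ℝ => 1 - x) (u i) := by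
          refine cfc_congr fun x hx => ?_
          exact Real.mul_self_sqrt (by linarith [(hspec i x hx).2])
      _ = 1 - u i := by
          rw [cfc_sub (fun _ : ℝ => (1:ℝ)) (fun x : ℝ => x) (u i), cfc_const_one ℝ (u i),
            cfc_id' ℝ (u i)]
  have hst : ∀ i, s i * t i = t i * s i := by
    intro i
    rw [hsdef, htdef, ← cfc_mul (R := ℝ) _ _ (u i), ← cfc_mul (R := ℝ) _ _ (u i)]
    exact cfc_congr fun x _ => mul_comm _ _
  have h1 : ∀ i, s i * s i + t i * t i = 1 := by
    intro i; rw [hss, htt]; noncomm_ring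
  have hsnorm : ∀ i, ‖s i‖ ≤ 1 := by
    intro i
    refine norm_cfc_le zero_le_one fun x hx => ?_
    rw [Real.norm_eq_abs, abs_of_nonneg (Real.sqrt_nonneg _)]
    exact Real.sqrt_le_one.mpr (hspec i x hx).2
  have htnorm : ∀ i, ‖t i‖ ≤ 1 := by
    intro i
    refine norm_cfc_le zero_le_one fun x hx => ?_
    rw [Real.norm_eq_abs, abs_of_nonneg (Real.sqrt_nonneg _)]
    exact Real.sqrt_le_one.mpr (by linarith [(hspec i x hx).1])
  -- decomposition
  have hdecomp : ∀ i, u i * a + (b - u i * b)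
      = (s i * a * s i + t i * b * t i) + s i * (s i * a - a * s i) + t i * (t i * b - b * t i) := by
    intro i
    have e1 : u i * a = s i * s i * a := by rw [hss]
    have e2 : b - u i * b = t i * t i * b := by rw [htt i, sub_mul, one_mul]
    rw [e1, e2]; noncomm_ring
  have hbound : ∀ i, ‖u i * a + (b - u i * b)‖
      ≤ M + (‖s i * a - a * s i‖ + ‖t i * b - b * t i‖) := by
    intro i
    rw [hdecomp i]
    calc ‖(s i * a * s i + t i * b * t i) + s i * (s i * a - a * s i) + t i * (t i * b - b * t i)‖
        ≤ ‖(s i * a * s i + t i * b * t i) + s i * (s i * a - a * s i)‖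
          + ‖t i * (t i * b - b * t i)‖ := norm_add_le _ _
      _ ≤ ‖s i * a * s i + t i * b * t i‖ + ‖s i * (s i * a - a * s i)‖
          + ‖t i * (t i * b - b * t i)‖ := by
          have := norm_add_le (s i * a * s i + t i * b * t i) (s i * (s i * a - a * s i))
          linarith
      _ ≤ M + (‖s i * a - a * s i‖ + ‖t i * b - b * t i‖) := by
          have k1 : ‖s i * a * s i + t i * b * t i‖ ≤ M :=
            key_norm (s i) (t i) a b (hs0 i) (ht0 i) (hst i) (h1 i)
          have k2 : ‖s i * (s i * a - a * s i)‖ ≤ ‖s i * a - a * s i‖ := by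
            calc ‖s i * (s i * a - a * s i)‖ ≤ ‖s i‖ * ‖s i * a - a * s i‖ := norm_mul_le _ _
              _ ≤ 1 * ‖s i * a - a * s i‖ :=
                mul_le_mul_of_nonneg_right (hsnorm i) (norm_nonneg _)
              _ = _ := one_mul _
          have k3 : ‖t i * (t i * b - b * t i)‖ ≤ ‖t i * b - b * t i‖ := by
            calc ‖t i * (t i * b - b * t i)‖ ≤ ‖t i‖ * ‖t i * b - b * t i‖ := norm_mul_le _ _
              _ ≤ 1 * ‖t i * b - b * t i‖ :=
                mul_le_mul_of_nonneg_right (htnorm i) (norm_nonneg _)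
              _ = _ := one_mul _
          linarith
  -- commutator terms tend to zero
  have hcs : Tendsto (fun i => ‖s i * a - a * s i‖) atTop (nhds 0) :=
    tendsto_comm_cfc u hu0 hu1 Real.continuous_sqrt a (hcentral a)
  have hct : Tendsto (fun i => ‖t i * b - b * t i‖) atTop (nhds 0) :=
    tendsto_comm_cfc u hu0 hu1 (Real.continuous_sqrt.comp (continuous_const.sub continuous_id))
      b (hcentral b)
  have hg : Tendsto (fun i => M + (‖s i * a - a * s i‖ + ‖t i * b - b * t i‖)) atTop (nhds M) := by
    have := (hcs.add hct)
    have h := tendsto_const_nhds (x := M) (f := atTop (α := ι)) |>.add this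
    simpa using h
  calc limsup (fun i => ‖u i * a + (b - u i * b)‖) atTop
      ≤ limsup (fun i => M + (‖s i * a - a * s i‖ + ‖t i * b - b * t i‖)) atTop := by
        refine limsup_le_limsup (Eventually.of_forall hbound) ?_ ?_
        · exact isCoboundedUnder_le_of_le atTop fun i => norm_nonneg _
        · exact hg.isBoundedUnder_le
    _ = M := hg.limsup_eq
end

section
/- Let X be a closed subspace of c₀ and T : X → X a bounded linear operator which is not compact. Then there exists a closed subspace Y of X such that Y is isomorphic to c₀ and the restriction T|_Y is an isomorphism onto its image. -/
open ZeroAtInfty Filter Topology Metric Finset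

noncomputable section

namespace C0Fix

/-- coordinate bound -/
lemma abs_apply_le_norm (f : C₀(ℕ, ℝ)) (t : ℕ) : |f t| ≤ ‖f‖ := by
  rw [← ZeroAtInftyContinuousMap.norm_toBCF_eq_norm]
  simpa [Real.norm_eq_abs] using f.toBCF.norm_coe_le_norm t

lemma norm_le_iff {f : C₀(ℕ, ℝ)} {C : ℝ} (hC : 0 ≤ C) : ‖f‖ ≤ C ↔ ∀ t, |f t| ≤ C := by
  rw [← ZeroAtInftyContinuousMap.norm_toBCF_eq_norm]
  simpa [Real.norm_eq_abs] using BoundedContinuousFunction.norm_le (f := f.toBCF) hC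

lemma exists_coord (f : C₀(ℕ, ℝ)) {ε : ℝ} (hε : 0 < ε) : ∃ t, ‖f‖ - ε < |f t| := by
  rcases lt_or_ge ‖f‖ ε with h0 | h0
  · exact ⟨0, lt_of_lt_of_le (by linarith) (abs_nonneg _)⟩
  · by_contra h
    push_neg at h
    have := (norm_le_iff (by linarith)).mpr h
    linarith

lemma tail_small (f : C₀(ℕ, ℝ)) {ε : ℝ} (hε : 0 < ε) : ∃ N, ∀ t, N ≤ t → |f t| ≤ ε := by
  have h := zero_at_infty f
  rw [cocompact_eq_cofinite, Nat.cofinite_eq_atTop] at h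
  have := (Metric.tendsto_atTop.mp h) ε hε
  obtain ⟨N, hN⟩ := this
  exact ⟨N, fun t ht => by simpa [Real.dist_eq] using (hN t ht).le⟩

/-- evaluation as a continuous linear functional -/
def ev (t : ℕ) : C₀(ℕ, ℝ) →L[ℝ] ℝ :=
  LinearMap.mkContinuous
    { toFun := fun f => f t
      map_add' := fun f g => rfl
      map_smul' := fun c f => rfl } 1
    (fun f => by simpa [Real.norm_eq_abs] using abs_apply_le_norm f t)

@[simp] lemma ev_apply (t : ℕ) (f : C₀(ℕ, ℝ)) : ev t f = f t := rfl


/-- one step of the block extraction -/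
lemma block_step (u v : ℕ → C₀(ℕ, ℝ))
    (hu : ∀ t, Tendsto (fun n => u n t) atTop (𝓝 0))
    (hv : ∀ t, Tendsto (fun n => v n t) atTop (𝓝 0))
    (a b : ℕ) {d : ℝ} (hd : 0 < d) :
    ∃ p : ℕ × ℕ, a < p.1 ∧ b < p.2 ∧
      (∀ t, t < b → |u p.1 t| ≤ d ∧ |v p.1 t| ≤ d) ∧
      (∀ t, p.2 ≤ t → |u p.1 t| ≤ d ∧ |v p.1 t| ≤ d) := by
  have habs : ∀ᶠ x in 𝓝 (0 : ℝ), |x| < d := by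
    have := Metric.ball_mem_nhds (0 : ℝ) hd
    filter_upwards [this] with x hx
    simpa [Real.dist_eq] using hx
  have h1 : ∀ᶠ n in atTop, ∀ t ∈ Finset.range b, |u n t| ≤ d ∧ |v n t| ≤ d := by
    rw [eventually_all_finset]
    intro t _
    filter_upwards [(hu t).eventually habs, (hv t).eventually habs] with n h1 h2
    exact ⟨h1.le, h2.le⟩
  obtain ⟨n, hn1, hn2⟩ := (h1.and (eventually_gt_atTop a)).exists
  obtain ⟨Nu, hNu⟩ := tail_small (u n) hd
  obtain ⟨Nv, hNv⟩ := tail_small (v n) hd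
  refine ⟨⟨n, max b (max Nu Nv) + 1⟩, hn2, by simp [Nat.lt_succ_iff], ?_, ?_⟩
  · intro t ht; exact hn1 t (Finset.mem_range.mpr ht)
  · intro t ht
    have hu' : Nu ≤ t := le_trans (le_trans (le_max_left _ _) (le_max_right _ _))
      (le_trans (Nat.le_succ _) ht)
    have hv' : Nv ≤ t := le_trans (le_trans (le_max_right _ _) (le_max_right _ _))
      (le_trans (Nat.le_succ _) ht)
    exact ⟨hNu t hu', hNv t hv'⟩

/-- the block extraction -/
lemma exists_blocks (u v : ℕ → C₀(ℕ, ℝ))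
    (hu : ∀ t, Tendsto (fun n => u n t) atTop (𝓝 0))
    (hv : ∀ t, Tendsto (fun n => v n t) atTop (𝓝 0))
    (δ : ℕ → ℝ) (hδ : ∀ k, 0 < δ k) :
    ∃ φ N : ℕ → ℕ, StrictMono φ ∧ StrictMono N ∧
      ∀ k t, (t < N k ∨ N (k + 1) ≤ t) → |u (φ k) t| ≤ δ k ∧ |v (φ k) t| ≤ δ k := by
  let F : ℕ → ℕ × ℕ := fun k =>
    Nat.rec (Classical.choose (block_step u v hu hv 0 0 (hδ 0)))
      (fun k ih => Classical.choose (block_step u v hu hv ih.1 ih.2 (hδ (k + 1)))) k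
  have hF0 : F 0 = Classical.choose (block_step u v hu hv 0 0 (hδ 0)) := rfl
  have hFS : ∀ k, F (k + 1) =
      Classical.choose (block_step u v hu hv (F k).1 (F k).2 (hδ (k + 1))) := fun k => rfl
  have spec0 := Classical.choose_spec (block_step u v hu hv 0 0 (hδ 0))
  have specS : ∀ k, (F k).1 < (F (k+1)).1 ∧ (F k).2 < (F (k+1)).2 ∧
      (∀ t, t < (F k).2 → |u (F (k+1)).1 t| ≤ δ (k+1) ∧ |v (F (k+1)).1 t| ≤ δ (k+1)) ∧
      (∀ t, (F (k+1)).2 ≤ t → |u (F (k+1)).1 t| ≤ δ (k+1) ∧ |v (F (k+1)).1 t| ≤ δ (k+1)) := by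
    intro k
    rw [hFS k]
    exact Classical.choose_spec (block_step u v hu hv (F k).1 (F k).2 (hδ (k + 1)))
  refine ⟨fun k => (F k).1, fun k => Nat.rec 0 (fun k _ => (F k).2) k, ?_, ?_, ?_⟩
  · exact strictMono_nat_of_lt_succ fun k => (specS k).1
  · refine strictMono_nat_of_lt_succ fun k => ?_
    cases k with
    | zero => exact spec0.2.1
    | succ k => exact (specS k).2.1
  · intro k t ht
    cases k with
    | zero =>
      rcases ht with ht | ht
      · exact absurd ht (Nat.not_lt_zero t)
      · exact spec0.2.2.2 t ht
    | succ k =>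
      rcases ht with ht | ht
      · exact (specS k).2.2.1 t ht
      · exact (specS k).2.2.2 t ht

/-- upper estimate for almost disjointly supported vectors -/
lemma upper_est (v : ℕ → C₀(ℕ, ℝ)) (N : ℕ → ℕ) (hN : StrictMono N)
    (δ : ℕ → ℝ) (M D B : ℝ) (hB0 : 0 ≤ B) (hM : ∀ k, ‖v k‖ ≤ M)
    (hoff : ∀ k t, (t < N k ∨ N (k + 1) ≤ t) → |v k t| ≤ δ k)
    (hδ : ∀ k, 0 ≤ δ k) (hD : ∀ s : Finset ℕ, ∑ k ∈ s, δ k ≤ D)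
    (a : ℕ → ℝ) (s : Finset ℕ) (hB : ∀ k ∈ s, |a k| ≤ B) :
    ‖∑ k ∈ s, a k • v k‖ ≤ B * (M + D) := by
  have hM0 : 0 ≤ M := (norm_nonneg _).trans (hM 0)
  have hD0 : 0 ≤ D := le_trans (by simp) (hD ∅)
  rw [norm_le_iff (by positivity)]
  intro t
  have hev : (∑ k ∈ s, a k • v k) t = ∑ k ∈ s, a k * v k t := by
    have := map_sum (ev t) (fun k => a k • v k) s
    simp only [map_smul] at this
    exact this
  rw [hev]
  refine le_trans (Finset.abs_sum_le_sum_abs _ _) ?_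
  have hsplit := Finset.sum_filter_add_sum_filter_not s
    (fun k => N k ≤ t ∧ t < N (k + 1)) (fun k => |a k * v k t|)
  rw [← hsplit]
  have h1 : ∑ k ∈ s.filter (fun k => N k ≤ t ∧ t < N (k + 1)), |a k * v k t| ≤ B * M := by
    set s₁ := s.filter (fun k => N k ≤ t ∧ t < N (k + 1)) with hs₁
    have hcard : s₁.card ≤ 1 := by
      rw [Finset.card_le_one]
      intro i hi j hj
      simp only [hs₁, Finset.mem_filter] at hi hj
      by_contra hij
      rcases Nat.lt_or_ge i j with h | h
      · have : N (i + 1) ≤ N j := hN.monotone h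
        omega
      · have h' : j < i := lt_of_le_of_ne h (Ne.symm hij)
        have : N (j + 1) ≤ N i := hN.monotone h'
        omega
    have hterm : ∀ k ∈ s₁, |a k * v k t| ≤ B * M := by
      intro k hk
      have hk' : k ∈ s := Finset.mem_of_mem_filter k hk
      rw [abs_mul]
      exact mul_le_mul (hB k hk') ((abs_apply_le_norm _ _).trans (hM k)) (abs_nonneg _) hB0
    calc ∑ k ∈ s₁, |a k * v k t| ≤ s₁.card • (B * M) := Finset.sum_le_card_nsmul _ _ _ hterm
      _ ≤ 1 • (B * M) := by
          apply nsmul_le_nsmul_left (by positivity) hcard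
      _ = B * M := one_smul _ _
  have h2 : ∑ k ∈ s.filter (fun k => ¬(N k ≤ t ∧ t < N (k + 1))), |a k * v k t| ≤ B * D := by
    have hterm : ∀ k ∈ s.filter (fun k => ¬(N k ≤ t ∧ t < N (k + 1))), |a k * v k t| ≤ B * δ k := by
      intro k hk
      rw [Finset.mem_filter] at hk
      have hoff' : |v k t| ≤ δ k := by
        apply hoff
        omega
      rw [abs_mul]
      exact mul_le_mul (hB k hk.1) hoff' (abs_nonneg _) hB0
    calc ∑ k ∈ _, |a k * v k t| ≤ ∑ k ∈ s.filter (fun k => ¬(N k ≤ t ∧ t < N (k + 1))), B * δ k :=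
          Finset.sum_le_sum hterm
      _ = B * ∑ k ∈ s.filter (fun k => ¬(N k ≤ t ∧ t < N (k + 1))), δ k := by rw [Finset.mul_sum]
      _ ≤ B * D := mul_le_mul_of_nonneg_left (hD _) hB0
  linarith

/-- lower estimate -/
lemma lower_est (v : ℕ → C₀(ℕ, ℝ)) (N : ℕ → ℕ) (hN : StrictMono N)
    (δ : ℕ → ℝ) (D B : ℝ) (hB0 : 0 ≤ B)
    (hoff : ∀ k t, (t < N k ∨ N (k + 1) ≤ t) → |v k t| ≤ δ k)
    (hδ : ∀ k, 0 ≤ δ k) (hD : ∀ s : Finset ℕ, ∑ k ∈ s, δ k ≤ D)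
    (a : ℕ → ℝ) (s : Finset ℕ) (hB : ∀ k ∈ s, |a k| ≤ B)
    (k₀ : ℕ) (hk₀ : k₀ ∈ s) (t₀ : ℕ) (hbl : N k₀ ≤ t₀) (hbr : t₀ < N (k₀ + 1))
    (m : ℝ) (hm : m ≤ |v k₀ t₀|) :
    |a k₀| * m - B * D ≤ ‖∑ k ∈ s, a k • v k‖ := by
  have hev : (∑ k ∈ s, a k • v k) t₀ = ∑ k ∈ s, a k * v k t₀ := by
    have := map_sum (ev t₀) (fun k => a k • v k) s
    simp only [map_smul] at this
    exact this
  have hle : |(∑ k ∈ s, a k • v k) t₀| ≤ ‖∑ k ∈ s, a k • v k‖ := abs_apply_le_norm _ _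
  rw [hev] at hle
  refine le_trans ?_ hle
  have hsp : ∑ k ∈ s, a k * v k t₀ = a k₀ * v k₀ t₀ + ∑ k ∈ s.erase k₀, a k * v k t₀ :=
    (Finset.add_sum_erase s _ hk₀).symm
  have hrest : |∑ k ∈ s.erase k₀, a k * v k t₀| ≤ B * D := by
    refine le_trans (Finset.abs_sum_le_sum_abs _ _) ?_
    have hterm : ∀ k ∈ s.erase k₀, |a k * v k t₀| ≤ B * δ k := by
      intro k hk
      have hks : k ∈ s := Finset.mem_of_mem_erase hk
      have hkne : k ≠ k₀ := Finset.ne_of_mem_erase hk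
      have hoff' : |v k t₀| ≤ δ k := by
        apply hoff
        rcases Nat.lt_or_ge k k₀ with h | h
        · right; exact le_trans (hN.monotone h) hbl
        · left
          have h' : k₀ < k := lt_of_le_of_ne h (Ne.symm hkne)
          exact lt_of_lt_of_le hbr (hN.monotone h')
      rw [abs_mul]
      exact mul_le_mul (hB k hks) hoff' (abs_nonneg _) hB0
    calc ∑ k ∈ s.erase k₀, |a k * v k t₀| ≤ ∑ k ∈ s.erase k₀, B * δ k := Finset.sum_le_sum hterm
      _ = B * ∑ k ∈ s.erase k₀, δ k := by rw [Finset.mul_sum]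
      _ ≤ B * D := mul_le_mul_of_nonneg_left (hD _) hB0
  have h1 : |a k₀ * v k₀ t₀| ≥ |a k₀| * m := by
    rw [abs_mul]
    exact mul_le_mul_of_nonneg_left hm (abs_nonneg _)
  calc |a k₀| * m - B * D ≤ |a k₀ * v k₀ t₀| - |∑ k ∈ s.erase k₀, a k * v k t₀| := by linarith
    _ ≤ |a k₀ * v k₀ t₀ + ∑ k ∈ s.erase k₀, a k * v k t₀| := by
        have := abs_sub_abs_le_abs_sub (a k₀ * v k₀ t₀)
          (-(∑ k ∈ s.erase k₀, a k * v k t₀))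
        simp only [abs_neg, sub_neg_eq_add] at this
        exact this
    _ = |∑ k ∈ s, a k * v k t₀| := by rw [hsp]

end C0Fix
section P3
open ZeroAtInfty Filter Topology Metric Finset
namespace C0Fix

/-- bounded pointwise-null sequences in c₀ are weakly null -/
lemma weak_null (z : ℕ → C₀(ℕ, ℝ)) (M : ℝ) (hM : ∀ n, ‖z n‖ ≤ M)
    (hz : ∀ t, Tendsto (fun n => z n t) atTop (𝓝 0)) (g : C₀(ℕ, ℝ) →L[ℝ] ℝ) :
    Tendsto (fun n => g (z n)) atTop (𝓝 0) := by
  by_contra hcon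
  rw [Metric.tendsto_atTop] at hcon
  push_neg at hcon
  obtain ⟨d, hdpos, hfreq⟩ := hcon
  have hfreq' : ∃ᶠ n in atTop, d ≤ |g (z n)| := by
    rw [frequently_atTop]
    intro N
    obtain ⟨n, hn, hd⟩ := hfreq N
    exact ⟨n, hn, by simpa [Real.dist_eq] using hd⟩
  obtain ⟨ψ, hψmono, hψ⟩ := Filter.extraction_of_frequently_atTop hfreq'
  have hz' : ∀ t, Tendsto (fun n => z (ψ n) t) atTop (𝓝 0) :=
    fun t => (hz t).comp hψmono.tendsto_atTop
  obtain ⟨φ, N, hφmono, hNmono, hbl⟩ := exists_blocks (fun n => z (ψ n)) (fun n => z (ψ n))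
    hz' hz' (fun k => 1 / 2 / 2 ^ k) (fun k => by positivity)
  set w : ℕ → C₀(ℕ, ℝ) := fun k => z (ψ (φ k)) with hw
  set a : ℕ → ℝ := fun k => if 0 ≤ g (w k) then 1 else -1 with ha
  have haval : ∀ k, a k * g (w k) = |g (w k)| := by
    intro k
    rw [ha]
    rcases le_or_gt 0 (g (w k)) with h | h
    · simp [h, abs_of_nonneg h]
    · simp [not_le.mpr h, abs_of_neg h]
  have hM0 : 0 ≤ M := (norm_nonneg _).trans (hM 0)
  have hD : ∀ s : Finset ℕ, ∑ k ∈ s, (1 / 2 / 2 ^ k : ℝ) ≤ 1 := by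
    intro s
    calc ∑ k ∈ s, (1 / 2 / 2 ^ k : ℝ) ≤ ∑' k : ℕ, (1 / 2 / 2 ^ k : ℝ) :=
          Summable.sum_le_tsum s (fun k _ => by positivity) (summable_geometric_two' 1)
      _ = 1 := tsum_geometric_two' 1
  have key : ∀ n : ℕ, (n : ℝ) * d ≤ ‖g‖ * (M + 1) := by
    intro n
    have hup : ‖∑ k ∈ Finset.range n, a k • w k‖ ≤ 1 * (M + 1) := by
      refine upper_est w N hNmono (fun k => 1 / 2 / 2 ^ k) M 1 1 one_pos.le
        (fun k => hM _) (fun k t ht => (hbl k t ht).1) (fun k => by positivity) hD a _ ?_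
      intro k _
      rw [ha]
      dsimp only
      split <;> simp
    have hgs : g (∑ k ∈ Finset.range n, a k • w k) = ∑ k ∈ Finset.range n, |g (w k)| := by
      rw [map_sum]
      refine Finset.sum_congr rfl fun k _ => ?_
      rw [map_smul, smul_eq_mul, haval k]
    have hlow : (n : ℝ) * d ≤ ∑ k ∈ Finset.range n, |g (w k)| := by
      calc (n : ℝ) * d = ∑ _k ∈ Finset.range n, d := by
            rw [Finset.sum_const, Finset.card_range, nsmul_eq_mul]
        _ ≤ ∑ k ∈ Finset.range n, |g (w k)| := Finset.sum_le_sum fun k _ => hψ (φ k)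
    calc (n : ℝ) * d ≤ ∑ k ∈ Finset.range n, |g (w k)| := hlow
      _ = g (∑ k ∈ Finset.range n, a k • w k) := hgs.symm
      _ ≤ |g (∑ k ∈ Finset.range n, a k • w k)| := le_abs_self _
      _ ≤ ‖g‖ * ‖∑ k ∈ Finset.range n, a k • w k‖ := g.le_opNorm _
      _ ≤ ‖g‖ * (1 * (M + 1)) :=
          mul_le_mul_of_nonneg_left hup (norm_nonneg g)
      _ = ‖g‖ * (M + 1) := by ring
  obtain ⟨n, hn⟩ := exists_nat_gt (‖g‖ * (M + 1) / d)
  have := key n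
  rw [div_lt_iff₀ hdpos] at hn
  linarith

/-- a separated sequence in the image of the ball, from non-compactness -/
lemma exists_separated {X : Type*} [NormedAddCommGroup X] [NormedSpace ℝ X]
    [CompleteSpace X] (T : X →L[ℝ] X) (hT : ¬ IsCompactOperator T) :
    ∃ ε : ℝ, 0 < ε ∧ ∃ x : ℕ → X, (∀ n, ‖x n‖ ≤ 1) ∧
      ∀ m n, m < n → ε ≤ ‖T (x n) - T (x m)‖ := by
  have h1 : ¬ IsCompact (closure (T '' closedBall 0 1)) := by
    intro h
    apply hT
    exact (isCompactOperator_iff_isCompact_closure_image_closedBall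
      (T.toLinearMap) one_pos).mpr h
  have h2 : ¬ TotallyBounded (T '' closedBall 0 1) := by
    intro h
    exact h1 (h.closure.isCompact_of_isClosed isClosed_closure)
  rw [totallyBounded_iff] at h2
  push_neg at h2
  obtain ⟨ε, hε, hcov⟩ := h2
  set S := T '' closedBall (0 : X) 1 with hS
  have key : ∀ L : List X, ∃ p, p ∈ S ∧ ∀ q ∈ L, ε ≤ dist p q := by
    intro L
    by_contra hcon
    push_neg at hcon
    refine hcov {q | q ∈ L} L.finite_toSet ?_
    intro p hp
    obtain ⟨q, hq, hlt⟩ := hcon p hp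
    exact Set.mem_biUnion hq (mem_ball.mpr hlt)
  let L : ℕ → List X := fun n => Nat.rec [] (fun _ ih => Classical.choose (key ih) :: ih) n
  have hLs : ∀ n, L (n + 1) = Classical.choose (key (L n)) :: L n := fun _ => rfl
  set x : ℕ → X := fun n => Classical.choose (key (L n)) with hxdef
  have hx : ∀ n, x n ∈ S ∧ ∀ q ∈ L n, ε ≤ dist (x n) q := fun n =>
    Classical.choose_spec (key (L n))
  have hmem : ∀ m n, m < n → x m ∈ L n := by
    intro m n h
    induction n with
    | zero => omega
    | succ n ih =>
      rw [hLs n]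
      rcases Nat.lt_or_ge m n with h' | h'
      · exact List.mem_cons_of_mem _ (ih h')
      · have hmn : m = n := by omega
        subst hmn
        exact List.mem_cons_self
  have hpre : ∀ n, ∃ w : X, ‖w‖ ≤ 1 ∧ T w = x n := by
    intro n
    obtain ⟨w, hw, hTw⟩ := (hx n).1
    exact ⟨w, by simpa [mem_closedBall, dist_zero_right] using hw, hTw⟩
  choose w hw hTw using hpre
  refine ⟨ε, hε, w, hw, ?_⟩
  intro m n h
  rw [hTw n, hTw m, ← dist_eq_norm]
  exact (hx n).2 (x m) (hmem m n h)

end C0Fix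
end P3
section P4
open ZeroAtInfty Filter Topology Metric Finset
namespace C0Fix

lemma norm_tsum_le {E : Type*} [NormedAddCommGroup E] {f : ℕ → E} {x : E}
    (h : HasSum f x) {C : ℝ} (hC : ∀ s : Finset ℕ, ‖∑ k ∈ s, f k‖ ≤ C) : ‖x‖ ≤ C :=
  le_of_tendsto ((continuous_norm.tendsto x).comp h) (Filter.Eventually.of_forall hC)

/-- extend a functional on `X` through the isometric embedding `J` -/
lemma extend_functional {X : Type*} [NormedAddCommGroup X] [NormedSpace ℝ X]
    (J : X →ₗᵢ[ℝ] C₀(ℕ, ℝ)) (f : X →L[ℝ] ℝ) :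
    ∃ g : C₀(ℕ, ℝ) →L[ℝ] ℝ, ∀ x, g (J x) = f x := by
  set p : Submodule ℝ C₀(ℕ, ℝ) := LinearMap.range J.toLinearMap with hp
  let e : X ≃ₗ[ℝ] p := LinearEquiv.ofInjective J.toLinearMap J.injective
  have hcoe : ∀ x : X, ((e x : p) : C₀(ℕ, ℝ)) = J x := fun x =>
    LinearEquiv.ofInjective_apply _ _
  let f₁ : p →ₗ[ℝ] ℝ := f.toLinearMap.comp e.symm.toLinearMap
  have hb : ∀ v : p, ‖f₁ v‖ ≤ ‖f‖ * ‖v‖ := by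
    intro v
    have h2 : J (e.symm v) = (v : C₀(ℕ, ℝ)) := by
      rw [← hcoe (e.symm v), e.apply_symm_apply]
    have h1 : ‖e.symm v‖ = ‖v‖ := by
      rw [← J.norm_map (e.symm v), h2]
      rfl
    calc ‖f₁ v‖ = ‖f (e.symm v)‖ := rfl
      _ ≤ ‖f‖ * ‖e.symm v‖ := f.le_opNorm _
      _ = ‖f‖ * ‖v‖ := by rw [h1]
  obtain ⟨g, hg, _⟩ := exists_extension_norm_eq p (LinearMap.mkContinuous f₁ ‖f‖ hb)
  refine ⟨g, fun x => ?_⟩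
  have hgx : g ((e x : p) : C₀(ℕ, ℝ)) = LinearMap.mkContinuous f₁ ‖f‖ hb (e x) := hg (e x)
  rw [hcoe x] at hgx
  rw [hgx]
  show f (e.symm (e x)) = f x
  rw [e.symm_apply_apply]

/-- extract a coordinatewise convergent subsequence -/
lemma exists_ptwise {X : Type*} [NormedAddCommGroup X] [NormedSpace ℝ X]
    (J : X →ₗᵢ[ℝ] C₀(ℕ, ℝ)) (x : ℕ → X) (hx : ∀ n, ‖x n‖ ≤ 1) :
    ∃ φ : ℕ → ℕ, StrictMono φ ∧
      ∀ t, ∃ l : ℝ, Tendsto (fun n => J (x (φ n)) t) atTop (𝓝 l) := by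
  have hmem : ∀ n t, J (x n) t ∈ Set.Icc (-1 : ℝ) 1 := by
    intro n t
    have h1 : |J (x n) t| ≤ 1 := le_trans (abs_apply_le_norm _ _)
      (by rw [J.norm_map]; exact hx n)
    exact ⟨(abs_le.mp h1).1, (abs_le.mp h1).2⟩
  let F : ℕ → (ℕ → Set.Icc (-1 : ℝ) 1) := fun n t => ⟨J (x n) t, hmem n t⟩
  obtain ⟨l, φ, hφ, hconv⟩ := CompactSpace.tendsto_subseq F
  refine ⟨φ, hφ, fun t => ⟨(l t : ℝ), ?_⟩⟩
  have h1 : Tendsto (fun n => F (φ n) t) atTop (𝓝 (l t)) := (tendsto_pi_nhds.mp hconv) t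
  exact (continuous_subtype_val.tendsto (l t)).comp h1

end C0Fix
end P4
section P5
open ZeroAtInfty Filter Topology Metric Finset

set_option maxHeartbeats 2000000 in
/-- A non-compact bounded operator on a closed subspace `X` of `c₀` fixes a copy of
`c₀`: there is a closed subspace `Y` of `X`, isomorphic to `c₀`, on which `T` is an
isomorphism onto its image (i.e. bounded below).  The subspace of `c₀` is
represented by a Banach space `X` with an isometric linear embedding into `c₀`. -/
theorem noncompact_operator_fixes_c0 {X : Type*} [NormedAddCommGroup X] [NormedSpace ℝ X]
    [CompleteSpace X] (J : X →ₗᵢ[ℝ] C₀(ℕ, ℝ)) (T : X →L[ℝ] X)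
    (hT : ¬ IsCompactOperator T) :
    ∃ Y : Submodule ℝ X, IsClosed (Y : Set X) ∧
      Nonempty (↥Y ≃L[ℝ] C₀(ℕ, ℝ)) ∧
      ∃ c > (0 : ℝ), ∀ y ∈ Y, c * ‖y‖ ≤ ‖T y‖ := by
  classical
  obtain ⟨ε, hε, x, hx1, hsep⟩ := C0Fix.exists_separated T hT
  obtain ⟨ψ, hψ, hconv⟩ := C0Fix.exists_ptwise J x hx1
  set y : ℕ → X := fun n => x (ψ (n + 1)) - x (ψ n) with hy
  have hy2 : ∀ n, ‖y n‖ ≤ 2 := by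
    intro n
    calc ‖x (ψ (n + 1)) - x (ψ n)‖ ≤ ‖x (ψ (n + 1))‖ + ‖x (ψ n)‖ := norm_sub_le _ _
      _ ≤ 2 := by
          have h1 := hx1 (ψ (n + 1)); have h2 := hx1 (ψ n); linarith
  have hTy : ∀ n, ε ≤ ‖T (y n)‖ := by
    intro n
    have := hsep (ψ n) (ψ (n + 1)) (hψ (Nat.lt_succ_self n))
    simpa [hy, map_sub] using this
  have hJy0 : ∀ t, Tendsto (fun n => J (y n) t) atTop (𝓝 0) := by
    intro t
    obtain ⟨l, hl⟩ := hconv t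
    have h1 : Tendsto (fun n => J (x (ψ (n + 1))) t) atTop (𝓝 l) :=
      hl.comp (tendsto_add_atTop_nat 1)
    have heq : (fun n => J (y n) t) =
        fun n => J (x (ψ (n + 1))) t - J (x (ψ n)) t := by
      funext n
      simp [hy, map_sub]
    rw [heq]
    simpa using h1.sub hl
  have hT0 : (0 : ℝ) < ‖T‖ := by
    rcases (norm_nonneg T).lt_or_eq with h | h
    · exact h
    · exfalso
      have h2 : ε ≤ ‖T‖ * ‖y 0‖ := (hTy 0).trans (T.le_opNorm (y 0))
      rw [← h] at h2
      simp at h2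
      linarith
  have hylow : ∀ n, ε / ‖T‖ ≤ ‖y n‖ := by
    intro n
    rw [div_le_iff₀ hT0]
    calc ε ≤ ‖T (y n)‖ := hTy n
      _ ≤ ‖T‖ * ‖y n‖ := T.le_opNorm _
      _ = ‖y n‖ * ‖T‖ := mul_comm _ _
  have hJTy0 : ∀ t, Tendsto (fun n => J (T (y n)) t) atTop (𝓝 0) := by
    intro t
    obtain ⟨g, hg⟩ := C0Fix.extend_functional J
      ((C0Fix.ev t).comp (J.toContinuousLinearMap.comp T))
    have h1 := C0Fix.weak_null (fun n => J (y n)) 2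
      (fun n => by rw [J.norm_map]; exact hy2 n) hJy0 g
    have h2 : ∀ n, g (J (y n)) = J (T (y n)) t := by
      intro n
      rw [hg (y n)]
      rfl
    have heq : (fun n => g (J (y n))) = fun n => J (T (y n)) t := funext h2
    rw [← heq]
    exact h1
  set δ0 : ℝ := min (ε / ‖T‖) ε / 8 with hδ0def
  have hδ0pos : 0 < δ0 := by
    have := lt_min (div_pos hε hT0) hε
    rw [hδ0def]
    linarith
  have hδ0a : δ0 ≤ (ε / ‖T‖) / 8 := by
    rw [hδ0def]
    gcongr
    exact min_le_left _ _
  have hδ0b : δ0 ≤ ε / 8 := by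
    rw [hδ0def]
    gcongr
    exact min_le_right _ _
  obtain ⟨φ, N, hφm, hNm, hbl⟩ := C0Fix.exists_blocks (fun n => J (y n))
    (fun n => J (T (y n))) hJy0 hJTy0 (fun k => δ0 / 2 / 2 ^ k) (fun k => by positivity)
  have hδk : ∀ k, (δ0 / 2 / 2 ^ k : ℝ) ≤ δ0 := by
    intro k
    rw [div_div]
    apply div_le_self hδ0pos.le
    have h1 : (1 : ℝ) ≤ 2 ^ k := one_le_pow₀ one_le_two
    linarith
  have hD : ∀ s : Finset ℕ, ∑ k ∈ s, (δ0 / 2 / 2 ^ k : ℝ) ≤ δ0 := by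
    intro s
    calc ∑ k ∈ s, (δ0 / 2 / 2 ^ k : ℝ) ≤ ∑' k : ℕ, (δ0 / 2 / 2 ^ k : ℝ) :=
          Summable.sum_le_tsum s (fun k _ => by positivity) (summable_geometric_two' δ0)
      _ = δ0 := tsum_geometric_two' δ0
  set Y : ℕ → X := fun k => y (φ k) with hYdef
  have hYnorm : ∀ k, ‖J (Y k)‖ ≤ 2 := fun k => by rw [J.norm_map]; exact hy2 _
  -- witnesses
  have hwitY : ∀ k, ∃ t, (N k ≤ t ∧ t < N (k + 1)) ∧ ε / ‖T‖ - δ0 ≤ |J (Y k) t| := by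
    intro k
    obtain ⟨t, ht⟩ := C0Fix.exists_coord (J (Y k)) hδ0pos
    have hnorm : ε / ‖T‖ ≤ ‖J (Y k)‖ := by rw [J.norm_map]; exact hylow _
    have hval : ε / ‖T‖ - δ0 < |J (Y k) t| := by linarith
    refine ⟨t, ?_, hval.le⟩
    by_contra hcon
    have hoff : t < N k ∨ N (k + 1) ≤ t := by omega
    have hsmall := (hbl k t hoff).1
    have h8 : 8 * δ0 ≤ ε / ‖T‖ := by linarith
    have := hδk k
    simp only [hYdef] at hval
    linarith
  have hwitT : ∀ k, ∃ t, (N k ≤ t ∧ t < N (k + 1)) ∧ ε - δ0 ≤ |J (T (Y k)) t| := by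
    intro k
    obtain ⟨t, ht⟩ := C0Fix.exists_coord (J (T (Y k))) hδ0pos
    have hnorm : ε ≤ ‖J (T (Y k))‖ := by rw [J.norm_map]; exact hTy _
    have hval : ε - δ0 < |J (T (Y k)) t| := by linarith
    refine ⟨t, ?_, hval.le⟩
    by_contra hcon
    have hoff : t < N k ∨ N (k + 1) ≤ t := by omega
    have hsmall := (hbl k t hoff).2
    have h8 : 8 * δ0 ≤ ε := by linarith
    have := hδk k
    simp only [hYdef] at hval
    linarith
  -- upper estimate in X
  have hJsum : ∀ (a : ℕ → ℝ) (s : Finset ℕ),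
      J (∑ k ∈ s, a k • Y k) = ∑ k ∈ s, a k • J (Y k) := by
    intro a s
    rw [map_sum]
    simp [map_smul]
  have hupper : ∀ (a : ℕ → ℝ) (s : Finset ℕ) (B : ℝ), 0 ≤ B → (∀ k ∈ s, |a k| ≤ B) →
      ‖∑ k ∈ s, a k • Y k‖ ≤ B * (2 + δ0) := by
    intro a s B hB0 hB
    rw [← J.norm_map (∑ k ∈ s, a k • Y k), hJsum a s]
    exact C0Fix.upper_est (fun k => J (Y k)) N hNm (fun k => δ0 / 2 / 2 ^ k) 2 δ0 B hB0
      hYnorm (fun k t ht => (hbl k t ht).1) (fun k => by positivity) hD a s hB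
  -- summability
  have hsum : ∀ a : C₀(ℕ, ℝ), Summable (fun k => a k • Y k) := by
    intro a
    rw [summable_iff_vanishing_norm]
    intro r hr
    obtain ⟨n0, hn0⟩ := C0Fix.tail_small a (show (0 : ℝ) < r / (2 + δ0 + 1) by positivity)
    refine ⟨Finset.range n0, fun t hdisj => ?_⟩
    have hB : ∀ k ∈ t, |a k| ≤ r / (2 + δ0 + 1) := by
      intro k hk
      apply hn0
      by_contra h
      push_neg at h
      exact (Finset.disjoint_left.mp hdisj) hk (Finset.mem_range.mpr h)
    calc ‖∑ k ∈ t, a k • Y k‖ ≤ (r / (2 + δ0 + 1)) * (2 + δ0) :=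
          hupper a t _ (by positivity) hB
      _ < r := by
          rw [div_mul_eq_mul_div, div_lt_iff₀ (by positivity : (0:ℝ) < 2 + δ0 + 1)]
          nlinarith
  -- the operator L
  let L : C₀(ℕ, ℝ) →ₗ[ℝ] X :=
    { toFun := fun a => ∑' k, a k • Y k
      map_add' := fun a b => by
        rw [← Summable.tsum_add (hsum a) (hsum b)]
        congr 1
        funext k
        simp [add_smul]
      map_smul' := fun c a => by
        simp only [RingHom.id_apply]
        rw [← Summable.tsum_const_smul c (hsum a)]
        congr 1
        funext k
        simp [smul_smul] }
  have hLbound : ∀ a : C₀(ℕ, ℝ), ‖L a‖ ≤ (2 + δ0) * ‖a‖ := by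
    intro a
    refine C0Fix.norm_tsum_le (hsum a).hasSum ?_
    intro s
    have := hupper a s ‖a‖ (norm_nonneg a) (fun k _ => C0Fix.abs_apply_le_norm a k)
    linarith [this]
  let Lc : C₀(ℕ, ℝ) →L[ℝ] X := LinearMap.mkContinuous L (2 + δ0) hLbound
  have hLc : ∀ a, Lc a = ∑' k, a k • Y k := fun a => rfl
  have hpos1 : (0 : ℝ) < ε / ‖T‖ - 2 * δ0 := by
    have := div_pos hε hT0
    linarith
  have hpos2 : (0 : ℝ) < ε - 2 * δ0 := by linarith
  -- lower bound for Lc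
  have hts : ∀ a : C₀(ℕ, ℝ),
      Tendsto (fun n => ∑ k ∈ Finset.range n, a k • Y k) atTop (𝓝 (Lc a)) := by
    intro a
    exact (hsum a).hasSum.tendsto_sum_nat
  have hklow : ∀ (a : C₀(ℕ, ℝ)) (k₀ : ℕ),
      |a k₀| * (ε / ‖T‖ - δ0) - ‖a‖ * δ0 ≤ ‖Lc a‖ := by
    intro a k₀
    have hns : Tendsto (fun n => ‖∑ k ∈ Finset.range n, a k • Y k‖) atTop (𝓝 ‖Lc a‖) :=
      (continuous_norm.tendsto _).comp (hts a)
    refine ge_of_tendsto hns ?_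
    filter_upwards [eventually_gt_atTop k₀] with n hn
    obtain ⟨t₀, ht₀bl, ht₀⟩ := hwitY k₀
    have hle := C0Fix.lower_est (fun k => J (Y k)) N hNm (fun k => δ0 / 2 / 2 ^ k) δ0 ‖a‖
      (norm_nonneg a) (fun k t ht => (hbl k t ht).1) (fun k => by positivity) hD a
      (Finset.range n) (fun k _ => C0Fix.abs_apply_le_norm a k) k₀ (Finset.mem_range.mpr hn)
      t₀ ht₀bl.1 ht₀bl.2 (ε / ‖T‖ - δ0) ht₀
    have hJn : ‖∑ k ∈ Finset.range n, a k • J (Y k)‖ = ‖∑ k ∈ Finset.range n, a k • Y k‖ := by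
      rw [← hJsum a (Finset.range n), J.norm_map]
    rw [hJn] at hle
    exact hle
  have hLlow : ∀ a : C₀(ℕ, ℝ), (ε / ‖T‖ - 2 * δ0) * ‖a‖ ≤ ‖Lc a‖ := by
    intro a
    have hpos : (0 : ℝ) < ε / ‖T‖ - δ0 := by linarith
    have hall : ∀ t, |a t| ≤ (‖Lc a‖ + ‖a‖ * δ0) / (ε / ‖T‖ - δ0) := by
      intro t
      rw [le_div_iff₀ hpos]
      have := hklow a t
      linarith
    have h2 := (C0Fix.norm_le_iff (by positivity)).mpr hall
    rw [le_div_iff₀ hpos] at h2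
    nlinarith [norm_nonneg a]
  -- lower bound for T ∘ Lc
  have hTL : ∀ a : C₀(ℕ, ℝ), (ε - 2 * δ0) * ‖a‖ ≤ ‖T (Lc a)‖ := by
    intro a
    have hTts : Tendsto (fun n => T (∑ k ∈ Finset.range n, a k • Y k)) atTop (𝓝 (T (Lc a))) :=
      (T.continuous.tendsto _).comp (hts a)
    have hTsum : ∀ n, T (∑ k ∈ Finset.range n, a k • Y k) =
        ∑ k ∈ Finset.range n, a k • T (Y k) := by
      intro n
      rw [map_sum]
      simp [map_smul]
    have hklowT : ∀ k₀ : ℕ, |a k₀| * (ε - δ0) - ‖a‖ * δ0 ≤ ‖T (Lc a)‖ := by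
      intro k₀
      have hns : Tendsto (fun n => ‖T (∑ k ∈ Finset.range n, a k • Y k)‖) atTop
          (𝓝 ‖T (Lc a)‖) := (continuous_norm.tendsto _).comp hTts
      refine ge_of_tendsto hns ?_
      filter_upwards [eventually_gt_atTop k₀] with n hn
      obtain ⟨t₀, ht₀bl, ht₀⟩ := hwitT k₀
      have hle := C0Fix.lower_est (fun k => J (T (Y k))) N hNm (fun k => δ0 / 2 / 2 ^ k) δ0 ‖a‖
        (norm_nonneg a) (fun k t ht => (hbl k t ht).2) (fun k => by positivity) hD a
        (Finset.range n) (fun k _ => C0Fix.abs_apply_le_norm a k) k₀ (Finset.mem_range.mpr hn)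
        t₀ ht₀bl.1 ht₀bl.2 (ε - δ0) ht₀
      have hJn : ‖∑ k ∈ Finset.range n, a k • J (T (Y k))‖ =
          ‖T (∑ k ∈ Finset.range n, a k • Y k)‖ := by
        rw [hTsum n, ← J.norm_map (∑ k ∈ Finset.range n, a k • T (Y k)), map_sum]
        simp [map_smul]
      rw [hJn] at hle
      exact hle
    have hpos : (0 : ℝ) < ε - δ0 := by linarith
    have hall : ∀ t, |a t| ≤ (‖T (Lc a)‖ + ‖a‖ * δ0) / (ε - δ0) := by
      intro t
      rw [le_div_iff₀ hpos]
      have := hklowT t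
      linarith
    have h2 := (C0Fix.norm_le_iff (by positivity)).mpr hall
    rw [le_div_iff₀ hpos] at h2
    nlinarith [norm_nonneg a]
  -- injectivity and closed range
  have hinj : Function.Injective Lc := by
    intro a b hab
    have h1 := hLlow (a - b)
    rw [map_sub, hab, sub_self, norm_zero] at h1
    have h2 : ‖a - b‖ ≤ 0 := by nlinarith [norm_nonneg (a - b)]
    have h3 : a - b = 0 := by
      rw [← norm_le_zero_iff]
      exact h2
    rw [sub_eq_zero] at h3
    exact h3
  have hanti : AntilipschitzWith ((ε / ‖T‖ - 2 * δ0)⁻¹.toNNReal) Lc := by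
    apply Lc.antilipschitz_of_bound
    intro a
    rw [Real.coe_toNNReal _ (by positivity)]
    rw [inv_mul_eq_div, le_div_iff₀ hpos1]
    have := hLlow a
    linarith
  have hclr : IsClosed (Set.range Lc) := hanti.isClosed_range Lc.uniformContinuous
  refine ⟨LinearMap.range (Lc : C₀(ℕ, ℝ) →ₗ[ℝ] X), ?_, ?_, ?_⟩
  · rw [LinearMap.coe_range]
    exact hclr
  · haveI : CompleteSpace (LinearMap.range (Lc : C₀(ℕ, ℝ) →ₗ[ℝ] X)) := by
      have h : IsClosed ((LinearMap.range (Lc : C₀(ℕ, ℝ) →ₗ[ℝ] X) : Submodule ℝ X) : Set X) := by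
        rw [LinearMap.coe_range]
        exact hclr
      exact h.completeSpace_coe
    let Lco := Lc.codRestrict (LinearMap.range (Lc : C₀(ℕ, ℝ) →ₗ[ℝ] X)) (fun a => LinearMap.mem_range_self _ a)
    have hker : Lco.ker = ⊥ := by
      rw [Submodule.eq_bot_iff]
      intro a haker
      have h0 : Lc a = 0 := congrArg Subtype.val (LinearMap.mem_ker.mp haker)
      apply hinj
      rw [h0, map_zero]
    have hrange : Lco.range = ⊤ := by
      rw [LinearMap.range_eq_top]
      rintro ⟨z, hz⟩
      obtain ⟨a, ha⟩ := LinearMap.mem_range.mp hz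
      exact ⟨a, Subtype.ext ha⟩
    exact ⟨(ContinuousLinearEquiv.ofBijective Lco hker hrange).symm⟩
  · refine ⟨(ε - 2 * δ0) / (2 + δ0), by positivity, ?_⟩
    intro y' hy'
    obtain ⟨a, ha⟩ : ∃ a, Lc a = y' := LinearMap.mem_range.mp hy'
    have hb : ‖Lc a‖ ≤ (2 + δ0) * ‖a‖ := hLbound a
    have ht := hTL a
    rw [ha] at hb ht
    calc (ε - 2 * δ0) / (2 + δ0) * ‖y'‖
        ≤ (ε - 2 * δ0) / (2 + δ0) * ((2 + δ0) * ‖a‖) := by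
          apply mul_le_mul_of_nonneg_left _ (by positivity)
          exact hb
      _ = (ε - 2 * δ0) * ‖a‖ := by
          field_simp
      _ ≤ ‖T y'‖ := ht
end P5
end
end

section
/- Let X be a closed subspace of c₀ which fails the compact bounded approximation property. Then there does not exist a uniformly bounded net (T_α) of bounded linear operators on X** such that T_α(X**) ⊆ X for all α and T_α x → x in norm for all x ∈ X. In particular, X admits no M-approximate identity in X**. -/
open Filter ZeroAtInfty NormedSpace Metric Set

namespace NormedSpace

/-- The topological dual of a seminormed space `E` (old Mathlib `NormedSpace.Dual`). -/
abbrev Dual (𝕜 : Type*) [NontriviallyNormedField 𝕜] (E : Type*) [SeminormedAddCommGroup E]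
    [NormedSpace 𝕜 E] : Type _ := E →L[𝕜] 𝕜

noncomputable instance (𝕜 : Type*) [NontriviallyNormedField 𝕜] (E : Type*)
    [SeminormedAddCommGroup E] [NormedSpace 𝕜 E] : NormedSpace 𝕜 (Dual 𝕜 E) := inferInstance

noncomputable instance (𝕜 : Type*) [NontriviallyNormedField 𝕜] (E : Type*)
    [SeminormedAddCommGroup E] [NormedSpace 𝕜 E] : SeminormedAddCommGroup (Dual 𝕜 E) :=
  inferInstance

end NormedSpace

noncomputable section NoMaiAux

namespace NoMai

/-! ### Ultrafilter limits of bounded real sequences -/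

open scoped Classical in
/-- Limit of a real sequence along an ultrafilter (junk value if no limit exists). -/
def ulim (U : Ultrafilter ℕ) (g : ℕ → ℝ) : ℝ :=
  if h : ∃ L, Tendsto g (U : Filter ℕ) (nhds L) then h.choose else 0

theorem exists_ulim (U : Ultrafilter ℕ) {g : ℕ → ℝ} {C : ℝ} (hb : ∀ K, |g K| ≤ C) :
    ∃ L, Tendsto g (U : Filter ℕ) (nhds L) ∧ L ∈ Set.Icc (-C) C := by
  have hmem : ∀ K, g K ∈ Set.Icc (-C) C := fun K => abs_le.mp (hb K)
  have hle : (U.map g : Filter ℝ) ≤ Filter.principal (Set.Icc (-C) C) := by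
    rw [Filter.le_principal_iff]
    exact Filter.mem_map.mpr (Filter.Eventually.of_forall hmem)
  obtain ⟨L, hL, hconv⟩ := isCompact_Icc.ultrafilter_le_nhds (U.map g) hle
  exact ⟨L, hconv, hL⟩

theorem tendsto_ulim (U : Ultrafilter ℕ) {g : ℕ → ℝ} {C : ℝ} (hb : ∀ K, |g K| ≤ C) :
    Tendsto g (U : Filter ℕ) (nhds (ulim U g)) := by
  obtain ⟨L, hL, -⟩ := exists_ulim U hb
  classical
  rw [ulim, dif_pos ⟨L, hL⟩]
  exact (⟨L, hL⟩ : ∃ L, Tendsto g (U : Filter ℕ) (nhds L)).choose_spec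

theorem ulim_eq (U : Ultrafilter ℕ) {g : ℕ → ℝ} {L : ℝ}
    (h : Tendsto g (U : Filter ℕ) (nhds L)) : ulim U g = L := by
  classical
  rw [ulim, dif_pos ⟨L, h⟩]
  exact tendsto_nhds_unique (⟨L, h⟩ : ∃ L, Tendsto g (U : Filter ℕ) (nhds L)).choose_spec h

theorem abs_ulim_le (U : Ultrafilter ℕ) {g : ℕ → ℝ} {C : ℝ} (hb : ∀ K, |g K| ≤ C) :
    |ulim U g| ≤ C := by
  obtain ⟨L, hL, hmem⟩ := exists_ulim U hb
  rw [ulim_eq U hL]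
  exact abs_le.mpr hmem

/-! ### Rosenthal's lemma -/

/-- Partition an infinite subset of `ℕ` into countably many infinite pieces. -/
theorem exists_partition (I : Set ℕ) (hI : I.Infinite) :
    ∃ A : ℕ → Set ℕ, (∀ j, A j ⊆ I) ∧ (∀ j, (A j).Infinite) ∧
      (∀ j j', j ≠ j' → Disjoint (A j) (A j')) := by
  haveI : Infinite ↥I := hI.to_subtype
  obtain ⟨d⟩ := nonempty_denumerable ↥I
  let e : ↥I ≃ ℕ := Denumerable.eqv ↥I
  refine ⟨fun j => Set.range (fun p => (e.symm (Nat.pair j p) : ℕ)), ?_, ?_, ?_⟩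
  · rintro j n ⟨p, rfl⟩; exact (e.symm (Nat.pair j p)).2
  · intro j
    apply Set.infinite_range_of_injective
    intro p q h
    have := Subtype.val_injective h
    have := e.symm.injective this
    exact (Nat.pair_eq_pair.mp this).2
  · intro j j' hjj'
    rw [Set.disjoint_left]
    rintro n ⟨p, rfl⟩ ⟨q, hq⟩
    have := e.symm.injective (Subtype.val_injective hq)
    exact hjj' ((Nat.pair_eq_pair.mp this).1.symm)

theorem rosenthal_aux (μ : ℕ → Set ℕ → ℝ)
    (hmono : ∀ n {A B : Set ℕ}, A ⊆ B → μ n A ≤ μ n B)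
    (hsuper : ∀ n {A B : Set ℕ}, Disjoint A B → μ n A + μ n B ≤ μ n (A ∪ B))
    {ε : ℝ} (hε : 0 < ε) :
    ∀ (k : ℕ) (I : Set ℕ), I.Infinite → (∀ n ∈ I, μ n (I \ {n}) ≤ ε * k) →
      ∃ M ⊆ I, M.Infinite ∧ ∀ n ∈ M, μ n (M \ {n}) ≤ ε := by
  intro k
  induction k with
  | zero =>
    intro I hI h
    exact ⟨I, le_rfl, hI, fun n hn => (h n hn).trans (by simpa using hε.le)⟩
  | succ k ih =>
    intro I hI h
    obtain ⟨A, hAI, hAinf, hAdisj⟩ := exists_partition I hI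
    by_cases hcase : ∃ j, {n | n ∈ A j ∧ μ n (A j \ {n}) ≤ ε}.Infinite
    · obtain ⟨j, hj⟩ := hcase
      refine ⟨{n | n ∈ A j ∧ μ n (A j \ {n}) ≤ ε}, fun n hn => hAI j hn.1, hj, ?_⟩
      intro n hn
      exact le_trans (hmono n (diff_subset_diff_left (fun x hx => hx.1))) hn.2
    · push_neg at hcase
      -- in each block pick a witness with large inner mass
      have hpick : ∀ j, ∃ n, n ∈ A j ∧ ε < μ n (A j \ {n}) := by
        intro j
        have : ((A j) \ {n | n ∈ A j ∧ μ n (A j \ {n}) ≤ ε}).Infinite :=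
          (hAinf j).diff (hcase j)
        obtain ⟨n, hn⟩ := this.nonempty
        exact ⟨n, hn.1, by by_contra hcon; exact hn.2 ⟨hn.1, not_lt.mp hcon⟩⟩
      choose nn hnnA hnnμ using hpick
      have hnninj : Function.Injective nn := by
        intro j j' hjj'
        by_contra hne
        exact (Set.disjoint_left.mp (hAdisj j j' hne)) (hnnA j) (hjj' ▸ hnnA j')
      set I' : Set ℕ := Set.range nn with hI'
      have hI'I : I' ⊆ I := by rintro n ⟨j, rfl⟩; exact hAI j (hnnA j)
      have hI'inf : I'.Infinite := Set.infinite_range_of_injective hnninj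
      have hbound : ∀ n ∈ I', μ n (I' \ {n}) ≤ ε * k := by
        rintro n ⟨j, rfl⟩
        have hdisj : Disjoint (I' \ {nn j}) (A j \ {nn j}) := by
          rw [Set.disjoint_left]
          rintro x ⟨⟨j', rfl⟩, hx2⟩ ⟨hxA, -⟩
          have : j' ≠ j := by rintro rfl; exact hx2 rfl
          exact Set.disjoint_left.mp (hAdisj j' j this) (hnnA j') hxA
        have hsub : (I' \ {nn j}) ∪ (A j \ {nn j}) ⊆ I \ {nn j} := by
          rintro x (hx | hx)
          · exact ⟨hI'I hx.1, hx.2⟩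
          · exact ⟨hAI j hx.1, hx.2⟩
        have := hsuper (nn j) hdisj
        have h2 := hmono (nn j) hsub
        have h3 := h (nn j) (hI'I ⟨j, rfl⟩)
        have h4 := hnnμ j
        push_cast at h3 ⊢
        linarith
      obtain ⟨M, hMI', hMinf, hM⟩ := ih I' hI'inf hbound
      exact ⟨M, hMI'.trans hI'I, hMinf, hM⟩

/-- Rosenthal's lemma for superadditive, monotone, bounded set functions on `ℕ`. -/
theorem rosenthal (μ : ℕ → Set ℕ → ℝ)
    (hmono : ∀ n {A B : Set ℕ}, A ⊆ B → μ n A ≤ μ n B)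
    (hsuper : ∀ n {A B : Set ℕ}, Disjoint A B → μ n A + μ n B ≤ μ n (A ∪ B))
    {B : ℝ} (hbdd : ∀ n A, μ n A ≤ B) {ε : ℝ} (hε : 0 < ε) :
    ∃ M : Set ℕ, M.Infinite ∧ ∀ n ∈ M, μ n (M \ {n}) ≤ ε := by
  obtain ⟨M, -, hMinf, hM⟩ :=
    rosenthal_aux μ hmono hsuper hε ⌈B / ε⌉₊ Set.univ Set.infinite_univ
      (fun n _ => le_trans (hbdd n _) (by
        calc B = ε * (B / ε) := by field_simp
        _ ≤ ε * ⌈B / ε⌉₊ := by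
            apply mul_le_mul_of_nonneg_left (Nat.le_ceil _) hε.le))
  exact ⟨M, hMinf, hM⟩

end NoMai
section C0Basics

open Filter ZeroAtInfty NormedSpace Metric Set NoMai
open scoped Classical

namespace NoMai

theorem c0_abs_le (v : C₀(ℕ, ℝ)) (m : ℕ) : |v m| ≤ ‖v‖ := by
  rw [← ZeroAtInftyContinuousMap.norm_toBCF_eq_norm]
  simpa [Real.norm_eq_abs] using BoundedContinuousFunction.norm_coe_le_norm v.toBCF m

theorem c0_norm_le {v : C₀(ℕ, ℝ)} {C : ℝ} (hC : 0 ≤ C) (h : ∀ m, |v m| ≤ C) : ‖v‖ ≤ C := by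
  rw [← ZeroAtInftyContinuousMap.norm_toBCF_eq_norm]
  exact (BoundedContinuousFunction.norm_le hC).mpr (by simpa [Real.norm_eq_abs] using h)

theorem c0_tendsto (v : C₀(ℕ, ℝ)) : Tendsto (fun m => v m) atTop (nhds 0) := by
  have := ZeroAtInftyContinuousMapClass.zero_at_infty v
  rwa [cocompact_eq_atTop] at this

theorem c0_coe_sum {ι : Type*} (F : Finset ι) (f : ι → C₀(ℕ, ℝ)) (m : ℕ) :
    (∑ k ∈ F, f k) m = ∑ k ∈ F, f k m := by
  classical
  induction F using Finset.induction with
  | empty => simp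
  | insert _ _ h ih =>
    rw [Finset.sum_insert h, Finset.sum_insert h, ZeroAtInftyContinuousMap.coe_add, Pi.add_apply,
      ih]

/-- Evaluation at a point as a continuous linear functional on `C₀(ℕ, ℝ)`. -/
def evalCLM (m : ℕ) : C₀(ℕ, ℝ) →L[ℝ] ℝ :=
  LinearMap.mkContinuous
    { toFun := fun v => v m
      map_add' := fun v w => by simp
      map_smul' := fun c v => by simp }
    1 (fun v => by simpa [Real.norm_eq_abs] using c0_abs_le v m)

@[simp] theorem evalCLM_apply (m : ℕ) (v : C₀(ℕ, ℝ)) : evalCLM m v = v m := rfl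

variable {X : Type*} [NormedAddCommGroup X] [NormedSpace ℝ X]

theorem incl_norm (x : X) : ‖inclusionInDoubleDual ℝ X x‖ = ‖x‖ :=
  (inclusionInDoubleDualLi ℝ (E := X)).norm_map x

theorem incl_inj : Function.Injective (inclusionInDoubleDual ℝ X) :=
  (inclusionInDoubleDualLi ℝ (E := X)).injective

/-- Pull back an operator on the bidual whose range lies in (the image of) `X`. -/
def pull (T : Dual ℝ (Dual ℝ X) →L[ℝ] Dual ℝ (Dual ℝ X))
    (hT : ∀ y, T y ∈ Set.range (inclusionInDoubleDual ℝ X)) : X →L[ℝ] X :=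
  LinearMap.mkContinuous
    { toFun := fun x => (Set.mem_range.mp (hT (inclusionInDoubleDual ℝ X x))).choose
      map_add' := fun x y => by
        apply incl_inj
        rw [(Set.mem_range.mp (hT (inclusionInDoubleDual ℝ X (x + y)))).choose_spec,
          map_add (inclusionInDoubleDual ℝ X) (Set.mem_range.mp (hT (inclusionInDoubleDual ℝ X x))).choose
            (Set.mem_range.mp (hT (inclusionInDoubleDual ℝ X y))).choose,
          (Set.mem_range.mp (hT (inclusionInDoubleDual ℝ X x))).choose_spec,
          (Set.mem_range.mp (hT (inclusionInDoubleDual ℝ X y))).choose_spec,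
          map_add, map_add]
      map_smul' := fun c x => by
        apply incl_inj
        rw [RingHom.id_apply,
          (Set.mem_range.mp (hT (inclusionInDoubleDual ℝ X (c • x)))).choose_spec,
          map_smul (inclusionInDoubleDual ℝ X) c (Set.mem_range.mp (hT (inclusionInDoubleDual ℝ X x))).choose,
          (Set.mem_range.mp (hT (inclusionInDoubleDual ℝ X x))).choose_spec,
          map_smul, map_smul] }
    ‖T‖ (fun x => by
      have hspec := (Set.mem_range.mp (hT (inclusionInDoubleDual ℝ X x))).choose_spec
      calc ‖(Set.mem_range.mp (hT (inclusionInDoubleDual ℝ X x))).choose‖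
          = ‖inclusionInDoubleDual ℝ X
              (Set.mem_range.mp (hT (inclusionInDoubleDual ℝ X x))).choose‖ :=
            (incl_norm _).symm
        _ = ‖T (inclusionInDoubleDual ℝ X x)‖ := by rw [hspec]
        _ ≤ ‖T‖ * ‖inclusionInDoubleDual ℝ X x‖ := T.le_opNorm _
        _ = ‖T‖ * ‖x‖ := by rw [incl_norm])

theorem pull_spec (T : Dual ℝ (Dual ℝ X) →L[ℝ] Dual ℝ (Dual ℝ X))
    (hT : ∀ y, T y ∈ Set.range (inclusionInDoubleDual ℝ X)) (x : X) :
    inclusionInDoubleDual ℝ X (pull T hT x) = T (inclusionInDoubleDual ℝ X x) :=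
  (Set.mem_range.mp (hT (inclusionInDoubleDual ℝ X x))).choose_spec

theorem pull_norm_le (T : Dual ℝ (Dual ℝ X) →L[ℝ] Dual ℝ (Dual ℝ X))
    (hT : ∀ y, T y ∈ Set.range (inclusionInDoubleDual ℝ X)) : ‖pull T hT‖ ≤ ‖T‖ :=
  LinearMap.mkContinuous_norm_le _ (norm_nonneg T) _

end NoMai

end C0Basics
section Humps

open Filter ZeroAtInfty NormedSpace Metric Set NoMai
open scoped Classical

namespace NoMai

theorem abs_eventually_le {g : ℕ → ℝ} (h : Tendsto g atTop (nhds 0)) {c : ℝ} (hc : 0 < c) :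
    ∀ᶠ k in atTop, |g k| ≤ c := by
  have hmem : Set.Icc (-c) c ∈ nhds (0 : ℝ) := Icc_mem_nhds (by linarith) hc
  filter_upwards [h hmem] with k hk
  exact abs_le.mpr hk

theorem c0_tail (v : C₀(ℕ, ℝ)) {c : ℝ} (hc : 0 < c) : ∃ b, ∀ m, b ≤ m → |v m| ≤ c := by
  have := abs_eventually_le (c0_tendsto v) hc
  rwa [Filter.eventually_atTop] at this

variable {X : Type*} [NormedAddCommGroup X] [NormedSpace ℝ X]

/-- Extraction of a gliding-hump subsequence from a coordinatewise null sequence. -/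
theorem exists_humps (J : X →ₗᵢ[ℝ] C₀(ℕ, ℝ)) (d : ℕ → X)
    (hpt : ∀ m, Tendsto (fun k => (J (d k)) m) atTop (nhds 0)) :
    ∃ σ N : ℕ → ℕ, StrictMono σ ∧ Monotone N ∧
      ∀ k m, (m < N k ∨ N (k + 1) ≤ m) → |(J (d (σ k))) m| ≤ (1 / 2) ^ k := by
  have hstep : ∀ k j b : ℕ, ∃ j' b', j < j' ∧ b ≤ b' ∧
      ∀ m, (m < b ∨ b' ≤ m) → |(J (d j')) m| ≤ (1 / 2) ^ k := by
    intro k j b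
    have hpos : (0 : ℝ) < (1 / 2) ^ k := by positivity
    have h1 : ∀ᶠ j' in atTop, ∀ m ∈ Finset.range b, |(J (d j')) m| ≤ (1 / 2) ^ k :=
      (Finset.range b).eventually_all.mpr fun m _ => abs_eventually_le (hpt m) hpos
    obtain ⟨j', hj'1, hj'2⟩ := ((eventually_gt_atTop j).and h1).exists
    obtain ⟨b0, hb0⟩ := c0_tail (J (d j')) hpos
    refine ⟨j', max b b0, hj'1, le_max_left _ _, ?_⟩
    rintro m (hm | hm)
    · exact hj'2 m (Finset.mem_range.mpr hm)
    · exact hb0 m (le_trans (le_max_right _ _) hm)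
  choose F1 F2 hF1 hF2 hF3 using hstep
  set g : ℕ → ℕ × ℕ :=
    fun k => Nat.rec (F1 0 0 0, F2 0 0 0) (fun k ih => (F1 (k + 1) ih.1 ih.2,
      F2 (k + 1) ih.1 ih.2)) k with hg
  refine ⟨fun k => (g k).1, fun k => Nat.rec 0 (fun k _ => (g k).2) k, ?_, ?_, ?_⟩
  · apply strictMono_nat_of_lt_succ
    intro k
    exact hF1 (k + 1) (g k).1 (g k).2
  · apply monotone_nat_of_le_succ
    intro k
    cases k with
    | zero => exact Nat.zero_le _
    | succ k => exact hF2 (k + 1) (g k).1 (g k).2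
  · intro k m hm
    cases k with
    | zero =>
      exact hF3 0 0 0 m (by rcases hm with h | h; exacts [Or.inl h, Or.inr h])
    | succ k =>
      exact hF3 (k + 1) (g k).1 (g k).2 m hm

/-- The fundamental estimate for signed sums of a gliding-hump sequence. -/
theorem hump_sum_bound (J : X →ₗᵢ[ℝ] C₀(ℕ, ℝ)) (e : ℕ → X) (N : ℕ → ℕ) (hN : Monotone N)
    (hsml : ∀ k m, (m < N k ∨ N (k + 1) ≤ m) → |(J (e k)) m| ≤ (1 / 2) ^ k)
    (hnrm : ∀ k, ‖e k‖ ≤ 2) (c : ℕ → ℝ) (hc : ∀ k, |c k| ≤ 1) (F : Finset ℕ) :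
    ‖∑ k ∈ F, c k • e k‖ ≤ 4 := by
  rw [← J.norm_map, map_sum]
  simp_rw [map_smul]
  apply c0_norm_le (by norm_num)
  intro m
  rw [c0_coe_sum]
  simp_rw [ZeroAtInftyContinuousMap.coe_smul, Pi.smul_apply, smul_eq_mul]
  set F1 := F.filter (fun k => N k ≤ m ∧ m < N (k + 1)) with hF1
  have hsplit : F = F1 ∪ (F \ F1) := by
    rw [Finset.union_sdiff_of_subset (Finset.filter_subset _ F)]
  calc |∑ k ∈ F, c k * (J (e k)) m|
      ≤ ∑ k ∈ F, |c k * (J (e k)) m| := Finset.abs_sum_le_sum_abs _ _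
    _ = ∑ k ∈ F1, |c k * (J (e k)) m| + ∑ k ∈ F \ F1, |c k * (J (e k)) m| := by
        rw [hsplit, Finset.sum_union (Finset.disjoint_sdiff)]
        rw [← hsplit]
    _ ≤ 2 + 2 := by
        gcongr
        · -- the F1 part : at most one index
          rcases Finset.eq_empty_or_nonempty F1 with h | ⟨k0, hk0⟩
          · simp [h]
          · have hsub : F1 ⊆ {k0} := by
              intro k hk
              simp only [Finset.mem_singleton]
              by_contra hne
              rcases Nat.lt_or_ge k k0 with hlt | hge
              · have h1 := (Finset.mem_filter.mp hk).2.2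
                have h2 := (Finset.mem_filter.mp hk0).2.1
                have : N (k + 1) ≤ N k0 := hN hlt
                omega
              · have hlt : k0 < k := by omega
                have h1 := (Finset.mem_filter.mp hk0).2.2
                have h2 := (Finset.mem_filter.mp hk).2.1
                have : N (k0 + 1) ≤ N k := hN (by omega)
                omega
            calc ∑ k ∈ F1, |c k * (J (e k)) m| ≤ ∑ k ∈ {k0}, |c k * (J (e k)) m| := by
                  exact Finset.sum_le_sum_of_subset_of_nonneg hsub
                    (fun _ _ _ => abs_nonneg _)
              _ ≤ 2 := by
                  rw [Finset.sum_singleton, abs_mul]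
                  have h1 : |(J (e k0)) m| ≤ 2 := by
                    calc |(J (e k0)) m| ≤ ‖J (e k0)‖ := c0_abs_le _ _
                      _ = ‖e k0‖ := J.norm_map _
                      _ ≤ 2 := hnrm k0
                  calc |c k0| * |(J (e k0)) m| ≤ 1 * 2 := by
                        apply mul_le_mul (hc k0) h1 (abs_nonneg _) zero_le_one
                    _ = 2 := by ring
        · -- the small part
          calc ∑ k ∈ F \ F1, |c k * (J (e k)) m| ≤ ∑ k ∈ F \ F1, (1 / 2) ^ k := by
                apply Finset.sum_le_sum
                intro k hk
                have hk' : ¬(N k ≤ m ∧ m < N (k + 1)) := by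
                  intro hcon
                  exact (Finset.mem_sdiff.mp hk).2
                    (Finset.mem_filter.mpr ⟨(Finset.mem_sdiff.mp hk).1, hcon⟩)
                have : m < N k ∨ N (k + 1) ≤ m := by omega
                calc |c k * (J (e k)) m| = |c k| * |(J (e k)) m| := abs_mul _ _
                  _ ≤ 1 * ((1 / 2) ^ k) := mul_le_mul (hc k) (hsml k m this) (abs_nonneg _)
                      zero_le_one
                  _ = (1 / 2) ^ k := one_mul _
            _ ≤ ∑ k ∈ Finset.range ((F \ F1).sup id + 1), (1 / 2 : ℝ) ^ k := by
                apply Finset.sum_le_sum_of_subset_of_nonneg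
                · intro k hk
                  exact Finset.mem_range.mpr (Nat.lt_succ_of_le (Finset.le_sup (f := id) hk))
                · intro k _ _
                  positivity
            _ ≤ 2 := sum_geometric_two_le _
    _ ≤ 4 := by norm_num

end NoMai

end Humps
section WeakNull

open Filter ZeroAtInfty NormedSpace Metric Set

namespace NoMai

variable {X : Type*} [NormedAddCommGroup X] [NormedSpace ℝ X]

theorem weak_null (e : ℕ → X)
    (hsum : ∀ c : ℕ → ℝ, (∀ k, |c k| ≤ 1) → ∀ F : Finset ℕ, ‖∑ k ∈ F, c k • e k‖ ≤ 4)
    (f : X →L[ℝ] ℝ) : Tendsto (fun k => f (e k)) atTop (nhds 0) := by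
  classical
  by_contra hcon
  rw [Metric.tendsto_atTop] at hcon
  push_neg at hcon
  obtain ⟨ε, hε, hfreq⟩ := hcon
  have hA : {k | ε ≤ |f (e k)|}.Infinite := by
    intro hfin
    obtain ⟨b, hb⟩ := hfin.bddAbove
    obtain ⟨k, hk1, hk2⟩ := hfreq (b + 1)
    have : k ∈ {k | ε ≤ |f (e k)|} := by
      simpa [Real.dist_eq] using hk2
    have := hb this
    omega
  set n : ℕ := ⌊4 * ‖f‖ / ε⌋₊ + 1 with hn
  obtain ⟨F, hFsub, hFcard⟩ := hA.exists_subset_card_eq n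
  set c : ℕ → ℝ := fun k => if f (e k) < 0 then (-1 : ℝ) else 1 with hc
  have hc1 : ∀ k, |c k| ≤ 1 := by
    intro k
    by_cases h : f (e k) < 0 <;> simp [hc, h]
  have hkey : ∀ k, c k * f (e k) = |f (e k)| := by
    intro k
    by_cases h : f (e k) < 0
    · simp only [hc, if_pos h]; rw [abs_of_neg h]; ring
    · simp only [hc, if_neg h]; rw [abs_of_nonneg (not_lt.mp h)]; ring
  have hcalc : (n : ℝ) * ε ≤ 4 * ‖f‖ := by
    calc (n : ℝ) * ε = ∑ _k ∈ F, ε := by rw [Finset.sum_const, hFcard, nsmul_eq_mul]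
      _ ≤ ∑ k ∈ F, |f (e k)| := Finset.sum_le_sum (fun k hk => hFsub hk)
      _ = ∑ k ∈ F, c k * f (e k) := by simp_rw [hkey]
      _ = f (∑ k ∈ F, c k • e k) := by rw [map_sum]; simp_rw [map_smul, smul_eq_mul]
      _ ≤ |f (∑ k ∈ F, c k • e k)| := le_abs_self _
      _ ≤ ‖f‖ * ‖∑ k ∈ F, c k • e k‖ := by
          simpa [Real.norm_eq_abs] using f.le_opNorm (∑ k ∈ F, c k • e k)
      _ ≤ ‖f‖ * 4 := by
          apply mul_le_mul_of_nonneg_left (hsum c hc1 F) (norm_nonneg f)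
      _ = 4 * ‖f‖ := by ring
  have hgt : 4 * ‖f‖ < (n : ℝ) * ε := by
    have := Nat.lt_floor_add_one (4 * ‖f‖ / ε)
    rw [div_lt_iff₀ hε] at this
    calc 4 * ‖f‖ < (↑⌊4 * ‖f‖ / ε⌋₊ + 1) * ε := this
      _ = (n : ℝ) * ε := by push_cast [hn]; ring
  linarith

/-- A weak-star limit of a bounded sequence in `X`, as an element of the bidual. -/
noncomputable def wstar (U : Ultrafilter ℕ) (Q : ℕ → X) (C : ℝ) (hC : 0 ≤ C)
    (hQ : ∀ K, ‖Q K‖ ≤ C) : Dual ℝ (Dual ℝ X) :=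
  have hb : ∀ (f : Dual ℝ X) K, |f (Q K)| ≤ ‖f‖ * C := fun f K => by
    calc |f (Q K)| ≤ ‖f‖ * ‖Q K‖ := by simpa [Real.norm_eq_abs] using f.le_opNorm (Q K)
      _ ≤ ‖f‖ * C := mul_le_mul_of_nonneg_left (hQ K) (norm_nonneg f)
  LinearMap.mkContinuous
    { toFun := fun f => ulim U (fun K => f (Q K))
      map_add' := fun f g => by
        apply ulim_eq U
        have h1 := tendsto_ulim U (hb f)
        have h2 := tendsto_ulim U (hb g)
        simpa using h1.add h2
      map_smul' := fun c f => by
        apply ulim_eq U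
        have h1 := tendsto_ulim U (hb f)
        simpa using h1.const_mul c }
    C (fun f => by
      show ‖ulim U (fun K => f (Q K))‖ ≤ C * ‖f‖
      have := abs_ulim_le U (hb f)
      calc ‖ulim U fun K => f (Q K)‖ = |ulim U fun K => f (Q K)| := Real.norm_eq_abs _
        _ ≤ ‖f‖ * C := this
        _ = C * ‖f‖ := mul_comm _ _)

theorem wstar_apply (U : Ultrafilter ℕ) (Q : ℕ → X) (C : ℝ) (hC : 0 ≤ C)
    (hQ : ∀ K, ‖Q K‖ ≤ C) (f : Dual ℝ X) :
    wstar U Q C hC hQ f = ulim U (fun K => f (Q K)) := rfl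

theorem wstar_norm_le (U : Ultrafilter ℕ) (Q : ℕ → X) (C : ℝ) (hC : 0 ≤ C)
    (hQ : ∀ K, ‖Q K‖ ≤ C) : ‖wstar U Q C hC hQ‖ ≤ C := by
  apply ContinuousLinearMap.opNorm_le_bound _ hC
  intro f
  rw [wstar_apply]
  have hb : ∀ K, |f (Q K)| ≤ ‖f‖ * C := fun K => by
    calc |f (Q K)| ≤ ‖f‖ * ‖Q K‖ := by simpa [Real.norm_eq_abs] using f.le_opNorm (Q K)
      _ ≤ ‖f‖ * C := mul_le_mul_of_nonneg_left (hQ K) (norm_nonneg f)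
  calc ‖ulim U fun K => f (Q K)‖ = |ulim U fun K => f (Q K)| := Real.norm_eq_abs _
    _ ≤ ‖f‖ * C := abs_ulim_le U hb
    _ = C * ‖f‖ := mul_comm _ _

end NoMai

end WeakNull

section PosPart

namespace NoMai

/-- The "positive part" of a set function, via suprema over subsets. -/
noncomputable def pp (ν : Set ℕ → ℝ) (A : Set ℕ) : ℝ :=
  sSup (ν '' {B | B ⊆ A})

variable {ν : Set ℕ → ℝ} {C : ℝ}

theorem pp_bddAbove (hbdd : ∀ B, ν B ≤ C) (A : Set ℕ) : BddAbove (ν '' {B | B ⊆ A}) := by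
  refine ⟨C, ?_⟩
  rintro x ⟨B, -, rfl⟩
  exact hbdd B

theorem pp_nonempty (A : Set ℕ) : (ν '' {B | B ⊆ A}).Nonempty :=
  ⟨ν ∅, ⟨∅, Set.empty_subset A, rfl⟩⟩

theorem le_pp (hbdd : ∀ B, ν B ≤ C) {A B : Set ℕ} (h : B ⊆ A) : ν B ≤ pp ν A :=
  le_csSup (pp_bddAbove hbdd A) ⟨B, h, rfl⟩

theorem pp_le (hbdd : ∀ B, ν B ≤ C) (A : Set ℕ) : pp ν A ≤ C :=
  csSup_le (pp_nonempty A) (by rintro x ⟨B, -, rfl⟩; exact hbdd B)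

theorem pp_nonneg (hbdd : ∀ B, ν B ≤ C) (h0 : ν ∅ = 0) (A : Set ℕ) : 0 ≤ pp ν A :=
  h0 ▸ le_pp hbdd (Set.empty_subset A)

theorem pp_mono (hbdd : ∀ B, ν B ≤ C) {A A' : Set ℕ} (h : A ⊆ A') : pp ν A ≤ pp ν A' :=
  csSup_le_csSup (pp_bddAbove hbdd A') (pp_nonempty A)
    (by rintro x ⟨B, hB, rfl⟩; exact ⟨B, hB.trans h, rfl⟩)

theorem pp_super (hbdd : ∀ B, ν B ≤ C)
    (hadd : ∀ B B', Disjoint B B' → ν (B ∪ B') = ν B + ν B')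
    {A A' : Set ℕ} (hAA' : Disjoint A A') : pp ν A + pp ν A' ≤ pp ν (A ∪ A') := by
  have key : ∀ x ∈ ν '' {B | B ⊆ A}, ∀ y ∈ ν '' {B | B ⊆ A'}, x + y ≤ pp ν (A ∪ A') := by
    rintro x ⟨B, hB, rfl⟩ y ⟨B', hB', rfl⟩
    have hd : Disjoint B B' := Set.disjoint_of_subset hB hB' hAA'
    rw [← hadd B B' hd]
    exact le_pp hbdd (Set.union_subset_union hB hB')
  have step1 : ∀ y ∈ ν '' {B | B ⊆ A'}, pp ν A ≤ pp ν (A ∪ A') - y := by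
    intro y hy
    apply csSup_le (pp_nonempty A)
    intro x hx
    linarith [key x hx y hy]
  have step2 : pp ν A' ≤ pp ν (A ∪ A') - pp ν A := by
    apply csSup_le (pp_nonempty A')
    intro y hy
    linarith [step1 y hy]
  linarith

end NoMai

end PosPart
section MainLemma

open Filter ZeroAtInfty NormedSpace Metric Set
open scoped Classical

namespace NoMai

variable {X : Type*} [NormedAddCommGroup X] [NormedSpace ℝ X] [CompleteSpace X]

theorem isCompactOperator_pull (J : X →ₗᵢ[ℝ] C₀(ℕ, ℝ))
    (T : Dual ℝ (Dual ℝ X) →L[ℝ] Dual ℝ (Dual ℝ X))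
    (hT : ∀ y, T y ∈ Set.range (inclusionInDoubleDual ℝ X)) :
    IsCompactOperator (pull T hT) := by
  set S : X →L[ℝ] X := pull T hT with hSdef
  have hS : ∀ x, inclusionInDoubleDual ℝ X (S x) = T (inclusionInDoubleDual ℝ X x) :=
    pull_spec T hT
  by_contra hnc
  -- Step 1: the image of the unit ball is not totally bounded.
  have hTB : ¬ TotallyBounded (S '' closedBall 0 1) := by
    intro htb
    apply hnc
    refine ⟨closure (S '' closedBall 0 1), ?_, ?_⟩
    · exact isCompact_iff_totallyBounded_isComplete.mpr
        ⟨htb.closure, isClosed_closure.isComplete⟩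
    · exact Filter.mem_of_superset (Metric.closedBall_mem_nhds (0 : X) one_pos)
        (fun x hx => subset_closure ⟨x, hx, rfl⟩)
  rw [Metric.totallyBounded_iff] at hTB
  push_neg at hTB
  obtain ⟨δ, hδ, hsep⟩ := hTB
  -- Step 2: a δ-separated sequence in the image of the ball.
  have hfin : ∀ s : Finset X, (∀ x ∈ s, x ∈ S '' closedBall 0 1) →
      ∃ y, (y ∈ S '' closedBall 0 1) ∧ ∀ x ∈ s, δ ≤ dist x y := by
    intro s _
    have hns := hsep (↑s : Set X) s.finite_toSet
    rw [Set.not_subset] at hns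
    obtain ⟨w, hw1, hw2⟩ := hns
    refine ⟨w, hw1, fun v hv => ?_⟩
    by_contra hcon
    push_neg at hcon
    exact hw2 (Set.mem_biUnion (Finset.mem_coe.mpr hv)
      (by rw [Metric.mem_ball, dist_comm]; exact hcon))
  obtain ⟨y, hyP, hysep⟩ := exists_seq_of_forall_finset_exists _ _ hfin
  have hyP' : ∀ n, ∃ u, u ∈ closedBall (0 : X) 1 ∧ S u = y n := by
    intro n
    simpa [Set.mem_image] using hyP n
  choose x hxball hxy using hyP'
  have hxnorm : ∀ n, ‖x n‖ ≤ 1 := by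
    intro n
    simpa [Metric.mem_closedBall, dist_zero_right] using hxball n
  -- Step 3: a coordinatewise convergent subsequence.
  have hcpt : IsCompact (Set.pi Set.univ (fun _ : ℕ => Set.Icc (-1 : ℝ) 1)) :=
    isCompact_univ_pi (fun _ => isCompact_Icc)
  have hmem : ∀ n, (fun m => (J (x n)) m) ∈ Set.pi Set.univ (fun _ : ℕ => Set.Icc (-1 : ℝ) 1) := by
    intro n
    intro m _
    have : |(J (x n)) m| ≤ 1 := by
      calc |(J (x n)) m| ≤ ‖J (x n)‖ := c0_abs_le _ _
        _ = ‖x n‖ := J.norm_map _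
        _ ≤ 1 := hxnorm n
    exact abs_le.mp this
  obtain ⟨a, -, φ, hφ, hconv⟩ := hcpt.tendsto_subseq hmem
  have hptc : ∀ m, Tendsto (fun n => (J (x (φ n))) m) atTop (nhds (a m)) := by
    intro m
    have := tendsto_pi_nhds.mp hconv m
    simpa using this
  -- Step 4: differences.
  set d : ℕ → X := fun k => x (φ (k + 1)) - x (φ k) with hd
  have hd_norm : ∀ k, ‖d k‖ ≤ 2 := by
    intro k
    calc ‖x (φ (k + 1)) - x (φ k)‖ ≤ ‖x (φ (k + 1))‖ + ‖x (φ k)‖ := norm_sub_le _ _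
      _ ≤ 1 + 1 := add_le_add (hxnorm _) (hxnorm _)
      _ = 2 := by norm_num
  have hd_sep : ∀ k, δ ≤ ‖S (d k)‖ := by
    intro k
    have h1 : S (d k) = y (φ (k + 1)) - y (φ k) := by
      rw [hd]; simp only [map_sub, hxy]
    have h2 : δ ≤ dist (y (φ k)) (y (φ (k + 1))) := hysep _ _ (hφ (Nat.lt_succ_self k))
    rw [dist_eq_norm] at h2
    rw [h1, ← norm_neg]
    simpa using h2
  have hd_pt : ∀ m, Tendsto (fun k => (J (d k)) m) atTop (nhds 0) := by
    intro m
    have h1 : Tendsto (fun k => (J (x (φ (k + 1)))) m) atTop (nhds (a m)) :=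
      (hptc m).comp (tendsto_add_atTop_nat 1)
    have h2 := (h1.sub (hptc m))
    rw [sub_self] at h2
    convert h2 using 2 with k
    rw [hd]
    simp [map_sub]
  -- Step 5: gliding humps.
  obtain ⟨σ, N, hσ, hN, hsml⟩ := exists_humps J d hd_pt
  set e : ℕ → X := fun k => d (σ k) with he
  have he_norm : ∀ k, ‖e k‖ ≤ 2 := fun k => hd_norm (σ k)
  have he_sep : ∀ k, δ ≤ ‖S (e k)‖ := fun k => hd_sep (σ k)
  have hsum : ∀ c : ℕ → ℝ, (∀ k, |c k| ≤ 1) → ∀ F : Finset ℕ, ‖∑ k ∈ F, c k • e k‖ ≤ 4 :=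
    fun c hc F => hump_sum_bound J e N hN (fun k m hm => hsml k m hm) he_norm c hc F
  have hweak : ∀ f : X →L[ℝ] ℝ, Tendsto (fun k => f (e k)) atTop (nhds 0) :=
    weak_null e hsum
  -- Step 6: coordinates of large modulus, escaping to infinity.
  have hm0 : ∀ k, ∃ m, δ / 2 ≤ |(J (S (e k))) m| := by
    intro k
    by_contra hcon
    push_neg at hcon
    have : ‖S (e k)‖ ≤ δ / 2 := by
      rw [← J.norm_map]
      exact c0_norm_le (by linarith) (fun m => (hcon m).le)
    linarith [he_sep k]
  choose m0 hm0' using hm0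
  have hcoord : ∀ m : ℕ, Tendsto (fun k => (J (S (e k))) m) atTop (nhds 0) := by
    intro m
    have := hweak ((evalCLM m).comp ((J.toContinuousLinearMap).comp S))
    simpa using this
  have hρstep : ∀ M : ℕ, ∃ j, M < j ∧ ∀ m ≤ M, |(J (S (e j))) m| < δ / 2 := by
    intro M
    have hpos : (0 : ℝ) < δ / 4 := by linarith
    have h1 : ∀ᶠ j in atTop, ∀ m ∈ Finset.range (M + 1), |(J (S (e j))) m| ≤ δ / 4 :=
      (Finset.range (M + 1)).eventually_all.mpr
        (fun m _ => abs_eventually_le (hcoord m) hpos)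
    obtain ⟨j, hj1, hj2⟩ := ((eventually_gt_atTop M).and h1).exists
    refine ⟨j, hj1, fun m hm => ?_⟩
    have := hj2 m (Finset.mem_range.mpr (Nat.lt_succ_of_le hm))
    linarith
  choose R hR1 hR2 using hρstep
  set ρ : ℕ → ℕ := fun k => Nat.rec (R 0) (fun _ ih => R ih) k with hρdef
  have hρsucc : ∀ k, ρ (k + 1) = R (ρ k) := fun k => rfl
  have hρmono : StrictMono ρ := strictMono_nat_of_lt_succ (fun k => hR1 (ρ k))
  have hρk : ∀ k, k < ρ k := by
    intro k
    induction k with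
    | zero => exact hR1 0
    | succ k ih =>
      have h1 := hR1 (ρ k)
      rw [hρsucc]
      omega
  have hρprop : ∀ k m, m ≤ k → |(J (S (e (ρ k)))) m| < δ / 2 := by
    intro k m hm
    cases k with
    | zero => exact hR2 0 m hm
    | succ k =>
      rw [hρsucc]
      exact hR2 (ρ k) m (le_trans hm (hρk k))
  set ee : ℕ → X := fun i => e (ρ i) with hee
  set mb : ℕ → ℕ := fun i => m0 (ρ i) with hmbdef
  have hmb : ∀ i, i < mb i := by
    intro i
    by_contra hcon
    push_neg at hcon
    exact absurd (hm0' (ρ i)) (not_le.mpr (hρprop i (m0 (ρ i)) hcon))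
  -- transfer the sum bound to the subsequence
  have hsum' : ∀ c : ℕ → ℝ, (∀ i, |c i| ≤ 1) → ∀ F : Finset ℕ, ‖∑ i ∈ F, c i • ee i‖ ≤ 4 := by
    intro c hc F
    have hinj : ∀ i ∈ F, ∀ j ∈ F, ρ i = ρ j → i = j := fun i _ j _ h => hρmono.injective h
    set c' : ℕ → ℝ := fun k => if h : ∃ i, ρ i = k then c h.choose else 0 with hc'
    have hc'1 : ∀ k, |c' k| ≤ 1 := by
      intro k
      by_cases h : ∃ i, ρ i = k
      · simp only [hc', dif_pos h]; exact hc _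
      · simp [hc', dif_neg h]
    have hc'ρ : ∀ i, c' (ρ i) = c i := by
      intro i
      have h : ∃ i', ρ i' = ρ i := ⟨i, rfl⟩
      simp only [hc', dif_pos h]
      congr 1
      exact hρmono.injective h.choose_spec
    have heq : ∑ i ∈ F, c i • ee i = ∑ k ∈ F.image ρ, c' k • e k := by
      rw [Finset.sum_image hinj]
      apply Finset.sum_congr rfl
      intro i _
      rw [hc'ρ]
    rw [heq]
    exact hsum c' hc'1 _
  -- the ultrafilter and the weak-star sums
  obtain ⟨U, hU⟩ := Filter.exists_ultrafilter_le (atTop : Filter ℕ)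
  set P : Set ℕ → ℕ → X :=
    fun A K => ∑ k ∈ Finset.range K, Set.indicator A (fun _ => (1 : ℝ)) k • ee k with hP
  have hPbound : ∀ A K, ‖P A K‖ ≤ 4 := by
    intro A K
    apply hsum'
    intro k
    by_cases h : k ∈ A <;> simp [Set.indicator_apply, h]
  set z : Set ℕ → Dual ℝ (Dual ℝ X) :=
    fun A => wstar U (P A) 4 (by norm_num) (hPbound A) with hzdef
  have hz_apply : ∀ A f, z A f = ulim U (fun K => f (P A K)) := fun A f => rfl
  have hz_norm : ∀ A, ‖z A‖ ≤ 4 := fun A => wstar_norm_le U (P A) 4 (by norm_num) (hPbound A)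
  have hfb : ∀ (A : Set ℕ) (f : Dual ℝ X) (K : ℕ), |f (P A K)| ≤ ‖f‖ * 4 := by
    intro A f K
    calc |f (P A K)| ≤ ‖f‖ * ‖P A K‖ := by
          simpa [Real.norm_eq_abs] using f.le_opNorm (P A K)
      _ ≤ ‖f‖ * 4 := mul_le_mul_of_nonneg_left (hPbound A K) (norm_nonneg f)
  have hz_add : ∀ A B : Set ℕ, Disjoint A B → z (A ∪ B) = z A + z B := by
    intro A B hAB
    ext f
    rw [ContinuousLinearMap.add_apply, hz_apply, hz_apply, hz_apply]
    have hPadd : ∀ K, P (A ∪ B) K = P A K + P B K := by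
      intro K
      simp only [hP]
      rw [← Finset.sum_add_distrib]
      apply Finset.sum_congr rfl
      intro k _
      rw [Set.indicator_union_of_disjoint hAB, add_smul]
    apply ulim_eq U
    have h1 := tendsto_ulim U (hfb A f)
    have h2 := tendsto_ulim U (hfb B f)
    have h3 := h1.add h2
    apply Tendsto.congr _ h3
    intro K
    rw [hPadd K, map_add]
  have hz_single : ∀ j, z {j} = inclusionInDoubleDual ℝ X (ee j) := by
    intro j
    ext f
    rw [hz_apply]
    have hev : ∀ K, j + 1 ≤ K → f (P ({j} : Set ℕ) K) = f (ee j) := by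
      intro K hK
      congr 1
      simp only [hP]
      rw [Finset.sum_eq_single j]
      · simp [Set.indicator_apply]
      · intro k _ hkj
        have : Set.indicator ({j} : Set ℕ) (fun _ => (1 : ℝ)) k = 0 := by
          simp [Set.indicator_apply, hkj]
        rw [this, zero_smul]
      · intro hj
        exact absurd (Finset.mem_range.mpr hK) hj
    have htd : Tendsto (fun K => f (P ({j} : Set ℕ) K)) (U : Filter ℕ) (nhds (f (ee j))) := by
      apply Tendsto.congr' _ tendsto_const_nhds
      apply Filter.EventuallyEq.symm
      apply Filter.Eventually.filter_mono hU
      rw [Filter.eventually_atTop]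
      exact ⟨j + 1, hev⟩
    rw [ulim_eq U htd]
    simp
  have hz_empty : z (∅ : Set ℕ) = 0 := by
    ext f
    rw [hz_apply]
    have : ∀ K, f (P (∅ : Set ℕ) K) = 0 := by
      intro K
      have : P (∅ : Set ℕ) K = 0 := by
        simp [hP]
      rw [this, map_zero]
    simp only [this]
    rw [ulim_eq U tendsto_const_nhds]
    simp
  -- the X-valued representatives and the measures
  set q : Set ℕ → X := fun A => (Set.mem_range.mp (hT (z A))).choose with hqdef
  have hq_spec : ∀ A, inclusionInDoubleDual ℝ X (q A) = T (z A) :=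
    fun A => (Set.mem_range.mp (hT (z A))).choose_spec
  have hq_add : ∀ A B : Set ℕ, Disjoint A B → q (A ∪ B) = q A + q B := by
    intro A B hAB
    apply incl_inj
    rw [map_add, hq_spec, hq_spec, hq_spec, hz_add A B hAB, map_add]
  have hq_single : ∀ i, q {i} = S (ee i) := by
    intro i
    apply incl_inj
    rw [hq_spec, hS, hz_single]
  have hq_empty : q (∅ : Set ℕ) = 0 := by
    apply incl_inj
    rw [hq_spec, hz_empty, map_zero, map_zero]
  set ν : ℕ → Set ℕ → ℝ := fun i A => (J (q A)) (mb i) with hνdef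
  have hν_add : ∀ (i : ℕ) (A B : Set ℕ), Disjoint A B → ν i (A ∪ B) = ν i A + ν i B := by
    intro i A B hAB
    simp only [hνdef]
    rw [hq_add A B hAB, map_add, ZeroAtInftyContinuousMap.coe_add, Pi.add_apply]
  have hν_bdd : ∀ i A, |ν i A| ≤ 4 * ‖T‖ := by
    intro i A
    simp only [hνdef]
    calc |(J (q A)) (mb i)| ≤ ‖J (q A)‖ := c0_abs_le _ _
      _ = ‖q A‖ := J.norm_map _
      _ = ‖inclusionInDoubleDual ℝ X (q A)‖ := (incl_norm _).symm
      _ = ‖T (z A)‖ := by rw [hq_spec]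
      _ ≤ ‖T‖ * ‖z A‖ := T.le_opNorm _
      _ ≤ ‖T‖ * 4 := mul_le_mul_of_nonneg_left (hz_norm A) (norm_nonneg T)
      _ = 4 * ‖T‖ := mul_comm _ _
  have hν_empty : ∀ i, ν i (∅ : Set ℕ) = 0 := by
    intro i
    simp only [hνdef]
    rw [hq_empty]
    simp
  have hν_atom : ∀ i, δ / 2 ≤ |ν i {i}| := by
    intro i
    simp only [hνdef]
    rw [hq_single]
    exact hm0' (ρ i)
  -- Rosenthal's lemma
  have hbp : ∀ i (B : Set ℕ), ν i B ≤ 4 * ‖T‖ := fun i B => le_of_abs_le (hν_bdd i B)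
  have hbm : ∀ i (B : Set ℕ), -(ν i B) ≤ 4 * ‖T‖ := fun i B => neg_le.mpr ((abs_le.mp (hν_bdd i B)).1)
  set μ : ℕ → Set ℕ → ℝ := fun i A => pp (ν i) A + pp (fun B => -(ν i B)) A with hμdef
  have habsμ : ∀ i (A : Set ℕ), |ν i A| ≤ μ i A := by
    intro i A
    simp only [hμdef]
    have h1 : ν i A ≤ pp (ν i) A := le_pp (hbp i) (subset_refl A)
    have h2 : -(ν i A) ≤ pp (fun B => -(ν i B)) A := le_pp (hbm i) (subset_refl A)
    have h3 : 0 ≤ pp (ν i) A := pp_nonneg (hbp i) (hν_empty i) A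
    have h4 : 0 ≤ pp (fun B => -(ν i B)) A := pp_nonneg (hbm i) (by rw [hν_empty i]; ring) A
    rw [abs_le]
    constructor <;> linarith
  obtain ⟨M, hMinf, hM⟩ := rosenthal μ
    (fun n {A B} h => add_le_add (pp_mono (hbp n) h) (pp_mono (hbm n) h))
    (fun n {A B} h => by
      simp only [hμdef]
      have h1 := pp_super (hbp n) (fun B B' hd => hν_add n B B' hd) h
      have h2 := pp_super (hbm n) (fun B B' hd => by rw [hν_add n B B' hd]; ring) h
      linarith)
    (B := 8 * ‖T‖)
    (fun n A => by
      simp only [hμdef]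
      have h1 := pp_le (hbp n) A
      have h2 := pp_le (hbm n) A
      linarith)
    (show (0 : ℝ) < δ / 4 by linarith)
  -- final contradiction
  obtain ⟨b, hb⟩ := c0_tail (J (q M)) (show (0 : ℝ) < δ / 8 by linarith)
  obtain ⟨i, hiM, hib⟩ := hMinf.exists_gt b
  have hdisj : Disjoint ({i} : Set ℕ) (M \ {i}) := by
    rw [Set.disjoint_left]
    rintro x hx hx2
    rw [Set.mem_singleton_iff] at hx
    exact hx2.2 (by simpa using hx)
  have hsplit : ({i} : Set ℕ) ∪ (M \ {i}) = M := by
    rw [Set.singleton_union, Set.insert_diff_singleton, Set.insert_eq_self.mpr hiM]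
  have hdecomp : ν i M = ν i {i} + ν i (M \ {i}) := by
    have h0 := hν_add i {i} (M \ {i}) hdisj
    rw [hsplit] at h0
    exact h0
  have h1 : |ν i (M \ {i})| ≤ δ / 4 := le_trans (habsμ i _) (hM i hiM)
  have h2 : |ν i M| ≤ δ / 8 := by
    simp only [hνdef]
    exact hb (mb i) (by have := hmb i; omega)
  have h3 := hν_atom i
  have h4 : |ν i {i}| ≤ |ν i M| + |ν i (M \ {i})| := by
    have : ν i {i} = ν i M - ν i (M \ {i}) := by rw [hdecomp]; ring
    rw [this]
    exact abs_sub _ _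
  linarith

end NoMai

end MainLemma

end NoMaiAux

open Filter ZeroAtInfty NormedSpace NoMai

/-- If a closed subspace `X` of `c₀` (represented via an isometric linear embedding
`J : X → c₀`) fails the compact bounded approximation property, then there is no
uniformly bounded net of operators on `X**` mapping `X**` into `X` and converging
pointwise in norm to the identity on `X`; in particular `X` admits no
M-approximate identity in `X**`. -/
theorem no_Mai_in_bidual_of_fails_cbap {X : Type*} [NormedAddCommGroup X]
    [NormedSpace ℝ X] [CompleteSpace X] (J : X →ₗᵢ[ℝ] C₀(ℕ, ℝ))
    (hcbap : ¬ ∃ (C : ℝ) (ι : Type) (_ : Nonempty ι) (inst : SemilatticeSup ι)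
      (K : ι → X →L[ℝ] X), (∀ i, IsCompactOperator (K i)) ∧ (∀ i, ‖K i‖ ≤ C) ∧
        ∀ x : X, Tendsto (fun i => K i x) atTop (nhds x)) :
    ¬ ∃ (C : ℝ) (ι : Type) (_ : Nonempty ι) (inst : SemilatticeSup ι)
      (T : ι → Dual ℝ (Dual ℝ X) →L[ℝ] Dual ℝ (Dual ℝ X)),
      (∀ i, ‖T i‖ ≤ C) ∧
      (∀ i y, T i y ∈ Set.range (inclusionInDoubleDual ℝ X)) ∧
      ∀ x : X, Tendsto (fun i => T i (inclusionInDoubleDual ℝ X x)) atTop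
        (nhds (inclusionInDoubleDual ℝ X x)) := by
  rintro ⟨C, ι, hne, inst, T, hC, hrange, hconv⟩
  apply hcbap
  refine ⟨C, ι, hne, inst, fun i => pull (T i) (hrange i), ?_, ?_, ?_⟩
  · intro i
    exact isCompactOperator_pull J (T i) (hrange i)
  · intro i
    exact (pull_norm_le (T i) (hrange i)).trans (hC i)
  · intro x
    rw [tendsto_iff_dist_tendsto_zero]
    have h := hconv x
    rw [tendsto_iff_dist_tendsto_zero] at h
    have heq : ∀ i, dist (pull (T i) (hrange i) x) x =
        dist (T i (inclusionInDoubleDual ℝ X x)) (inclusionInDoubleDual ℝ X x) := by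
      intro i
      calc dist (pull (T i) (hrange i) x) x
          = ‖pull (T i) (hrange i) x - x‖ := dist_eq_norm _ _
        _ = ‖inclusionInDoubleDual ℝ X (pull (T i) (hrange i) x - x)‖ := (incl_norm _).symm
        _ = ‖T i (inclusionInDoubleDual ℝ X x) - inclusionInDoubleDual ℝ X x‖ := by
            rw [map_sub, pull_spec]
        _ = dist (T i (inclusionInDoubleDual ℝ X x)) (inclusionInDoubleDual ℝ X x) :=
            (dist_eq_norm _ _).symm
    simpa only [heq] using h
end

section
/- Let Ω be a compact Hausdorff space and K a closed metrizable subset. Then there exists a bounded linear operator L : C(K) → C(Ω) with ‖L‖ = 1 such that (L f)|_K = f for every f ∈ C(K). In other words, the restriction map π : C(Ω) → C(K) admits a norm-one linear right inverse. -/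
open Metric TopologicalSpace Topology

lemma dugundji_aux {X : Type*} [MetricSpace X] [CompactSpace X]
    (A : Set X) (hA : IsClosed A) (hne : A.Nonempty) [CompactSpace A] :
    ∃ T : C(A, ℂ) →L[ℂ] C(X, ℂ),
      (∀ f, ‖T f‖ ≤ ‖f‖) ∧ ∀ (f : C(A, ℂ)) (a : A), T f (a : X) = f a := by
  classical
  haveI : Nonempty A := hne.to_subtype
  obtain ⟨a₀, ha₀⟩ := hne
  set y : ℕ → A := TopologicalSpace.denseSeq A with hy
  have hyd : DenseRange y := TopologicalSpace.denseRange_denseSeq A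
  set dA : X → ℝ := fun x => infDist x A with hdA
  have hdAc : Continuous dA := Metric.continuous_infDist_pt A
  have hdA0 : ∀ x, 0 ≤ dA x := fun x => Metric.infDist_nonneg
  set C : ℝ := Metric.diam (Set.univ : Set X) with hC
  have hC0 : 0 ≤ C := Metric.diam_nonneg
  have hdAle : ∀ x, dA x ≤ C := fun x =>
    le_trans (Metric.infDist_le_dist_of_mem ha₀)
      (Metric.dist_le_diam_of_mem Metric.isBounded_of_compactSpace trivial trivial)
  -- bump functions
  set lam : ℕ → X → ℝ := fun n x => max (2 * dA x - dist x (y n)) 0 with hlam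
  have hlamc : ∀ n, Continuous (lam n) := fun n =>
    ((continuous_const.mul hdAc).sub (continuous_id.dist continuous_const)).max continuous_const
  have hlam0 : ∀ n x, 0 ≤ lam n x := fun n x => le_max_right _ _
  have hlamle : ∀ n x, lam n x ≤ 2 * dA x := fun n x =>
    max_le (by linarith [dist_nonneg (x := x) (y := (y n : X))]) (by linarith [hdA0 x])
  have hlam_pos : ∀ n x, lam n x ≠ 0 → dist x (y n : X) < 2 * dA x := by
    intro n x h
    rcases lt_or_ge (dist x (y n : X)) (2 * dA x) with h' | h'
    · exact h'
    · exact absurd (by simp only [hlam]; exact max_eq_right (by linarith)) h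
  -- summable geometric bound
  have hu : Summable (fun n : ℕ => (1/2 : ℝ) ^ n * (2 * C)) :=
    (summable_geometric_of_lt_one (by norm_num) (by norm_num)).mul_right _
  set c : ℕ → X → ℝ := fun n x => (1/2 : ℝ) ^ n * lam n x with hc
  have hc0 : ∀ n x, 0 ≤ c n x := fun n x => by
    have := hlam0 n x
    simp only [hc]; positivity
  have hcle : ∀ n x, c n x ≤ (1/2 : ℝ) ^ n * (2 * C) := fun n x =>
    mul_le_mul_of_nonneg_left (le_trans (hlamle n x) (by linarith [hdAle x])) (by positivity)
  have hcsum : ∀ x, Summable (fun n => c n x) := fun x =>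
    Summable.of_nonneg_of_le (fun n => hc0 n x) (fun n => hcle n x) hu
  set den : X → ℝ := fun x => ∑' n, c n x with hden
  have hdenc : Continuous den := by
    refine continuous_tsum (fun n => continuous_const.mul (hlamc n)) hu ?_
    intro n x
    rw [Real.norm_of_nonneg (hc0 n x)]
    exact hcle n x
  have hden0 : ∀ x, 0 ≤ den x := fun x => tsum_nonneg (fun n => hc0 n x)
  have hden_pos : ∀ x, x ∉ A → 0 < den x := by
    intro x hx
    have hdx : 0 < dA x := (hA.notMem_iff_infDist_pos ⟨a₀, ha₀⟩).mp hx
    obtain ⟨a, ha, hd⟩ := hA.isCompact.exists_infDist_eq_dist ⟨a₀, ha₀⟩ x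
    obtain ⟨n, hn⟩ := Metric.denseRange_iff.mp hyd ⟨a, ha⟩ (dA x) hdx
    rw [Subtype.dist_eq] at hn
    have h1 : dist x (y n : X) < 2 * dA x := by
      calc dist x (y n : X) ≤ dist x a + dist a (y n : X) := dist_triangle _ _ _
        _ < dA x + dA x := add_lt_add_of_le_of_lt hd.ge hn
        _ = 2 * dA x := by ring
    have hl : 0 < lam n x := lt_max_iff.mpr (Or.inl (by linarith))
    have hcp : 0 < c n x := by simp only [hc]; positivity
    exact lt_of_lt_of_le hcp ((hcsum x).le_tsum n (fun m _ => hc0 m x))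
  -- numerator
  set num : C(A, ℂ) → X → ℂ := fun f x => ∑' n, (c n x : ℂ) * f (y n) with hnum
  have hterm_bound : ∀ (f : C(A, ℂ)) n x,
      ‖(c n x : ℂ) * f (y n)‖ ≤ (1/2 : ℝ) ^ n * (2 * C) * ‖f‖ := by
    intro f n x
    rw [norm_mul, Complex.norm_real, Real.norm_of_nonneg (hc0 n x)]
    exact mul_le_mul (hcle n x) (f.norm_coe_le_norm (y n)) (norm_nonneg _) (by positivity)
  have hnum_sum : ∀ (f : C(A, ℂ)) x, Summable (fun n => (c n x : ℂ) * f (y n)) := fun f x =>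
    Summable.of_norm_bounded (hu.mul_right ‖f‖) (hterm_bound f · x)
  have hnumc : ∀ f, Continuous (num f) := by
    intro f
    refine continuous_tsum (fun n => ?_) (hu.mul_right ‖f‖) (fun n x => hterm_bound f n x)
    exact (Complex.continuous_ofReal.comp (continuous_const.mul (hlamc n))).mul continuous_const
  -- the key estimate
  have key : ∀ (f : C(A, ℂ)) (x : X), x ∉ A → ∀ (z : ℂ) (ε : ℝ), 0 ≤ ε →
      (∀ n, lam n x ≠ 0 → ‖f (y n) - z‖ ≤ ε) → ‖num f x / (den x : ℂ) - z‖ ≤ ε := by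
    intro f x hx z ε hε hbd
    have hdp := hden_pos x hx
    have hzsum : Summable (fun n => (c n x : ℂ) * z) := by
      refine Summable.of_norm_bounded (hu.mul_right ‖z‖) (fun n => ?_)
      rw [norm_mul, Complex.norm_real, Real.norm_of_nonneg (hc0 n x)]
      exact mul_le_mul_of_nonneg_right (hcle n x) (norm_nonneg z)
    have h1 : num f x - (den x : ℂ) * z = ∑' n, (c n x : ℂ) * (f (y n) - z) := by
      have hcg : ∀ n : ℕ, (c n x : ℂ) * (f (y n) - z)
          = (c n x : ℂ) * f (y n) - (c n x : ℂ) * z := fun n => mul_sub _ _ _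
      rw [tsum_congr hcg, (hnum_sum f x).tsum_sub hzsum]
      simp only [hnum]
      congr 1
      rw [tsum_mul_right]
      congr 1
      simp only [hden]
      rw [Complex.ofReal_tsum]
    have h2 : ‖num f x - (den x : ℂ) * z‖ ≤ ε * den x := by
      rw [h1]
      have hsn : Summable (fun n => ‖(c n x : ℂ) * (f (y n) - z)‖) := by
        refine Summable.of_nonneg_of_le (fun n => norm_nonneg _) (fun n => ?_)
          (hu.mul_right (‖f‖ + ‖z‖))
        rw [norm_mul, Complex.norm_real, Real.norm_of_nonneg (hc0 n x)]
        refine mul_le_mul (hcle n x) ?_ (norm_nonneg _) (by positivity)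
        exact (norm_sub_le _ _).trans (add_le_add_left (f.norm_coe_le_norm _) _)
      refine (norm_tsum_le_tsum_norm hsn).trans ?_
      have hle : ∀ n, ‖(c n x : ℂ) * (f (y n) - z)‖ ≤ ε * c n x := by
        intro n
        rw [norm_mul, Complex.norm_real, Real.norm_of_nonneg (hc0 n x)]
        rcases eq_or_ne (lam n x) 0 with h | h
        · simp [hc, h]
        · rw [mul_comm ε _]
          exact mul_le_mul_of_nonneg_left (hbd n h) (hc0 n x)
      calc ∑' n, ‖(c n x : ℂ) * (f (y n) - z)‖ ≤ ∑' n, ε * c n x :=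
            Summable.tsum_le_tsum hle hsn ((hcsum x).mul_left ε)
        _ = ε * den x := by rw [tsum_mul_left]
    have hden_ne : (den x : ℂ) ≠ 0 := by exact_mod_cast hdp.ne'
    have h3 : num f x / (den x : ℂ) - z = (num f x - (den x : ℂ) * z) / (den x : ℂ) := by
      field_simp
    rw [h3, norm_div, Complex.norm_real, Real.norm_of_nonneg (hden0 x),
      div_le_iff₀ hdp]
    exact h2
  -- the extension map
  set Tfun : C(A, ℂ) → X → ℂ := fun f x =>
    if hx : x ∈ A then f ⟨x, hx⟩ else num f x / (den x : ℂ) with hTfun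
  have hTA : ∀ f (x : X) (hx : x ∈ A), Tfun f x = f ⟨x, hx⟩ := by
    intro f x hx; simp only [hTfun]; rw [dif_pos hx]
  have hTA' : ∀ f (x : X), x ∉ A → Tfun f x = num f x / (den x : ℂ) := by
    intro f x hx; simp only [hTfun]; rw [dif_neg hx]
  have Tcont : ∀ f, Continuous (Tfun f) := by
    intro f
    rw [continuous_iff_continuousAt]
    intro x
    by_cases hx : x ∈ A
    · rw [Metric.continuousAt_iff]
      intro ε hε
      have huc := CompactSpace.uniformContinuous_of_continuous f.continuous
      obtain ⟨δ, hδ, hδ'⟩ := Metric.uniformContinuous_iff.mp huc (ε/2) (by linarith)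
      refine ⟨δ/3, by linarith, fun x' hx' => ?_⟩
      rw [hTA f x hx]
      by_cases hx'' : x' ∈ A
      · rw [hTA f x' hx'']
        have : dist (⟨x', hx''⟩ : A) (⟨x, hx⟩ : A) < δ := by
          rw [Subtype.dist_eq]; dsimp; linarith
        exact lt_of_lt_of_le (hδ' this) (by linarith)
      · rw [hTA' f x' hx'', dist_eq_norm]
        have hkey := key f x' hx'' (f ⟨x, hx⟩) (ε/2) (by linarith) ?_
        · linarith
        intro n hn
        have h1 := hlam_pos n x' hn
        have h2 : dA x' ≤ dist x' x := Metric.infDist_le_dist_of_mem hx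
        have h3 : dist (y n : X) x < δ := by
          calc dist (y n : X) x ≤ dist (y n : X) x' + dist x' x := dist_triangle _ _ _
            _ < 2 * dA x' + dist x' x := by rw [dist_comm]; linarith
            _ ≤ 3 * dist x' x := by linarith
            _ < δ := by linarith
        have h4 : dist (y n) (⟨x, hx⟩ : A) < δ := by rw [Subtype.dist_eq]; exact h3
        rw [← dist_eq_norm]
        exact (hδ' h4).le
    · have hmem : Aᶜ ∈ nhds x := hA.isOpen_compl.mem_nhds hx
      refine ContinuousAt.congr (f := fun x' => num f x' / (den x' : ℂ))
        (((hnumc f).continuousAt).div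
          (Complex.continuous_ofReal.comp hdenc).continuousAt
          (by exact_mod_cast (hden_pos x hx).ne'))
        (Filter.eventuallyEq_of_mem hmem fun x' hx' => (hTA' f x' hx').symm)
  -- linearity
  set TL : C(A, ℂ) →ₗ[ℂ] C(X, ℂ) :=
    { toFun := fun f => ⟨Tfun f, Tcont f⟩
      map_add' := by
        intro f g
        ext x
        by_cases hx : x ∈ A
        · simp only [ContinuousMap.coe_mk, ContinuousMap.add_apply, hTA _ x hx]
        · simp only [ContinuousMap.coe_mk, ContinuousMap.add_apply, hTA' _ x hx]
          have hadd : num (f + g) x = num f x + num g x := by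
            simp only [hnum]
            rw [← (hnum_sum f x).tsum_add (hnum_sum g x)]
            exact tsum_congr fun n => by
              simp [mul_add]
          rw [hadd, add_div]
      map_smul' := by
        intro r f
        ext x
        by_cases hx : x ∈ A
        · simp only [ContinuousMap.coe_mk, ContinuousMap.smul_apply, hTA _ x hx,
            RingHom.id_apply]
        · simp only [ContinuousMap.coe_mk, ContinuousMap.smul_apply, hTA' _ x hx,
            RingHom.id_apply]
          have hsmul : num (r • f) x = r * num f x := by
            simp only [hnum]
            rw [← tsum_mul_left]
            exact tsum_congr fun n => by
              simp [smul_eq_mul]; ring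
          rw [hsmul, mul_div_assoc]
          simp [smul_eq_mul] }
  have hbound : ∀ f, ‖TL f‖ ≤ 1 * ‖f‖ := by
    intro f
    rw [one_mul]
    refine (ContinuousMap.norm_le _ (norm_nonneg f)).mpr fun x => ?_
    show ‖Tfun f x‖ ≤ ‖f‖
    by_cases hx : x ∈ A
    · rw [hTA f x hx]; exact f.norm_coe_le_norm _
    · rw [hTA' f x hx]
      have := key f x hx 0 ‖f‖ (norm_nonneg f) (fun n _ => by
        rw [sub_zero]; exact f.norm_coe_le_norm _)
      simpa using this
  refine ⟨TL.mkContinuous 1 hbound, fun f => ?_, fun f a => ?_⟩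
  · simpa using hbound f
  · show Tfun f (a : X) = f a
    rw [hTA f _ a.2]

/-- Borsuk's theorem: if `K` is a closed metrizable subset of a compact Hausdorff
space `Ω`, the restriction map `C(Ω) → C(K)` admits a norm-one linear right
inverse. -/
theorem borsuk_extension {Ω : Type*} [TopologicalSpace Ω] [CompactSpace Ω] [T2Space Ω]
    (K : Set Ω) (hK : IsClosed K) [Nonempty K] [CompactSpace K]
    [TopologicalSpace.MetrizableSpace K] :
    ∃ L : C(K, ℂ) →L[ℂ] C(Ω, ℂ), ‖L‖ = 1 ∧
      ∀ (f : C(K, ℂ)) (x : K), (L f) (x : Ω) = f x := by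
  classical
  letI : MetricSpace K := TopologicalSpace.metrizableSpaceMetric K
  haveI : SecondCountableTopology K := inferInstance
  obtain ⟨φ, hφ⟩ := TopologicalSpace.exists_embedding_l_infty K
  -- coordinates of the embedding
  set ψ : K → ℕ → ℝ := fun k n => φ k n with hψ
  have hψc : Continuous ψ :=
    continuous_pi fun n => (continuous_eval_const n).comp hφ.continuous
  have hψi : Function.Injective ψ := by
    intro a b h
    exact hφ.injective (by ext n; exact congrFun h n)
  -- extend the coordinates to Ω via Tietze
  have hcoord : ∀ n : ℕ, Continuous fun k : K => ψ k n := fun n =>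
    (continuous_apply n).comp hψc
  choose g hg using fun n : ℕ =>
    ContinuousMap.exists_restrict_eq hK (⟨fun k => ψ k n, hcoord n⟩ : C(K, ℝ))
  set G : Ω → ℕ → ℝ := fun x n => g n x with hG
  have hGc : Continuous G := continuous_pi fun n => (g n).continuous
  have hGK : ∀ k : K, G (k : Ω) = ψ k := by
    intro k
    funext n
    exact ContinuousMap.congr_fun (hg n) k
  -- the compact metrizable target
  set Xs : Set (ℕ → ℝ) := Set.range G with hXs
  have hXsc : IsCompact Xs := isCompact_range hGc
  haveI : CompactSpace Xs := isCompact_iff_compactSpace.mp hXsc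
  letI : MetricSpace Xs := TopologicalSpace.metrizableSpaceMetric Xs
  -- the embedding of K into Xs
  set e : K → Xs := fun k => ⟨G (k : Ω), Set.mem_range_self _⟩ with he
  have hec : Continuous e := (hGc.comp continuous_subtype_val).subtype_mk _
  have hei : Function.Injective e := by
    intro a b h
    apply hψi
    have : G (a : Ω) = G (b : Ω) := Subtype.ext_iff.mp h
    rw [hGK a, hGK b] at this
    exact this
  have hce : IsClosedEmbedding e := hec.isClosedEmbedding hei
  -- the range of e, as a closed subset
  set A : Set Xs := Set.range e with hA
  have hAc : IsClosed A := hce.isClosed_range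
  have hAne : A.Nonempty := Set.range_nonempty e
  haveI : CompactSpace A := isCompact_iff_compactSpace.mp hAc.isCompact
  obtain ⟨T, hT1, hT2⟩ := dugundji_aux A hAc hAne
  -- the homeomorphism K ≃ₜ A
  set e' : K → A := fun k => ⟨e k, Set.mem_range_self k⟩ with he'
  have he'c : Continuous e' := hec.subtype_mk _
  have he'b : Function.Bijective e' := by
    constructor
    · intro a b h
      exact hei (Subtype.ext_iff.mp h)
    · rintro ⟨a, k, rfl⟩
      exact ⟨k, rfl⟩
  set E : K ≃ₜ A := Continuous.homeoOfEquivCompactToT2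
    (f := Equiv.ofBijective e' he'b) he'c with hE
  set Ecm : C(A, K) := ⟨E.symm, E.symm.continuous⟩ with hEcm
  set gc : C(Ω, Xs) := ⟨fun x => ⟨G x, Set.mem_range_self x⟩, hGc.subtype_mk _⟩ with hgc
  -- the operator
  set LL : C(K, ℂ) →ₗ[ℂ] C(Ω, ℂ) :=
    { toFun := fun f => (T (f.comp Ecm)).comp gc
      map_add' := by
        intro f f'
        show (T ((f + f').comp Ecm)).comp gc
          = (T (f.comp Ecm)).comp gc + (T (f'.comp Ecm)).comp gc
        rw [ContinuousMap.add_comp, map_add, ContinuousMap.add_comp]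
      map_smul' := by
        intro r f
        show (T ((r • f).comp Ecm)).comp gc = r • ((T (f.comp Ecm)).comp gc)
        rw [ContinuousMap.smul_comp, map_smul, ContinuousMap.smul_comp] } with hLL
  have hcompK : ∀ (f : C(K, ℂ)) (x : K), LL f (x : Ω) = f x := by
    intro f x
    show (T (f.comp Ecm)) (gc (x : Ω)) = f x
    have h1 : gc (x : Ω) = ((e' x : A) : Xs) := by
      apply Subtype.ext
      show G (x : Ω) = G (x : Ω)
      rfl
    rw [h1, hT2 (f.comp Ecm) (e' x)]
    show f (E.symm (e' x)) = f x
    have : e' x = E x := rfl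
    rw [this, Homeomorph.symm_apply_apply]
  have hbound : ∀ f, ‖LL f‖ ≤ 1 * ‖f‖ := by
    intro f
    rw [one_mul]
    have h1 : ‖f.comp Ecm‖ ≤ ‖f‖ := by
      refine (ContinuousMap.norm_le _ (norm_nonneg f)).mpr fun a => ?_
      exact f.norm_coe_le_norm _
    refine le_trans ?_ (le_trans (hT1 (f.comp Ecm)) h1)
    refine (ContinuousMap.norm_le _ (norm_nonneg _)).mpr fun x => ?_
    exact (T (f.comp Ecm)).norm_coe_le_norm _
  refine ⟨LL.mkContinuous 1 hbound, ?_, fun f x => hcompK f x⟩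
  -- norm equals one
  refine le_antisymm (LinearMap.mkContinuous_norm_le _ zero_le_one _) ?_
  set f₁ : C(K, ℂ) := ContinuousMap.const K 1 with hf₁
  have hf₁n : ‖f₁‖ = 1 := by simp [hf₁, ContinuousMap.norm_eq_iSup_norm]
  have h2 : (1 : ℝ) ≤ ‖LL.mkContinuous 1 hbound f₁‖ := by
    obtain ⟨k₀⟩ := (inferInstance : Nonempty K)
    calc (1 : ℝ) = ‖f₁ k₀‖ := by simp [hf₁]
      _ = ‖(LL.mkContinuous 1 hbound f₁) (k₀ : Ω)‖ := by
          rw [show (LL.mkContinuous 1 hbound f₁) (k₀ : Ω) = f₁ k₀ from hcompK f₁ k₀]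
      _ ≤ ‖LL.mkContinuous 1 hbound f₁‖ := ContinuousMap.norm_coe_le_norm _ _
  calc (1 : ℝ) ≤ ‖LL.mkContinuous 1 hbound f₁‖ := h2
    _ ≤ ‖LL.mkContinuous 1 hbound‖ * ‖f₁‖ := ContinuousLinearMap.le_opNorm _ _
    _ = ‖LL.mkContinuous 1 hbound‖ := by rw [hf₁n, mul_one]
end

section
/- (Sobczyk) Let Y be a separable Banach space, X a closed subspace of Y, and T : X → c₀ a bounded linear operator. Then there exists a bounded linear extension T̃ : Y → c₀ of T with ‖T̃‖ ≤ 2‖T‖. -/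
open ZeroAtInfty Filter Topology Metric NormedSpace Set


lemma sobczyk_dense_aux {Y : Type*} [NormedAddCommGroup Y] [NormedSpace ℝ Y]
    (h : ℕ → Y →L[ℝ] ℝ) (C : ℝ) (hC : ∀ n, ‖h n‖ ≤ C)
    (s : Set Y) (hs : Dense s) (h0 : ∀ y ∈ s, Tendsto (fun n => h n y) atTop (𝓝 0)) :
    ∀ y : Y, Tendsto (fun n => h n y) atTop (𝓝 0) := by
  intro y
  rw [NormedAddCommGroup.tendsto_nhds_zero]
  intro ε hε
  have hC0 : 0 ≤ C := le_trans (norm_nonneg _) (hC 0)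
  have hδ : 0 < ε / (2 * (C + 1)) := by positivity
  obtain ⟨z, hzs, hzy⟩ := hs.exists_dist_lt y hδ
  have h1 : ∀ᶠ n in atTop, ‖h n z‖ < ε / 2 := by
    have := (NormedAddCommGroup.tendsto_nhds_zero.mp (h0 z hzs)) (ε / 2) (by positivity)
    exact this
  filter_upwards [h1] with n hn
  have hyz : ‖y - z‖ < ε / (2 * (C + 1)) := by
    rw [← dist_eq_norm]; exact hzy
  have : ‖h n y‖ ≤ ‖h n z‖ + ‖h n (y - z)‖ := by
    have : h n y = h n z + h n (y - z) := by rw [map_sub]; ring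
    rw [this]; exact norm_add_le _ _
  have h2 : ‖h n (y - z)‖ ≤ C * ‖y - z‖ :=
    le_trans ((h n).le_opNorm _) (by gcongr; exact hC n)
  have h3 : C * ‖y - z‖ < ε / 2 := by
    calc C * ‖y - z‖ ≤ C * (ε / (2 * (C + 1))) := by gcongr
    _ < (C + 1) * (ε / (2 * (C + 1))) := by gcongr; linarith
    _ = ε / 2 := by field_simp
  linarith


lemma sobczyk_key {Y : Type*} [NormedAddCommGroup Y] [NormedSpace ℝ Y]
    [TopologicalSpace.SeparableSpace Y]
    (X : Submodule ℝ Y) (f : ℕ → Y →L[ℝ] ℝ) (C : ℝ) (hfC : ∀ n, ‖f n‖ ≤ C)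
    (hfX : ∀ x ∈ X, Tendsto (fun n => f n x) atTop (𝓝 0)) :
    ∃ g : ℕ → Y →L[ℝ] ℝ, (∀ n, ‖g n‖ ≤ C) ∧ (∀ n, ∀ x ∈ X, g n x = 0) ∧
      ∀ y : Y, Tendsto (fun n => f n y - g n y) atTop (𝓝 0) := by
  haveI : Nonempty Y := ⟨0⟩
  have hC0 : 0 ≤ C := le_trans (norm_nonneg _) (hfC 0)
  set yk : ℕ → Y := TopologicalSpace.denseSeq Y with hyk_def
  have hyk : DenseRange yk := TopologicalSpace.denseRange_denseSeq Y
  -- the pseudo-distance to 0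
  set d : (Y →L[ℝ] ℝ) → ℝ := fun φ => ∑' k, (1 / 2 : ℝ) ^ k * min 1 |φ (yk k)| with hd_def
  have term_nonneg : ∀ (φ : Y →L[ℝ] ℝ) k, 0 ≤ (1 / 2 : ℝ) ^ k * min 1 |φ (yk k)| := by
    intro φ k
    apply mul_nonneg (by positivity) (le_min zero_le_one (abs_nonneg _))
  have term_le : ∀ (φ : Y →L[ℝ] ℝ) k, (1 / 2 : ℝ) ^ k * min 1 |φ (yk k)| ≤ (1 / 2 : ℝ) ^ k := by
    intro φ k
    calc (1 / 2 : ℝ) ^ k * min 1 |φ (yk k)| ≤ (1 / 2 : ℝ) ^ k * 1 :=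
          mul_le_mul_of_nonneg_left (min_le_left _ _) (by positivity)
      _ = (1 / 2 : ℝ) ^ k := mul_one _
  have dsummable : ∀ φ : Y →L[ℝ] ℝ, Summable fun k => (1 / 2 : ℝ) ^ k * min 1 |φ (yk k)| := by
    intro φ
    exact Summable.of_nonneg_of_le (term_nonneg φ) (term_le φ) summable_geometric_two
  have d_nonneg : ∀ φ, 0 ≤ d φ := fun φ => tsum_nonneg (term_nonneg φ)
  have d_term_le : ∀ (φ : Y →L[ℝ] ℝ) k, (1 / 2 : ℝ) ^ k * min 1 |φ (yk k)| ≤ d φ := by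
    intro φ k
    exact Summable.le_tsum (dsummable φ) k fun j _ => term_nonneg φ j
  -- the set of functionals vanishing on X with norm ≤ C
  set K : Set (Y →L[ℝ] ℝ) := {g | ‖g‖ ≤ C ∧ ∀ x ∈ X, g x = 0} with hK_def
  have hK0 : (0 : Y →L[ℝ] ℝ) ∈ K := ⟨by simpa using hC0, fun x _ => rfl⟩
  set A : ℕ → Set ℝ := fun n => (fun g => d (f n - g)) '' K with hA_def
  have hAne : ∀ n, (A n).Nonempty := fun n => ⟨_, ⟨0, hK0, rfl⟩⟩
  have hAbdd : ∀ n, BddBelow (A n) := by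
    intro n
    exact ⟨0, by rintro x ⟨g, -, rfl⟩; exact d_nonneg _⟩
  set a : ℕ → ℝ := fun n => sInf (A n) with ha_def
  have ha_nonneg : ∀ n, 0 ≤ a n := fun n =>
    le_csInf (hAne n) (by rintro x ⟨g, -, rfl⟩; exact d_nonneg _)
  have ha_le : ∀ n, ∀ g ∈ K, a n ≤ d (f n - g) := fun n g hg =>
    csInf_le (hAbdd n) ⟨g, hg, rfl⟩
  -- choose near-optimal g n
  have hchoice : ∀ n : ℕ, ∃ g ∈ K, d (f n - g) < a n + 1 / (n + 1) := by
    intro n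
    obtain ⟨x, ⟨g, hg, rfl⟩, hx⟩ := Real.lt_sInf_add_pos (hAne n)
      (show (0:ℝ) < 1 / (n + 1) by positivity)
    exact ⟨g, hg, hx⟩
  choose g hgK hgd using hchoice
  refine ⟨g, fun n => (hgK n).1, fun n => (hgK n).2, ?_⟩
  -- main claim: a → 0
  have ha : Tendsto a atTop (𝓝 0) := by
    by_contra hcon
    rw [Metric.tendsto_atTop] at hcon
    push_neg at hcon
    obtain ⟨ε, hε, hfreq'⟩ := hcon
    have hfreq : ∃ᶠ n in atTop, ε ≤ a n := by
      rw [frequently_atTop]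
      intro N
      obtain ⟨n, hn, hn'⟩ := hfreq' N
      refine ⟨n, hn, ?_⟩
      rw [Real.dist_eq, sub_zero, abs_of_nonneg (ha_nonneg n)] at hn'
      exact hn'
    set L : Filter ℕ := atTop ⊓ 𝓟 {n | ε ≤ a n} with hL_def
    haveI hLne : L.NeBot := frequently_iff_neBot.mp hfreq
    set u : ℕ → WeakDual ℝ Y := fun n => StrongDual.toWeakDual (f n) with hu_def
    have hcomp : IsCompact (WeakDual.toStrongDual ⁻¹' closedBall (0 : StrongDual ℝ Y) C) :=
      WeakDual.isCompact_closedBall (𝕜 := ℝ) (E := Y) 0 C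
    have hmaple : map u L ≤ 𝓟 (WeakDual.toStrongDual ⁻¹' closedBall (0 : StrongDual ℝ Y) C) := by
      rw [le_principal_iff, mem_map]
      apply Filter.univ_mem'
      intro n
      simp only [Set.mem_preimage, mem_closedBall, dist_zero_right]
      exact hfC n
    obtain ⟨φ, hφB, hφ⟩ := hcomp.exists_clusterPt hmaple
    have hφcl : MapClusterPt φ L u := hφ
    set F : Y →L[ℝ] ℝ := WeakDual.toStrongDual φ with hF_def
    have hFK : F ∈ K := by
      constructor
      · have := hφB
        simp only [Set.mem_preimage, mem_closedBall, dist_zero_right] at this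
        exact this
      · intro x hx
        have hev : Continuous fun ψ : WeakDual ℝ Y => ψ x := WeakDual.eval_continuous x
        have hcl2 : MapClusterPt (φ x) L ((fun ψ : WeakDual ℝ Y => ψ x) ∘ u) :=
          hφcl.continuousAt_comp hev.continuousAt
        have htd : Tendsto ((fun ψ : WeakDual ℝ Y => ψ x) ∘ u) L (𝓝 0) := by
          have : ((fun ψ : WeakDual ℝ Y => ψ x) ∘ u) = fun n => f n x := rfl
          rw [this]
          exact (hfX x hx).mono_left inf_le_left
        have hne : NeBot (𝓝 (φ x) ⊓ map ((fun ψ : WeakDual ℝ Y => ψ x) ∘ u) L) :=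
          hcl2.clusterPt
        have : NeBot (𝓝 (φ x) ⊓ 𝓝 (0 : ℝ)) := hne.mono (inf_le_inf_left _ htd)
        exact t2_iff_nhds.mp inferInstance this
    -- the weak*-continuous function D
    set D : WeakDual ℝ Y → ℝ := fun ψ => ∑' k, (1 / 2 : ℝ) ^ k * min 1 |ψ (yk k) - F (yk k)|
      with hD_def
    have hDcont : Continuous D := by
      apply continuous_tsum (u := fun k => (1 / 2 : ℝ) ^ k)
      · intro k
        have h1 : Continuous fun ψ : WeakDual ℝ Y => ψ (yk k) := WeakDual.eval_continuous _
        exact continuous_const.mul (continuous_const.min ((h1.sub continuous_const).abs))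
      · exact summable_geometric_two
      · intro k ψ
        rw [Real.norm_eq_abs, abs_of_nonneg
          (mul_nonneg (by positivity) (le_min zero_le_one (abs_nonneg _)))]
        calc (1 / 2 : ℝ) ^ k * min 1 |ψ (yk k) - F (yk k)| ≤ (1 / 2 : ℝ) ^ k * 1 :=
              mul_le_mul_of_nonneg_left (min_le_left _ _) (by positivity)
          _ = _ := mul_one _
    have hDφ : D φ = 0 := by
      have hz : ∀ k, (1 / 2 : ℝ) ^ k * min 1 |φ (yk k) - F (yk k)| = 0 := by
        intro k
        rw [hF_def, WeakDual.toStrongDual_apply, sub_self, abs_zero,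
          min_eq_right zero_le_one, mul_zero]
      show (∑' k, (1 / 2 : ℝ) ^ k * min 1 |φ (yk k) - F (yk k)|) = 0
      rw [tsum_congr hz, tsum_zero]
    have hDu : ∀ n, D (u n) = d (f n - F) := by
      intro n
      simp only [hD_def, hd_def, ContinuousLinearMap.sub_apply]
      rfl
    have hcl3 : MapClusterPt 0 L (D ∘ u) := by
      have := hφcl.continuousAt_comp hDcont.continuousAt
      rwa [hDφ] at this
    have hmaple2 : map (D ∘ u) L ≤ 𝓟 (Ici ε) := by
      rw [le_principal_iff, mem_map]
      have : {n | ε ≤ a n} ∈ L := by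
        rw [hL_def]
        exact mem_inf_of_right (mem_principal_self _)
      filter_upwards [this] with n hn
      show ε ≤ (D ∘ u) n
      rw [Function.comp_apply, hDu n]
      exact le_trans hn (ha_le n F hFK)
    have : ClusterPt (0 : ℝ) (𝓟 (Ici ε)) := (hcl3.clusterPt).mono hmaple2
    have h0mem : (0 : ℝ) ∈ closure (Ici ε) := mem_closure_iff_clusterPt.mpr this
    rw [closure_Ici] at h0mem
    exact absurd h0mem (by simpa using hε)
  -- d (f n - g n) → 0
  have hd0 : Tendsto (fun n => d (f n - g n)) atTop (𝓝 0) := by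
    have hup : Tendsto (fun n : ℕ => a n + 1 / (n + 1 : ℝ)) atTop (𝓝 0) := by
      have := ha.add tendsto_one_div_add_atTop_nhds_zero_nat
      simpa using this
    exact squeeze_zero (fun n => d_nonneg _) (fun n => (hgd n).le) hup
  -- coordinates tend to 0
  have hcoord : ∀ k, Tendsto (fun n => f n (yk k) - g n (yk k)) atTop (𝓝 0) := by
    intro k
    have hmin : Tendsto (fun n => min 1 |f n (yk k) - g n (yk k)|) atTop (𝓝 0) := by
      apply squeeze_zero (fun n => le_min zero_le_one (abs_nonneg _))
        (g := fun n => (2 : ℝ) ^ k * d (f n - g n))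
      · intro n
        have := d_term_le (f n - g n) k
        simp only [ContinuousLinearMap.sub_apply] at this
        have h2 : (2 : ℝ) ^ k * ((1 / 2 : ℝ) ^ k * min 1 |f n (yk k) - g n (yk k)|)
            = min 1 |f n (yk k) - g n (yk k)| := by
          rw [← mul_assoc, ← mul_pow]
          norm_num
        calc min 1 |f n (yk k) - g n (yk k)| = _ := h2.symm
          _ ≤ (2 : ℝ) ^ k * d (f n - g n) := by gcongr
      · simpa using hd0.const_mul ((2 : ℝ) ^ k)
    rw [NormedAddCommGroup.tendsto_nhds_zero]
    intro ε hε
    have : ∀ᶠ n in atTop, min 1 |f n (yk k) - g n (yk k)| < min 1 ε :=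
      hmin.eventually_lt_const (lt_min one_pos hε)
    filter_upwards [this] with n hn
    rw [Real.norm_eq_abs]
    rcases le_total |f n (yk k) - g n (yk k)| 1 with h | h
    · rw [min_eq_right h] at hn
      exact lt_of_lt_of_le hn (min_le_right _ _)
    · rw [min_eq_left h] at hn
      exact absurd hn (not_lt.mpr (min_le_left _ _))
  -- conclude by density
  intro y
  have := sobczyk_dense_aux (fun n => f n - g n) (C + C)
    (fun n => le_trans (norm_sub_le _ _) (add_le_add (hfC n) ((hgK n).1)))
    (Set.range yk) hyk ?_ y
  · simpa [ContinuousLinearMap.sub_apply] using this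
  · rintro z ⟨k, rfl⟩
    simpa [ContinuousLinearMap.sub_apply] using hcoord k


/-- Evaluation at a point as a continuous linear functional on `C₀(ℕ, ℝ)`. -/
noncomputable def c0eval (n : ℕ) : C₀(ℕ, ℝ) →L[ℝ] ℝ :=
  LinearMap.mkContinuous
    { toFun := fun f => f n
      map_add' := fun f g => rfl
      map_smul' := fun c f => rfl } 1
    (fun f => by
      rw [one_mul, Real.norm_eq_abs]
      have h := f.toBCF.norm_coe_le_norm n
      rwa [ZeroAtInftyContinuousMap.norm_toBCF_eq_norm] at h)

lemma c0eval_norm_le (n : ℕ) : ‖c0eval n‖ ≤ 1 :=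
  LinearMap.mkContinuous_norm_le _ zero_le_one _

lemma c0eval_apply (n : ℕ) (f : C₀(ℕ, ℝ)) : c0eval n f = f n := rfl

/-- Sobczyk's theorem: a bounded operator from a closed subspace `X` of a separable
Banach space `Y` into `c₀` extends to `Y` with norm at most `2‖T‖`. -/
theorem sobczyk {Y : Type*} [NormedAddCommGroup Y] [NormedSpace ℝ Y]
    [TopologicalSpace.SeparableSpace Y]
    (X : Submodule ℝ Y) (hX : IsClosed (X : Set Y))
    (T : ↥X →L[ℝ] C₀(ℕ, ℝ)) :
    ∃ S : Y →L[ℝ] C₀(ℕ, ℝ), (∀ x : ↥X, S x = T x) ∧ ‖S‖ ≤ 2 * ‖T‖ := by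
  -- Hahn-Banach extensions of the coordinate functionals of T
  have hHB : ∀ n : ℕ, ∃ f : Y →L[ℝ] ℝ,
      (∀ x : ↥X, f x = (c0eval n).comp T x) ∧ ‖f‖ = ‖(c0eval n).comp T‖ :=
    fun n => exists_extension_norm_eq X ((c0eval n).comp T)
  choose f hfext hfnorm using hHB
  have hfC : ∀ n, ‖f n‖ ≤ ‖T‖ := by
    intro n
    rw [hfnorm n]
    calc ‖(c0eval n).comp T‖ ≤ ‖c0eval n‖ * ‖T‖ := ContinuousLinearMap.opNorm_comp_le _ _
      _ ≤ 1 * ‖T‖ := by gcongr; exact c0eval_norm_le n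
      _ = ‖T‖ := one_mul _
  have hfX : ∀ y ∈ X, Tendsto (fun n => f n y) atTop (𝓝 0) := by
    intro y hy
    have heq : (fun n => f n y) = fun n => (T ⟨y, hy⟩) n := by
      funext n
      rw [hfext n ⟨y, hy⟩]
      rfl
    rw [heq]
    have := (T ⟨y, hy⟩).zero_at_infty'
    rwa [cocompact_eq_atTop] at this
  obtain ⟨g, hgC, hgX, hgtend⟩ := sobczyk_key X f ‖T‖ hfC hfX
  -- define S
  set Sfun : Y → C₀(ℕ, ℝ) := fun y =>
    ⟨⟨fun n => f n y - g n y, continuous_of_discreteTopology⟩, by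
      rw [cocompact_eq_atTop]; exact hgtend y⟩ with hSfun_def
  have hSfun_apply : ∀ y n, Sfun y n = f n y - g n y := fun y n => rfl
  set Slin : Y →ₗ[ℝ] C₀(ℕ, ℝ) :=
    { toFun := Sfun
      map_add' := by
        intro y z
        apply ZeroAtInftyContinuousMap.ext
        intro n
        simp only [ZeroAtInftyContinuousMap.coe_add, Pi.add_apply, hSfun_apply, map_add]
        ring
      map_smul' := by
        intro c y
        apply ZeroAtInftyContinuousMap.ext
        intro n
        simp only [ZeroAtInftyContinuousMap.coe_smul, Pi.smul_apply, hSfun_apply, map_smul,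
          RingHom.id_apply, smul_eq_mul]
        ring } with hSlin_def
  have hSbound : ∀ y, ‖Slin y‖ ≤ 2 * ‖T‖ * ‖y‖ := by
    intro y
    rw [← ZeroAtInftyContinuousMap.norm_toBCF_eq_norm]
    apply (BoundedContinuousFunction.norm_le (by positivity)).mpr
    intro n
    have : (Slin y).toBCF n = f n y - g n y := rfl
    rw [this, Real.norm_eq_abs]
    calc |f n y - g n y| ≤ ‖f n y‖ + ‖g n y‖ := by
          rw [Real.norm_eq_abs, Real.norm_eq_abs]; exact abs_sub _ _
      _ ≤ ‖f n‖ * ‖y‖ + ‖g n‖ * ‖y‖ := add_le_add ((f n).le_opNorm y) ((g n).le_opNorm y)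
      _ ≤ ‖T‖ * ‖y‖ + ‖T‖ * ‖y‖ := by gcongr; exacts [hfC n, hgC n]
      _ = 2 * ‖T‖ * ‖y‖ := by ring
  refine ⟨LinearMap.mkContinuous Slin (2 * ‖T‖) hSbound, ?_, ?_⟩
  · intro x
    apply ZeroAtInftyContinuousMap.ext
    intro n
    have h1 : (LinearMap.mkContinuous Slin (2 * ‖T‖) hSbound) (x : Y) n
        = f n x - g n x := rfl
    rw [h1, hgX n x x.2, sub_zero, hfext n x]
    rfl
  · exact LinearMap.mkContinuous_norm_le _ (by positivity) _
end

section
/- Let A be a separable closed subspace of ℓ∞ containing c₀. If A is a closed subalgebra of ℓ∞ (under pointwise multiplication) containing the constant sequence 1, then there is a bounded linear projection P : A → c₀ onto c₀ with ‖I − P‖ = 1, and hence ‖P‖ ≤ 2. -/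
open Filter BoundedContinuousFunction

/-- If `A` is a separable closed unital subalgebra of `ℓ∞` containing `c₀`
(represented as a separable unital Banach algebra `A` with an isometric algebra
embedding `J` into `ℓ∞ = (ℕ →ᵇ ℝ)` whose range contains `c₀`), then there is a
bounded linear projection `P` of `A` onto `c₀` with `‖I − P‖ = 1`, hence `‖P‖ ≤ 2`. -/
theorem projection_onto_c0_in_separable_subalgebra
    {A : Type*} [NormedRing A] [NormedAlgebra ℝ A] [CompleteSpace A]
    [TopologicalSpace.SeparableSpace A]
    (J : A →ₐ[ℝ] (ℕ →ᵇ ℝ)) (hJ : ∀ a : A, ‖J a‖ = ‖a‖)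
    (hc0 : ∀ f : ℕ →ᵇ ℝ, Tendsto (fun n => f n) atTop (nhds 0) → f ∈ Set.range J) :
    ∃ P : A →L[ℝ] A,
      (∀ a : A, Tendsto (fun n => J (P a) n) atTop (nhds 0)) ∧
      (∀ a : A, Tendsto (fun n => J a n) atTop (nhds 0) → P a = a) ∧
      ‖ContinuousLinearMap.id ℝ A - P‖ = 1 ∧ ‖P‖ ≤ 2 := by
  classical
  -- basic facts
  have hb : ∀ (a : A) (n : ℕ), |J a n| ≤ ‖a‖ := by
    intro a n
    have := (J a).norm_coe_le_norm n
    rwa [hJ a, Real.norm_eq_abs] at this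
  have hJinj : Function.Injective J := by
    intro x y h
    have : ‖x - y‖ = 0 := by
      rw [← hJ, map_sub, h, sub_self, norm_zero]
    simpa [sub_eq_zero] using norm_eq_zero.mp this
  -- a dense sequence
  obtain ⟨s, hs⟩ := TopologicalSpace.exists_dense_seq A
  -- the "good" functionals: norm ≤ 1 and vanishing on c₀
  set K : (A →L[ℝ] ℝ) → Prop := fun ψ =>
    (∀ a : A, |ψ a| ≤ ‖a‖) ∧
    (∀ a : A, Tendsto (fun n => J a n) atTop (nhds 0) → ψ a = 0) with hK
  have hK0 : K 0 := by
    constructor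
    · intro a; simp [norm_nonneg]
    · intro a _; simp
  -- ultrafilter limits give good functionals
  have key : ∀ U : Ultrafilter ℕ, (U : Filter ℕ) ≤ atTop →
      ∃ ψ : A →L[ℝ] ℝ, K ψ ∧ ∀ a : A, Tendsto (fun n => J a n) (U : Filter ℕ) (nhds (ψ a)) := by
    intro U hU
    have hex : ∀ a : A, ∃ x : ℝ, |x| ≤ ‖a‖ ∧
        Tendsto (fun n => J a n) (U : Filter ℕ) (nhds x) := by
      intro a
      have hmem : (U.map (fun n => J a n) : Filter ℝ) ≤ Filter.principal (Set.Icc (-‖a‖) ‖a‖) := by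
        refine Filter.le_principal_iff.mpr ?_
        refine Filter.mem_map.mpr (Filter.univ_mem' fun n => ?_)
        exact abs_le.mp (hb a n)
      obtain ⟨x, hx, hle⟩ := isCompact_Icc.ultrafilter_le_nhds _ hmem
      exact ⟨x, abs_le.mpr hx, hle⟩
    choose g hg1 hg2 using hex
    have hadd : ∀ a b : A, g (a + b) = g a + g b := by
      intro a b
      refine tendsto_nhds_unique ?_ ((hg2 a).add (hg2 b))
      have : (fun n => J (a + b) n) = fun n => J a n + J b n := by
        funext n; simp [map_add]
      rw [← this]; exact hg2 (a + b)
    have hsmul : ∀ (c : ℝ) (a : A), g (c • a) = c * g a := by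
      intro c a
      refine tendsto_nhds_unique ?_ ((hg2 a).const_mul c)
      have : (fun n => J (c • a) n) = fun n => c * J a n := by
        funext n; simp [map_smul]
      rw [← this]; exact hg2 (c • a)
    let ψlin : A →ₗ[ℝ] ℝ :=
      { toFun := g
        map_add' := hadd
        map_smul' := hsmul }
    have hbnd : ∀ a : A, ‖ψlin a‖ ≤ 1 * ‖a‖ := by
      intro a; rw [one_mul, Real.norm_eq_abs]; exact hg1 a
    refine ⟨ψlin.mkContinuous 1 hbnd, ⟨?_, ?_⟩, ?_⟩
    · intro a; exact hg1 a
    · intro a ha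
      exact tendsto_nhds_unique (hg2 a) (ha.mono_left hU)
    · intro a; exact hg2 a
  -- eventual approximation claim
  have claim : ∀ m : ℕ, ∀ᶠ n in atTop, ∃ ψ : A →L[ℝ] ℝ, K ψ ∧
      ∀ k ≤ m, |J (s k) n - ψ (s k)| ≤ 1 / (m + 1 : ℝ) := by
    intro m
    by_contra hcon
    rw [Filter.not_eventually] at hcon
    have hB : {n : ℕ | ¬ ∃ ψ : A →L[ℝ] ℝ, K ψ ∧
        ∀ k ≤ m, |J (s k) n - ψ (s k)| ≤ 1 / (m + 1 : ℝ)}.Infinite :=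
      Nat.frequently_atTop_iff_infinite.mp hcon
    set B := {n : ℕ | ¬ ∃ ψ : A →L[ℝ] ℝ, K ψ ∧
        ∀ k ≤ m, |J (s k) n - ψ (s k)| ≤ 1 / (m + 1 : ℝ)} with hBdef
    have hne : (atTop ⊓ Filter.principal B).NeBot := by
      rw [← Filter.frequently_iff_neBot]
      rw [Nat.frequently_atTop_iff_infinite]
      exact hB
    let U : Ultrafilter ℕ := Ultrafilter.of (atTop ⊓ Filter.principal B)
    have hUle : (U : Filter ℕ) ≤ atTop ⊓ Filter.principal B := Ultrafilter.of_le _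
    obtain ⟨ψ, hψK, hψlim⟩ := key U (hUle.trans inf_le_left)
    have hBU : B ∈ U := hUle (Filter.mem_inf_of_right (Filter.mem_principal_self B))
    have hpos : (0 : ℝ) < 1 / (m + 1 : ℝ) := by positivity
    have hev : ∀ᶠ n in (U : Filter ℕ), ∀ k ≤ m, |J (s k) n - ψ (s k)| ≤ 1 / (m + 1 : ℝ) := by
      have h1 : ∀ᶠ n in (U : Filter ℕ), ∀ k ∈ Finset.range (m + 1),
          |J (s k) n - ψ (s k)| ≤ 1 / (m + 1 : ℝ) := by
        refine (Finset.range (m + 1)).eventually_all.mpr fun k _ => ?_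
        have := Metric.tendsto_nhds.mp (hψlim (s k)) _ hpos
        refine this.mono fun n hn => ?_
        rw [Real.dist_eq] at hn
        exact hn.le
      refine h1.mono fun n hn k hk => hn k (Finset.mem_range.mpr (Nat.lt_succ_of_le hk))
    have hBev : ∀ᶠ n in (U : Filter ℕ), n ∈ B := hBU
    obtain ⟨n, hn1, hn2⟩ := (hBev.and hev).exists
    exact hn1 ⟨ψ, hψK, hn2⟩
  -- thresholds
  have hNex : ∀ m : ℕ, ∃ N : ℕ, ∀ n ≥ N, ∃ ψ : A →L[ℝ] ℝ, K ψ ∧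
      ∀ k ≤ m, |J (s k) n - ψ (s k)| ≤ 1 / (m + 1 : ℝ) := fun m =>
    Filter.eventually_atTop.mp (claim m)
  choose N hN using hNex
  set N' : ℕ → ℕ := fun m => (Finset.range (m + 1)).sup N with hN'def
  have hN'mono : Monotone N' := fun i j hij =>
    Finset.sup_mono (Finset.range_subset_range.mpr (by omega))
  have hN'le : ∀ m, N m ≤ N' m := fun m =>
    Finset.le_sup (Finset.mem_range.mpr (Nat.lt_succ_self m))
  set mn : ℕ → ℕ := fun n => Nat.findGreatest (fun m => N' m ≤ n) n with hmndef
  have hmn_spec : ∀ n, N' 0 ≤ n → N' (mn n) ≤ n := fun n h =>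
    Nat.findGreatest_spec (P := fun m => N' m ≤ n) (Nat.zero_le n) h
  have hmn_ge : ∀ m n, N' m ≤ n → m ≤ n → m ≤ mn n := fun m n h1 h2 =>
    Nat.le_findGreatest h2 h1
  have hmn_tendsto : Tendsto mn atTop atTop := by
    rw [tendsto_atTop_atTop]
    intro b
    exact ⟨max (N' b) b, fun n hn =>
      hmn_ge b n (le_trans (le_max_left _ _) hn) (le_trans (le_max_right _ _) hn)⟩
  -- choose the functionals
  have hch : ∀ m n : ℕ, ∃ ψ : A →L[ℝ] ℝ, K ψ ∧
      (N' m ≤ n → ∀ k ≤ m, |J (s k) n - ψ (s k)| ≤ 1 / (m + 1 : ℝ)) := by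
    intro m n
    by_cases h : N' m ≤ n
    · obtain ⟨ψ, hψ1, hψ2⟩ := hN m n (le_trans (hN'le m) h)
      exact ⟨ψ, hψ1, fun _ => hψ2⟩
    · exact ⟨0, hK0, fun h' => absurd h' h⟩
  choose Ψ hΨK hΨbd using hch
  set Psi : ℕ → (A →L[ℝ] ℝ) := fun n => Ψ (mn n) n with hPsidef
  have hPsiK : ∀ n, K (Psi n) := fun n => hΨK (mn n) n
  -- Psi approximates the coordinate functionals pointwise
  have hlim_s : ∀ k : ℕ, Tendsto (fun n => J (s k) n - Psi n (s k)) atTop (nhds 0) := by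
    intro k
    refine squeeze_zero_norm' (a := fun n => 1 / ((mn n : ℝ) + 1)) ?_ ?_
    · filter_upwards [Filter.eventually_ge_atTop (max (N' k) k)] with n hn
      have h1 : N' k ≤ n := le_trans (le_max_left _ _) hn
      have h2 : k ≤ n := le_trans (le_max_right _ _) hn
      have hk_le : k ≤ mn n := hmn_ge k n h1 h2
      have h0 : N' 0 ≤ n := le_trans (hN'mono (Nat.zero_le k)) h1
      have hsp : N' (mn n) ≤ n := hmn_spec n h0
      have := hΨbd (mn n) n hsp k hk_le
      rwa [Real.norm_eq_abs]
    · exact tendsto_one_div_add_atTop_nhds_zero_nat.comp hmn_tendsto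
  have hlim : ∀ a : A, Tendsto (fun n => J a n - Psi n a) atTop (nhds 0) := by
    intro a
    rw [NormedAddCommGroup.tendsto_nhds_zero]
    intro ε hε
    obtain ⟨k, hk⟩ := hs.exists_dist_lt a (by positivity : (0:ℝ) < ε / 3)
    rw [dist_eq_norm] at hk
    have h3 : ∀ᶠ n in atTop, |J (s k) n - Psi n (s k)| < ε / 3 := by
      have := NormedAddCommGroup.tendsto_nhds_zero.mp (hlim_s k) (ε / 3) (by positivity)
      refine this.mono fun n hn => ?_
      rwa [Real.norm_eq_abs] at hn
    filter_upwards [h3] with n hn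
    have heq : J a n - Psi n a =
        (J (a - s k) n - Psi n (a - s k)) + (J (s k) n - Psi n (s k)) := by
      rw [map_sub, map_sub]
      simp only [BoundedContinuousFunction.coe_sub, Pi.sub_apply]
      ring
    rw [Real.norm_eq_abs, heq]
    calc |(J (a - s k) n - Psi n (a - s k)) + (J (s k) n - Psi n (s k))|
        ≤ |J (a - s k) n - Psi n (a - s k)| + |J (s k) n - Psi n (s k)| := abs_add_le _ _
      _ ≤ (|J (a - s k) n| + |Psi n (a - s k)|) + |J (s k) n - Psi n (s k)| := by
          gcongr; exact abs_sub _ _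
      _ ≤ (‖a - s k‖ + ‖a - s k‖) + |J (s k) n - Psi n (s k)| := by
          gcongr
          · exact hb _ n
          · exact (hPsiK n).1 _
      _ < (ε / 3 + ε / 3) + ε / 3 := by gcongr
      _ = ε := by ring
  -- the bounded function n ↦ Psi n a
  set Gb : A → (ℕ →ᵇ ℝ) := fun a =>
    BoundedContinuousFunction.ofNormedAddCommGroup (fun n => Psi n a)
      continuous_of_discreteTopology ‖a‖
      (fun n => by rw [Real.norm_eq_abs]; exact (hPsiK n).1 a) with hGbdef
  have hGb_apply : ∀ (a : A) (n : ℕ), Gb a n = Psi n a := fun a n => rfl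
  have hGadd : ∀ a b : A, Gb (a + b) = Gb a + Gb b := by
    intro a b; ext n
    simp only [hGb_apply, BoundedContinuousFunction.coe_add, Pi.add_apply, map_add]
  have hGsmul : ∀ (c : ℝ) (a : A), Gb (c • a) = c • Gb a := by
    intro c a; ext n
    simp only [hGb_apply, BoundedContinuousFunction.coe_smul, Pi.smul_apply, map_smul,
      smul_eq_mul]
  -- the projection as a bare function
  have hpre : ∀ a : A, ∃ b : A, J b = J a - Gb a := by
    intro a
    refine hc0 _ ?_
    have : (fun n => (J a - Gb a) n) = fun n => J a n - Psi n a := by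
      funext n
      simp only [BoundedContinuousFunction.coe_sub, Pi.sub_apply, hGb_apply]
    rw [this]
    exact hlim a
  choose Pf hPf using hpre
  have hPadd : ∀ a b : A, Pf (a + b) = Pf a + Pf b := by
    intro a b
    apply hJinj
    rw [map_add, hPf, hPf, hPf, map_add, hGadd]
    abel
  have hPsmul : ∀ (c : ℝ) (a : A), Pf (c • a) = c • Pf a := by
    intro c a
    apply hJinj
    rw [map_smul, hPf, hPf, map_smul, hGsmul, smul_sub]
  have hPbound : ∀ a : A, ‖Pf a‖ ≤ 2 * ‖a‖ := by
    intro a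
    rw [← hJ, hPf]
    refine (BoundedContinuousFunction.norm_le (by positivity)).mpr fun n => ?_
    simp only [BoundedContinuousFunction.coe_sub, Pi.sub_apply, hGb_apply, Real.norm_eq_abs]
    calc |J a n - Psi n a| ≤ |J a n| + |Psi n a| := abs_sub _ _
      _ ≤ ‖a‖ + ‖a‖ := add_le_add (hb a n) ((hPsiK n).1 a)
      _ = 2 * ‖a‖ := by ring
  set P : A →L[ℝ] A := LinearMap.mkContinuous
    { toFun := Pf, map_add' := hPadd, map_smul' := hPsmul } 2 hPbound with hPdef
  have hP_apply : ∀ a : A, P a = Pf a := fun a => rfl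
  have hJP : ∀ (a : A) (n : ℕ), J (P a) n = J a n - Psi n a := by
    intro a n
    rw [hP_apply, hPf]
    simp only [BoundedContinuousFunction.coe_sub, Pi.sub_apply, hGb_apply]
  refine ⟨P, ?_, ?_, ?_, ?_⟩
  · -- P maps into c₀
    intro a
    have : (fun n => J (P a) n) = fun n => J a n - Psi n a := funext fun n => hJP a n
    rw [this]
    exact hlim a
  · -- P is the identity on c₀
    intro a ha
    apply hJinj
    ext n
    rw [hJP a n, (hPsiK n).2 a ha, sub_zero]
  · -- ‖I - P‖ = 1
    have hIP : ∀ a : A, ‖a - P a‖ ≤ ‖a‖ := by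
      intro a
      rw [← hJ, map_sub]
      refine (BoundedContinuousFunction.norm_le (norm_nonneg a)).mpr fun n => ?_
      have : (J a - J (P a)) n = Psi n a := by
        simp only [BoundedContinuousFunction.coe_sub, Pi.sub_apply, hJP a n]
        ring
      rw [this, Real.norm_eq_abs]
      exact (hPsiK n).1 a
    have hone : ‖(1 : A)‖ = 1 := by rw [← hJ, map_one, norm_one]
    refine le_antisymm ?_ ?_
    · refine ContinuousLinearMap.opNorm_le_bound _ zero_le_one fun a => ?_
      rw [one_mul]
      simpa using hIP a
    · -- lower bound via the unit
      have hlim1 : Tendsto (fun n => Psi n (1 : A)) atTop (nhds 1) := by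
        have h2 : ∀ n, J (1 : A) n = 1 := fun n => by rw [map_one]; rfl
        have h' : Tendsto (fun n => 1 - (J (1:A) n - Psi n (1:A))) atTop (nhds (1 - 0)) :=
          tendsto_const_nhds.sub (hlim (1 : A))
        simpa [h2, sub_sub_cancel] using h' 
      have hnorm1 : (1 : ℝ) ≤ ‖(1 : A) - P 1‖ := by
        rw [← hJ, map_sub]
        have hcoord : ∀ n, |(J (1:A) - J (P 1)) n| ≤ ‖J (1:A) - J (P 1)‖ := by
          intro n
          have := (J (1:A) - J (P 1)).norm_coe_le_norm n
          rwa [Real.norm_eq_abs] at this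
        have hco : ∀ n, (J (1:A) - J (P 1)) n = Psi n (1 : A) := by
          intro n
          simp only [BoundedContinuousFunction.coe_sub, Pi.sub_apply, hJP _ n]
          ring
        have habs : Tendsto (fun n => |Psi n (1 : A)|) atTop (nhds 1) := by
          simpa using hlim1.abs
        refine le_of_tendsto habs ?_
        filter_upwards with n
        rw [← hco n]
        exact hcoord n
      have := (ContinuousLinearMap.id ℝ A - P).le_opNorm 1
      simp only [ContinuousLinearMap.sub_apply, ContinuousLinearMap.id_apply, hone,
        mul_one] at this
      exact le_trans hnorm1 this
  · -- ‖P‖ ≤ 2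
    have hIPle : ‖ContinuousLinearMap.id ℝ A - P‖ ≤ 1 := by
      refine ContinuousLinearMap.opNorm_le_bound _ zero_le_one fun a => ?_
      rw [one_mul]
      have hIP : ‖a - P a‖ ≤ ‖a‖ := by
        rw [← hJ, map_sub]
        refine (BoundedContinuousFunction.norm_le (norm_nonneg a)).mpr fun n => ?_
        have : (J a - J (P a)) n = Psi n a := by
          simp only [BoundedContinuousFunction.coe_sub, Pi.sub_apply, hJP a n]
          ring
        rw [this, Real.norm_eq_abs]
        exact (hPsiK n).1 a
      simpa using hIP
    have hPeq : P = ContinuousLinearMap.id ℝ A - (ContinuousLinearMap.id ℝ A - P) :=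
      (sub_sub_cancel _ _).symm
    calc ‖P‖ = ‖ContinuousLinearMap.id ℝ A - (ContinuousLinearMap.id ℝ A - P)‖ := by
          rw [← hPeq]
      _ ≤ ‖ContinuousLinearMap.id ℝ A‖ + ‖ContinuousLinearMap.id ℝ A - P‖ := norm_sub_le _ _
      _ ≤ 1 + 1 := add_le_add ContinuousLinearMap.norm_id_le hIPle
      _ = 2 := by norm_num
end
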